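/- arXiv:2001.04128 — 6 statements merged into one kernel-verified Lean document; each statement's English description precedes it below -/
import Mathlib

section
/- For every real γ > 0, the ratio of modified Bessel functions satisfies 3·(K_0(γ)/K_1(γ))² + (6/γ)·(K_0(γ)/K_1(γ)) − 1 ≥ 0. -/
open MeasureTheory Real Set Filter Topology

/-- The modified Bessel function of the second kind, via the integral
representation `K_j(γ) = (2^j j!/(2j)!) γ^{-j} ∫_γ^∞ e^{-t}(t²-γ²)^{j-1/2} dt`. -/
noncomputable def besselK (j : ℕ) (γ : ℝ) : ℝ :=
  ((2 : ℝ) ^ j * (Nat.factorial j) / (Nat.factorial (2 * j))) * γ ^ (-(j : ℝ)) *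
    ∫ t in Set.Ioi γ, Real.exp (-t) * (t ^ 2 - γ ^ 2) ^ ((j : ℝ) - 1 / 2)

namespace BesselAux

variable {γ : ℝ}

lemma spos (hγ : 0 < γ) {t : ℝ} (ht : t ∈ Set.Ioi γ) : 0 < t ^ 2 - γ ^ 2 := by
  have := Set.mem_Ioi.mp ht; nlinarith

lemma contOn (hγ : 0 < γ) (p : ℝ) :
    ContinuousOn (fun t : ℝ => Real.exp (-t) * (t ^ 2 - γ ^ 2) ^ p) (Set.Ioi γ) := by
  apply ContinuousOn.mul
  · exact (Real.continuous_exp.comp continuous_neg).continuousOn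
  · apply ContinuousOn.rpow_const
    · exact ((continuous_pow 2).sub continuous_const).continuousOn
    · intro x hx; exact Or.inl (ne_of_gt (spos hγ hx))

lemma integrable_poly (hγ : 0 < γ) (n : ℕ) :
    IntegrableOn (fun t : ℝ => Real.exp (-t) * t ^ n) (Set.Ioi γ) := by
  have h := Real.GammaIntegral_convergent (s := (n + 1 : ℝ)) (by positivity)
  have h2 : IntegrableOn (fun x : ℝ => Real.exp (-x) * x ^ ((n + 1 : ℝ) - 1)) (Set.Ioi γ) :=
    h.mono_set (Set.Ioi_subset_Ioi hγ.le)
  refine h2.congr_fun (fun x hx => ?_) measurableSet_Ioi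
  have : ((n + 1 : ℝ) - 1) = (n : ℝ) := by ring
  rw [this]; simp only [Real.rpow_natCast]

lemma integrable_of_bound (hγ : 0 < γ) {f : ℝ → ℝ} (hc : ContinuousOn f (Set.Ioi γ)) (n : ℕ)
    (hb : ∀ t ∈ Set.Ioi γ, |f t| ≤ Real.exp (-t) * t ^ n) : IntegrableOn f (Set.Ioi γ) := by
  refine Integrable.mono' (integrable_poly hγ n)
    (hc.aestronglyMeasurable measurableSet_Ioi) ?_
  filter_upwards [ae_restrict_mem measurableSet_Ioi] with t ht
  simpa [Real.norm_eq_abs] using hb t ht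

lemma rpow_bound (hγ : 0 < γ) {t : ℝ} (ht : t ∈ Set.Ioi γ) {q : ℝ} (hq : 0 ≤ q) :
    (t ^ 2 - γ ^ 2) ^ q ≤ t ^ (2 * q) := by
  have htγ := Set.mem_Ioi.mp ht
  have ht0 : 0 < t := lt_trans hγ htγ
  have h1 : (0 : ℝ) ≤ t ^ 2 - γ ^ 2 := (spos hγ ht).le
  have h2 : t ^ 2 - γ ^ 2 ≤ t ^ 2 := by nlinarith
  calc (t ^ 2 - γ ^ 2) ^ q ≤ (t ^ 2) ^ q := Real.rpow_le_rpow h1 h2 hq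
    _ = t ^ (2 * q) := by
        rw [← Real.rpow_natCast t 2, ← Real.rpow_mul ht0.le]
        norm_num

lemma int1 (hγ : 0 < γ) :
    IntegrableOn (fun t : ℝ => Real.exp (-t) * (t ^ 2 - γ ^ 2) ^ ((1:ℝ)/2)) (Set.Ioi γ) := by
  refine integrable_of_bound hγ (contOn hγ _) 1 (fun t ht => ?_)
  have h1 : (t ^ 2 - γ ^ 2) ^ ((1:ℝ)/2) ≤ t ^ (2 * ((1:ℝ)/2)) := rpow_bound hγ ht (by norm_num)
  rw [show (2 * ((1:ℝ)/2)) = 1 by norm_num, Real.rpow_one] at h1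
  have hnn : 0 ≤ Real.exp (-t) * (t ^ 2 - γ ^ 2) ^ ((1:ℝ)/2) :=
    mul_nonneg (Real.exp_pos _).le (Real.rpow_nonneg (spos hγ ht).le _)
  rw [abs_of_nonneg hnn, pow_one]
  exact mul_le_mul_of_nonneg_left h1 (Real.exp_pos _).le

lemma int2 (hγ : 0 < γ) :
    IntegrableOn (fun t : ℝ => Real.exp (-t) * (t ^ 2 - γ ^ 2) ^ ((3:ℝ)/2)) (Set.Ioi γ) := by
  refine integrable_of_bound hγ (contOn hγ _) 3 (fun t ht => ?_)
  have h1 : (t ^ 2 - γ ^ 2) ^ ((3:ℝ)/2) ≤ t ^ (2 * ((3:ℝ)/2)) := rpow_bound hγ ht (by norm_num)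
  rw [show (2 * ((3:ℝ)/2)) = ((3:ℕ):ℝ) by norm_num, Real.rpow_natCast] at h1
  have hnn : 0 ≤ Real.exp (-t) * (t ^ 2 - γ ^ 2) ^ ((3:ℝ)/2) :=
    mul_nonneg (Real.exp_pos _).le (Real.rpow_nonneg (spos hγ ht).le _)
  rw [abs_of_nonneg hnn]
  exact mul_le_mul_of_nonneg_left h1 (Real.exp_pos _).le

lemma intJ (hγ : 0 < γ) :
    IntegrableOn (fun t : ℝ => t * Real.exp (-t) * (t ^ 2 - γ ^ 2) ^ ((1:ℝ)/2)) (Set.Ioi γ) := by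
  have hc : ContinuousOn (fun t : ℝ => t * Real.exp (-t) * (t ^ 2 - γ ^ 2) ^ ((1:ℝ)/2))
      (Set.Ioi γ) := by
    have := contOn hγ ((1:ℝ)/2)
    have hcc : ContinuousOn (fun t : ℝ => t) (Set.Ioi γ) := continuous_id.continuousOn
    have := hcc.mul (contOn hγ ((1:ℝ)/2))
    refine this.congr (fun t ht => by simp only [Pi.mul_apply]; ring)
  refine integrable_of_bound hγ hc 2 (fun t ht => ?_)
  have ht0 : 0 < t := lt_trans hγ (Set.mem_Ioi.mp ht)
  have h1 : (t ^ 2 - γ ^ 2) ^ ((1:ℝ)/2) ≤ t ^ (2 * ((1:ℝ)/2)) := rpow_bound hγ ht (by norm_num)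
  rw [show (2 * ((1:ℝ)/2)) = 1 by norm_num, Real.rpow_one] at h1
  have hnn : 0 ≤ t * Real.exp (-t) * (t ^ 2 - γ ^ 2) ^ ((1:ℝ)/2) :=
    mul_nonneg (mul_nonneg ht0.le (Real.exp_pos _).le) (Real.rpow_nonneg (spos hγ ht).le _)
  rw [abs_of_nonneg hnn]
  calc t * Real.exp (-t) * (t ^ 2 - γ ^ 2) ^ ((1:ℝ)/2) ≤ t * Real.exp (-t) * t :=
        mul_le_mul_of_nonneg_left h1 (by positivity)
    _ = Real.exp (-t) * t ^ 2 := by ring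

lemma base_int : IntegrableOn (fun x : ℝ => Real.exp (-x) * x ^ (-(1/2) : ℝ)) (Set.Ioi 0) := by
  have h := Real.GammaIntegral_convergent (s := (1/2 : ℝ)) (by norm_num)
  refine h.congr_fun (fun x hx => ?_) measurableSet_Ioi
  norm_num

lemma shift_int (hγ : 0 < γ) :
    IntegrableOn (fun t : ℝ => Real.exp (-t) * (t - γ) ^ (-(1/2) : ℝ)) (Set.Ioi γ) := by
  have hmp : MeasurePreserving (fun x : ℝ => x + γ) volume volume :=
    measurePreserving_add_right volume γ
  have hemb : MeasurableEmbedding (fun x : ℝ => x + γ) :=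
    (MeasurableEquiv.addRight γ).measurableEmbedding
  have hiff := hmp.integrableOn_comp_preimage hemb
    (f := fun t : ℝ => Real.exp (-t) * (t - γ) ^ (-(1/2) : ℝ)) (s := Set.Ioi γ)
  refine hiff.mp ?_
  have hpre : (fun x : ℝ => x + γ) ⁻¹' Set.Ioi γ = Set.Ioi 0 := by ext x; simp
  rw [hpre]
  refine IntegrableOn.congr_fun (base_int.const_mul (Real.exp (-γ))) (fun x hx => ?_)
    measurableSet_Ioi
  show Real.exp (-γ) * (Real.exp (-x) * x ^ (-(1/2) : ℝ))
      = Real.exp (-(x + γ)) * (x + γ - γ) ^ (-(1/2) : ℝ)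
  rw [show -(x + γ) = -x + -γ by ring, Real.exp_add, add_sub_cancel_right]
  ring

lemma int0 (hγ : 0 < γ) :
    IntegrableOn (fun t : ℝ => Real.exp (-t) * (t ^ 2 - γ ^ 2) ^ (-(1/2) : ℝ)) (Set.Ioi γ) := by
  refine Integrable.mono' ((shift_int hγ).const_mul ((2*γ) ^ (-(1/2):ℝ)))
    ((contOn hγ _).aestronglyMeasurable measurableSet_Ioi) ?_
  filter_upwards [ae_restrict_mem measurableSet_Ioi] with t ht
  have htγ := Set.mem_Ioi.mp ht
  have h1 : 0 < t - γ := by linarith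
  have hpos : 0 < (t - γ) * (2 * γ) := by positivity
  have h2 : (t - γ) * (2 * γ) ≤ t ^ 2 - γ ^ 2 := by nlinarith
  have key : (t ^ 2 - γ ^ 2) ^ (-(1/2):ℝ) ≤ ((t - γ) * (2 * γ)) ^ (-(1/2):ℝ) :=
    Real.rpow_le_rpow_of_nonpos hpos h2 (by norm_num)
  rw [Real.mul_rpow h1.le (by positivity)] at key
  have hnn : 0 ≤ Real.exp (-t) * (t ^ 2 - γ ^ 2) ^ (-(1/2):ℝ) :=
    mul_nonneg (Real.exp_pos _).le (Real.rpow_nonneg (spos hγ ht).le _)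
  rw [Real.norm_eq_abs, abs_of_nonneg hnn]
  calc Real.exp (-t) * (t ^ 2 - γ ^ 2) ^ (-(1/2):ℝ)
      ≤ Real.exp (-t) * ((t - γ) ^ (-(1/2):ℝ) * (2*γ) ^ (-(1/2):ℝ)) :=
        mul_le_mul_of_nonneg_left key (Real.exp_pos _).le
    _ = (2*γ) ^ (-(1/2):ℝ) * (Real.exp (-t) * (t - γ) ^ (-(1/2):ℝ)) := by ring

lemma deriv1 (hγ : 0 < γ) {x : ℝ} (hx : x ∈ Set.Ioi γ) :
    HasDerivAt (fun t : ℝ => Real.exp (-t) * (t ^ 2 - γ ^ 2) ^ ((3:ℝ)/2))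
      (3*(x*Real.exp (-x)*(x ^ 2 - γ ^ 2) ^ ((1:ℝ)/2))
        - Real.exp (-x)*(x ^ 2 - γ ^ 2) ^ ((3:ℝ)/2)) x := by
  have hs := spos hγ hx
  have hexp : HasDerivAt (fun t : ℝ => Real.exp (-t)) (-Real.exp (-x)) x := by
    simpa using (hasDerivAt_neg x).exp
  have hbase : HasDerivAt (fun t : ℝ => t ^ 2 - γ ^ 2) (2*x) x := by
    simpa using (hasDerivAt_pow 2 x).sub_const (γ ^ 2)
  have hr := hbase.rpow_const (p := (3:ℝ)/2) (Or.inl hs.ne')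
  have := hexp.mul hr
  refine this.congr_deriv ?_
  rw [show ((3:ℝ)/2 - 1) = 1/2 by norm_num]
  ring

lemma deriv2 (hγ : 0 < γ) {x : ℝ} (hx : x ∈ Set.Ioi γ) :
    HasDerivAt (fun t : ℝ => t * Real.exp (-t) * (t ^ 2 - γ ^ 2) ^ ((1:ℝ)/2))
      (2*(Real.exp (-x)*(x ^ 2 - γ ^ 2) ^ ((1:ℝ)/2))
        + γ^2*(Real.exp (-x)*(x ^ 2 - γ ^ 2) ^ (-(1/2):ℝ))
        - x*Real.exp (-x)*(x ^ 2 - γ ^ 2) ^ ((1:ℝ)/2)) x := by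
  have hs := spos hγ hx
  have hexp : HasDerivAt (fun t : ℝ => Real.exp (-t)) (-Real.exp (-x)) x := by
    simpa using (hasDerivAt_neg x).exp
  have hid : HasDerivAt (fun t : ℝ => t * Real.exp (-t))
      (1 * Real.exp (-x) + x * -Real.exp (-x)) x := (hasDerivAt_id x).mul hexp
  have hbase : HasDerivAt (fun t : ℝ => t ^ 2 - γ ^ 2) (2*x) x := by
    simpa using (hasDerivAt_pow 2 x).sub_const (γ ^ 2)
  have hr := hbase.rpow_const (p := (1:ℝ)/2) (Or.inl hs.ne')
  have := hid.mul hr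
  refine this.congr_deriv ?_
  rw [show ((1:ℝ)/2 - 1) = -(1/2) by norm_num]
  have hss : (x ^ 2 - γ ^ 2) * (x ^ 2 - γ ^ 2) ^ (-(1/2):ℝ) = (x ^ 2 - γ ^ 2) ^ ((1:ℝ)/2) := by
    have h := (Real.rpow_add hs 1 (-(1/2))).symm
    rw [Real.rpow_one] at h
    rw [h]; norm_num
  linear_combination (Real.exp (-x)) * hss

lemma tend1 (hγ : 0 < γ) :
    Tendsto (fun t : ℝ => Real.exp (-t) * (t ^ 2 - γ ^ 2) ^ ((3:ℝ)/2)) atTop (𝓝 0) := by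
  apply squeeze_zero' (g := fun t : ℝ => t ^ 3 * Real.exp (-t))
  · filter_upwards [eventually_gt_atTop γ] with t ht
    exact mul_nonneg (Real.exp_pos _).le (Real.rpow_nonneg (spos hγ ht).le _)
  · filter_upwards [eventually_gt_atTop γ] with t ht
    have h := rpow_bound hγ ht (q := (3:ℝ)/2) (by norm_num)
    rw [show 2 * ((3:ℝ)/2) = ((3:ℕ):ℝ) by norm_num, Real.rpow_natCast] at h
    calc Real.exp (-t) * (t ^ 2 - γ ^ 2) ^ ((3:ℝ)/2) ≤ Real.exp (-t) * t ^ 3 :=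
          mul_le_mul_of_nonneg_left h (Real.exp_pos _).le
      _ = t ^ 3 * Real.exp (-t) := by ring
  · exact tendsto_pow_mul_exp_neg_atTop_nhds_zero 3

lemma tend2 (hγ : 0 < γ) :
    Tendsto (fun t : ℝ => t * Real.exp (-t) * (t ^ 2 - γ ^ 2) ^ ((1:ℝ)/2)) atTop (𝓝 0) := by
  apply squeeze_zero' (g := fun t : ℝ => t ^ 2 * Real.exp (-t))
  · filter_upwards [eventually_gt_atTop γ] with t ht
    have ht0 : 0 < t := lt_trans hγ ht
    exact mul_nonneg (mul_nonneg ht0.le (Real.exp_pos _).le) (Real.rpow_nonneg (spos hγ ht).le _)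
  · filter_upwards [eventually_gt_atTop γ] with t ht
    have ht0 : 0 < t := lt_trans hγ ht
    have h := rpow_bound hγ ht (q := (1:ℝ)/2) (by norm_num)
    rw [show 2 * ((1:ℝ)/2) = (1:ℝ) by norm_num, Real.rpow_one] at h
    calc t * Real.exp (-t) * (t ^ 2 - γ ^ 2) ^ ((1:ℝ)/2) ≤ t * Real.exp (-t) * t :=
          mul_le_mul_of_nonneg_left h (by positivity)
      _ = t ^ 2 * Real.exp (-t) := by ring
  · exact tendsto_pow_mul_exp_neg_atTop_nhds_zero 2

lemma cont1 (hγ : 0 < γ) :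
    ContinuousWithinAt (fun t : ℝ => Real.exp (-t) * (t ^ 2 - γ ^ 2) ^ ((3:ℝ)/2))
      (Set.Ici γ) γ := by
  apply ContinuousWithinAt.mul
  · exact (Real.continuous_exp.comp continuous_neg).continuousAt.continuousWithinAt
  · have hb : ContinuousAt (fun t : ℝ => t ^ 2 - γ ^ 2) γ :=
      ((continuous_pow 2).sub continuous_const).continuousAt
    have hr : ContinuousAt (fun y : ℝ => y ^ ((3:ℝ)/2)) (γ ^ 2 - γ ^ 2) := by
      rw [sub_self]
      exact Real.continuousAt_rpow_const 0 _ (Or.inr (by norm_num))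
    exact (ContinuousAt.comp (f := fun t : ℝ => t ^ 2 - γ ^ 2) hr hb).continuousWithinAt

lemma cont2 (hγ : 0 < γ) :
    ContinuousWithinAt (fun t : ℝ => t * Real.exp (-t) * (t ^ 2 - γ ^ 2) ^ ((1:ℝ)/2))
      (Set.Ici γ) γ := by
  apply ContinuousWithinAt.mul
  · exact (continuous_id.mul
      (Real.continuous_exp.comp continuous_neg)).continuousAt.continuousWithinAt
  · have hb : ContinuousAt (fun t : ℝ => t ^ 2 - γ ^ 2) γ :=
      ((continuous_pow 2).sub continuous_const).continuousAt
    have hr : ContinuousAt (fun y : ℝ => y ^ ((1:ℝ)/2)) (γ ^ 2 - γ ^ 2) := by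
      rw [sub_self]
      exact Real.continuousAt_rpow_const 0 _ (Or.inr (by norm_num))
    exact (ContinuousAt.comp (f := fun t : ℝ => t ^ 2 - γ ^ 2) hr hb).continuousWithinAt

lemma ftc1 (hγ : 0 < γ) :
    (∫ t in Set.Ioi γ, (3*(t*Real.exp (-t)*(t ^ 2 - γ ^ 2) ^ ((1:ℝ)/2))
      - Real.exp (-t)*(t ^ 2 - γ ^ 2) ^ ((3:ℝ)/2))) = 0 := by
  have hint : IntegrableOn (fun t : ℝ => 3*(t*Real.exp (-t)*(t ^ 2 - γ ^ 2) ^ ((1:ℝ)/2))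
      - Real.exp (-t)*(t ^ 2 - γ ^ 2) ^ ((3:ℝ)/2)) (Set.Ioi γ) :=
    ((intJ hγ).const_mul 3).sub (int2 hγ)
  have h := integral_Ioi_of_hasDerivAt_of_tendsto (cont1 hγ) (fun x hx => deriv1 hγ hx)
    hint (tend1 hγ)
  rw [h, sub_self, Real.zero_rpow (by norm_num : ((3:ℝ)/2) ≠ 0), mul_zero, sub_zero]

lemma ftc2 (hγ : 0 < γ) :
    (∫ t in Set.Ioi γ, (2*(Real.exp (-t)*(t ^ 2 - γ ^ 2) ^ ((1:ℝ)/2))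
      + γ^2*(Real.exp (-t)*(t ^ 2 - γ ^ 2) ^ (-(1/2):ℝ))
      - t*Real.exp (-t)*(t ^ 2 - γ ^ 2) ^ ((1:ℝ)/2))) = 0 := by
  have hint : IntegrableOn (fun t : ℝ => 2*(Real.exp (-t)*(t ^ 2 - γ ^ 2) ^ ((1:ℝ)/2))
      + γ^2*(Real.exp (-t)*(t ^ 2 - γ ^ 2) ^ (-(1/2):ℝ))
      - t*Real.exp (-t)*(t ^ 2 - γ ^ 2) ^ ((1:ℝ)/2)) (Set.Ioi γ) :=
    (((int1 hγ).const_mul 2).add ((int0 hγ).const_mul (γ^2))).sub (intJ hγ)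
  have h := integral_Ioi_of_hasDerivAt_of_tendsto (cont2 hγ) (fun x hx => deriv2 hγ hx)
    hint (tend2 hγ)
  rw [h, sub_self, Real.zero_rpow (by norm_num : ((1:ℝ)/2) ≠ 0), mul_zero, sub_zero]

lemma Ipos (hγ : 0 < γ) (p : ℝ)
    (hint : IntegrableOn (fun t : ℝ => Real.exp (-t) * (t ^ 2 - γ ^ 2) ^ p) (Set.Ioi γ)) :
    0 < ∫ t in Set.Ioi γ, Real.exp (-t) * (t ^ 2 - γ ^ 2) ^ p := by
  have hnn : 0 ≤ᵐ[volume.restrict (Set.Ioi γ)]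
      fun t : ℝ => Real.exp (-t) * (t ^ 2 - γ ^ 2) ^ p := by
    filter_upwards [ae_restrict_mem measurableSet_Ioi] with t ht
    exact mul_nonneg (Real.exp_pos _).le (Real.rpow_nonneg (spos hγ ht).le _)
  rw [setIntegral_pos_iff_support_of_nonneg_ae hnn hint]
  have hsub : Set.Ioi γ ⊆
        (Function.support fun t : ℝ => Real.exp (-t) * (t ^ 2 - γ ^ 2) ^ p) ∩ Set.Ioi γ := by
      intro t ht
      refine ⟨?_, ht⟩
      have : 0 < Real.exp (-t) * (t ^ 2 - γ ^ 2) ^ p :=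
        mul_pos (Real.exp_pos _) (Real.rpow_pos_of_pos (spos hγ ht) _)
      exact Function.mem_support.mpr (ne_of_gt this)
  calc (0 : ENNReal) < volume (Set.Ioi γ) := by rw [Real.volume_Ioi]; exact ENNReal.zero_lt_top
    _ ≤ _ := measure_mono hsub

lemma cauchy_schwarz (hγ : 0 < γ) :
    (∫ t in Set.Ioi γ, Real.exp (-t) * (t ^ 2 - γ ^ 2) ^ ((1:ℝ)/2)) ^ 2 ≤
      (∫ t in Set.Ioi γ, Real.exp (-t) * (t ^ 2 - γ ^ 2) ^ (-(1/2):ℝ)) *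
      (∫ t in Set.Ioi γ, Real.exp (-t) * (t ^ 2 - γ ^ 2) ^ ((3:ℝ)/2)) := by
  set A := ∫ t in Set.Ioi γ, Real.exp (-t) * (t ^ 2 - γ ^ 2) ^ (-(1/2):ℝ) with hA
  set B := ∫ t in Set.Ioi γ, Real.exp (-t) * (t ^ 2 - γ ^ 2) ^ ((1:ℝ)/2) with hB
  set C := ∫ t in Set.Ioi γ, Real.exp (-t) * (t ^ 2 - γ ^ 2) ^ ((3:ℝ)/2) with hC
  have hApos : 0 < A := Ipos hγ _ (int0 hγ)
  have hBpos : 0 < B := Ipos hγ _ (int1 hγ)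
  have hCpos : 0 < C := Ipos hγ _ (int2 hγ)
  have key : 0 ≤ ∫ t in Set.Ioi γ,
      (C * (Real.exp (-t) * (t ^ 2 - γ ^ 2) ^ (-(1/2):ℝ))
        + (B^2/C) * (Real.exp (-t) * (t ^ 2 - γ ^ 2) ^ ((3:ℝ)/2))
        - 2*B*(Real.exp (-t) * (t ^ 2 - γ ^ 2) ^ ((1:ℝ)/2))) := by
    apply setIntegral_nonneg measurableSet_Ioi
    intro t ht
    have hs := spos hγ ht
    have h0n : 0 ≤ Real.exp (-t) * (t ^ 2 - γ ^ 2) ^ (-(1/2):ℝ) :=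
      mul_nonneg (Real.exp_pos _).le (Real.rpow_nonneg hs.le _)
    have h1n : 0 ≤ Real.exp (-t) * (t ^ 2 - γ ^ 2) ^ ((1:ℝ)/2) :=
      mul_nonneg (Real.exp_pos _).le (Real.rpow_nonneg hs.le _)
    have h2n : 0 ≤ Real.exp (-t) * (t ^ 2 - γ ^ 2) ^ ((3:ℝ)/2) :=
      mul_nonneg (Real.exp_pos _).le (Real.rpow_nonneg hs.le _)
    have h12 : (t ^ 2 - γ ^ 2) ^ ((1:ℝ)/2) * (t ^ 2 - γ ^ 2) ^ ((1:ℝ)/2)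
        = (t ^ 2 - γ ^ 2) ^ (-(1/2):ℝ) * (t ^ 2 - γ ^ 2) ^ ((3:ℝ)/2) := by
      rw [← Real.rpow_add hs, ← Real.rpow_add hs]; norm_num
    have hsq : (Real.exp (-t) * (t ^ 2 - γ ^ 2) ^ ((1:ℝ)/2))^2
        = (Real.exp (-t) * (t ^ 2 - γ ^ 2) ^ (-(1/2):ℝ))
          * (Real.exp (-t) * (t ^ 2 - γ ^ 2) ^ ((3:ℝ)/2)) := by
      linear_combination (Real.exp (-t))^2 * h12
    set u := Real.exp (-t) * (t ^ 2 - γ ^ 2) ^ (-(1/2):ℝ)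
    set v := Real.exp (-t) * (t ^ 2 - γ ^ 2) ^ ((1:ℝ)/2)
    set w := Real.exp (-t) * (t ^ 2 - γ ^ 2) ^ ((3:ℝ)/2)
    have hCu : 0 ≤ C * u := mul_nonneg hCpos.le h0n
    have hBCw : 0 ≤ B^2/C * w := mul_nonneg (div_nonneg (sq_nonneg B) hCpos.le) h2n
    have ha2 : (Real.sqrt (C * u))^2 = C * u := Real.sq_sqrt hCu
    have hb2 : (Real.sqrt (B^2/C * w))^2 = B^2/C * w := Real.sq_sqrt hBCw
    have hab : Real.sqrt (C * u) * Real.sqrt (B^2/C * w) = B * v := by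
      rw [← Real.sqrt_mul hCu]
      have hCC : C / C = 1 := div_self hCpos.ne'
      have hprod : C * u * (B^2/C * w) = (B * v)^2 := by
        calc C * u * (B ^ 2 / C * w) = B ^ 2 * (u * w) * (C / C) := by ring
          _ = B ^ 2 * v ^ 2 * 1 := by rw [hCC, ← hsq]
          _ = (B * v) ^ 2 := by ring
      rw [hprod]
      exact Real.sqrt_sq (mul_nonneg hBpos.le h1n)
    nlinarith [two_mul_le_add_sq (Real.sqrt (C * u)) (Real.sqrt (B^2/C * w)), ha2, hb2, hab]
  have hadd : IntegrableOn (fun t : ℝ => C * (Real.exp (-t) * (t ^ 2 - γ ^ 2) ^ (-(1/2):ℝ))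
      + (B^2/C) * (Real.exp (-t) * (t ^ 2 - γ ^ 2) ^ ((3:ℝ)/2))) (Set.Ioi γ) :=
    ((int0 hγ).const_mul C).add ((int2 hγ).const_mul (B^2/C))
  rw [integral_sub hadd ((int1 hγ).const_mul (2*B)),
    integral_add ((int0 hγ).const_mul C) ((int2 hγ).const_mul (B^2/C)),
    integral_const_mul, integral_const_mul, integral_const_mul] at key
  have hBC : B^2/C * C = B^2 := by field_simp
  nlinarith [key]

end BesselAux

open BesselAux

theorem besselK_ratio_ineq (γ : ℝ) (hγ : 0 < γ) :
    3 * (besselK 0 γ / besselK 1 γ) ^ 2 + (6 / γ) * (besselK 0 γ / besselK 1 γ) - 1 ≥ 0 := by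
  have e0 : besselK 0 γ
      = ∫ t in Set.Ioi γ, Real.exp (-t) * (t ^ 2 - γ ^ 2) ^ (-(1/2):ℝ) := by
    rw [besselK]
    norm_num
  have e1 : besselK 1 γ
      = γ⁻¹ * ∫ t in Set.Ioi γ, Real.exp (-t) * (t ^ 2 - γ ^ 2) ^ ((1:ℝ)/2) := by
    rw [besselK]
    norm_num [Real.rpow_neg_one]
  set A := ∫ t in Set.Ioi γ, Real.exp (-t) * (t ^ 2 - γ ^ 2) ^ (-(1/2):ℝ) with hA
  set B := ∫ t in Set.Ioi γ, Real.exp (-t) * (t ^ 2 - γ ^ 2) ^ ((1:ℝ)/2) with hB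
  set C := ∫ t in Set.Ioi γ, Real.exp (-t) * (t ^ 2 - γ ^ 2) ^ ((3:ℝ)/2) with hC
  set J := ∫ t in Set.Ioi γ, t * Real.exp (-t) * (t ^ 2 - γ ^ 2) ^ ((1:ℝ)/2) with hJ
  have hApos : 0 < A := Ipos hγ _ (int0 hγ)
  have hBpos : 0 < B := Ipos hγ _ (int1 hγ)
  have hCS : B ^ 2 ≤ A * C := cauchy_schwarz hγ
  -- the recurrence
  have h1 := ftc1 hγ
  rw [integral_sub ((intJ hγ).const_mul 3) (int2 hγ), integral_const_mul] at h1
  have h2 := ftc2 hγ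
  have hadd : IntegrableOn (fun t : ℝ => 2*(Real.exp (-t)*(t ^ 2 - γ ^ 2) ^ ((1:ℝ)/2))
      + γ^2*(Real.exp (-t)*(t ^ 2 - γ ^ 2) ^ (-(1/2):ℝ))) (Set.Ioi γ) :=
    ((int1 hγ).const_mul 2).add ((int0 hγ).const_mul (γ^2))
  rw [integral_sub hadd (intJ hγ),
    integral_add ((int1 hγ).const_mul 2) ((int0 hγ).const_mul (γ^2)),
    integral_const_mul, integral_const_mul] at h2
  -- h1 : 3 * J - C = 0, h2 : 2 * B + γ^2 * A - J = 0
  have hCval : C = 6 * B + 3 * γ^2 * A := by linarith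
  have hkey : B ^ 2 ≤ 3 * γ^2 * A^2 + 6 * A * B := by nlinarith
  rw [e0, e1]
  have hb' : 0 < γ⁻¹ * B := by positivity
  have expr : 3 * (A / (γ⁻¹ * B)) ^ 2 + 6 / γ * (A / (γ⁻¹ * B)) - 1
      = (3 * γ^2 * A^2 + 6 * A * B - B^2) / B^2 := by
    field_simp
  rw [expr]
  have : 0 ≤ 3 * γ^2 * A^2 + 6 * A * B - B^2 := by linarith
  positivity
end

section
/- For every real γ > √2, the ratio of modified Bessel functions satisfies 1 − 1/(2γ) ≤ K_0(γ)/K_1(γ) ≤ 1 − 1/(2γ) + 3/(8γ²) + 3/(16γ³). -/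
open MeasureTheory Real

open Set

private lemma aux_sq {x y : ℝ} (hy : 0 ≤ y) (h : x^2 ≤ y^2) : x ≤ y := by
  nlinarith [sq_nonneg (x - y), sq_nonneg (x + y)]

private lemma P1 {γ s : ℝ} (hg : 0 < γ) (hs : 0 < s) :
    (Real.sqrt (2*γ))⁻¹ * ((Real.sqrt s)⁻¹ - Real.sqrt s/(4*γ)) ≤ (Real.sqrt (s*(s+2*γ)))⁻¹ := by
  have ha : 0 < Real.sqrt s := Real.sqrt_pos.2 hs
  have hb : 0 < Real.sqrt (s+2*γ) := Real.sqrt_pos.2 (by linarith)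
  have hc : 0 < Real.sqrt (2*γ) := Real.sqrt_pos.2 (by linarith)
  have ha2 : Real.sqrt s ^ 2 = s := Real.sq_sqrt hs.le
  have hb2 : Real.sqrt (s+2*γ) ^ 2 = s+2*γ := Real.sq_sqrt (by linarith)
  have hc2 : Real.sqrt (2*γ) ^ 2 = 2*γ := Real.sq_sqrt (by linarith)
  set a := Real.sqrt s
  set b := Real.sqrt (s+2*γ)
  set c := Real.sqrt (2*γ)
  rw [Real.sqrt_mul hs.le]
  have key : b*(4*γ-s) ≤ 4*γ*c := by
    rcases le_or_gt (4*γ) s with h4 | h4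
    · have : b*(4*γ-s) ≤ 0 := mul_nonpos_of_nonneg_of_nonpos hb.le (by linarith)
      nlinarith
    · refine aux_sq (by positivity) ?_
      have expand : (b*(4*γ-s))^2 = (s+2*γ)*(4*γ-s)^2 := by rw [mul_pow, hb2]
      have expand2 : (4*γ*c)^2 = 16*γ^2*(2*γ) := by rw [mul_pow, hc2]; ring
      rw [expand, expand2]
      nlinarith [mul_nonneg (mul_nonneg hs.le hs.le) (by linarith : (0:ℝ) ≤ 6*γ - s)]
  calc c⁻¹ * (a⁻¹ - a/(4*γ)) = (4*γ-s)/(4*γ*a*c) := by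
        rw [← ha2]; field_simp
    _ ≤ 1/(a*b) := by
        rw [div_le_div_iff₀ (by positivity) (by positivity)]
        nlinarith [mul_le_mul_of_nonneg_left key ha.le]
    _ = (a*b)⁻¹ := one_div _

private lemma P2 {γ s : ℝ} (hg : 0 < γ) (hs : 0 < s) :
    (Real.sqrt (s*(s+2*γ)))⁻¹ ≤
      (Real.sqrt (2*γ))⁻¹ * ((Real.sqrt s)⁻¹ - Real.sqrt s/(4*γ) + 3*Real.sqrt s*s/(32*γ^2)) := by
  have ha : 0 < Real.sqrt s := Real.sqrt_pos.2 hs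
  have hb : 0 < Real.sqrt (s+2*γ) := Real.sqrt_pos.2 (by linarith)
  have hc : 0 < Real.sqrt (2*γ) := Real.sqrt_pos.2 (by linarith)
  have ha2 : Real.sqrt s ^ 2 = s := Real.sq_sqrt hs.le
  have hb2 : Real.sqrt (s+2*γ) ^ 2 = s+2*γ := Real.sq_sqrt (by linarith)
  have hc2 : Real.sqrt (2*γ) ^ 2 = 2*γ := Real.sq_sqrt (by linarith)
  set a := Real.sqrt s
  set b := Real.sqrt (s+2*γ)
  set c := Real.sqrt (2*γ)
  rw [Real.sqrt_mul hs.le]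
  have key : 32*γ^2*c ≤ (32*γ^2 - 8*γ*s + 3*s^2)*b := by
    refine aux_sq (mul_nonneg (by nlinarith [sq_nonneg (3*s - 4*γ), sq_nonneg γ]) hb.le) ?_
    have e1 : (32*γ^2*c)^2 = 1024*γ^4*(2*γ) := by rw [mul_pow, hc2]; ring
    have e2 : ((32*γ^2 - 8*γ*s + 3*s^2)*b)^2 = (32*γ^2 - 8*γ*s + 3*s^2)^2*(s+2*γ) := by
      rw [mul_pow, hb2]
    rw [e1, e2]
    nlinarith [mul_nonneg (mul_nonneg (mul_nonneg hs.le hs.le) hs.le)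
      (by nlinarith [sq_nonneg (3*s - 5*γ), sq_nonneg γ] : (0:ℝ) ≤ 160*γ^2 - 30*γ*s + 9*s^2)]
  calc (a*b)⁻¹ = 1/(a*b) := (one_div _).symm
    _ ≤ (32*γ^2 - 8*γ*s + 3*s^2)/(32*γ^2*a*c) := by
        rw [div_le_div_iff₀ (by positivity) (by positivity)]
        nlinarith [mul_le_mul_of_nonneg_left key ha.le]
    _ = c⁻¹ * (a⁻¹ - a/(4*γ) + 3*a*s/(32*γ^2)) := by
        rw [← ha2]; field_simp; ring

private lemma P3 {γ s : ℝ} (hg : 0 < γ) (hs : 0 < s) :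
    Real.sqrt (s*(s+2*γ)) ≤ Real.sqrt (2*γ) * (Real.sqrt s + Real.sqrt s*s/(4*γ)) := by
  have ha : 0 < Real.sqrt s := Real.sqrt_pos.2 hs
  have hc : 0 < Real.sqrt (2*γ) := Real.sqrt_pos.2 (by linarith)
  have ha2 : Real.sqrt s ^ 2 = s := Real.sq_sqrt hs.le
  have hc2 : Real.sqrt (2*γ) ^ 2 = 2*γ := Real.sq_sqrt (by linarith)
  refine aux_sq (by positivity) ?_
  have h1 : Real.sqrt (s*(s+2*γ))^2 = s*(s+2*γ) := Real.sq_sqrt (by positivity)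
  rw [h1]
  have expand : (Real.sqrt (2*γ) * (Real.sqrt s + Real.sqrt s*s/(4*γ)))^2
      = 2*γ*(s*(1+s/(4*γ))^2) := by
    rw [mul_pow, hc2, show (Real.sqrt s + Real.sqrt s*s/(4*γ)) = Real.sqrt s * (1+s/(4*γ)) by ring,
      mul_pow, ha2]
  rw [expand]
  have e2 : 2*γ*(s*(1+s/(4*γ))^2) = s*(s+2*γ) + s^3/(8*γ) := by field_simp; try ring
  rw [e2]
  have : 0 ≤ s^3/(8*γ) := by positivity
  linarith

private lemma P4 {γ s : ℝ} (hg : 0 < γ) (hs : 0 < s) :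
    Real.sqrt (2*γ) * (Real.sqrt s + Real.sqrt s*s/(4*γ) - Real.sqrt s*s^2/(32*γ^2))
      ≤ Real.sqrt (s*(s+2*γ)) := by
  have ha : 0 < Real.sqrt s := Real.sqrt_pos.2 hs
  have hb : 0 < Real.sqrt (s+2*γ) := Real.sqrt_pos.2 (by linarith)
  have hc : 0 < Real.sqrt (2*γ) := Real.sqrt_pos.2 (by linarith)
  have ha2 : Real.sqrt s ^ 2 = s := Real.sq_sqrt hs.le
  have hb2 : Real.sqrt (s+2*γ) ^ 2 = s+2*γ := Real.sq_sqrt (by linarith)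
  have hc2 : Real.sqrt (2*γ) ^ 2 = 2*γ := Real.sq_sqrt (by linarith)
  set a := Real.sqrt s
  set b := Real.sqrt (s+2*γ)
  set c := Real.sqrt (2*γ)
  rw [Real.sqrt_mul hs.le]
  have factored : c * (a + a*s/(4*γ) - a*s^2/(32*γ^2)) = c*a*((32*γ^2 + 8*γ*s - s^2)/(32*γ^2)) := by
    field_simp; ring
  rw [factored]
  rcases le_or_gt (32*γ^2 + 8*γ*s - s^2) 0 with hq | hq
  · have : c*a*((32*γ^2 + 8*γ*s - s^2)/(32*γ^2)) ≤ 0 := by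
      apply mul_nonpos_of_nonneg_of_nonpos (by positivity)
      exact div_nonpos_of_nonpos_of_nonneg hq (by positivity)
    nlinarith [mul_pos ha hb]
  · have h16 : s ≤ 16*γ := by nlinarith
    have key : c * (32*γ^2 + 8*γ*s - s^2) ≤ 32*γ^2 * b := by
      refine aux_sq (by positivity) ?_
      have e1 : (c * (32*γ^2 + 8*γ*s - s^2))^2 = 2*γ*(32*γ^2 + 8*γ*s - s^2)^2 := by
        rw [mul_pow, hc2]
      have e2 : (32*γ^2 * b)^2 = 1024*γ^4*(s+2*γ) := by rw [mul_pow, hb2]; ring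
      rw [e1, e2]
      have hcube : 0 ≤ 2*γ*s^3*(16*γ - s) := by
        apply mul_nonneg (by positivity); linarith
      nlinarith [hcube]
    calc c*a*((32*γ^2 + 8*γ*s - s^2)/(32*γ^2))
        = a * ((c * (32*γ^2 + 8*γ*s - s^2))/(32*γ^2)) := by ring
      _ ≤ a * ((32*γ^2 * b)/(32*γ^2)) := by
          apply mul_le_mul_of_nonneg_left _ ha.le
          exact div_le_div_of_nonneg_right key (by positivity)
      _ = a * b := by field_simp

private lemma gamma_int (r : ℝ) (hr : 0 < r) :
    ∫ s in Ioi (0:ℝ), Real.exp (-s) * s ^ (r - 1) = Real.Gamma r :=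
  (Real.Gamma_eq_integral hr).symm

private lemma eqon_half : ∀ s ∈ Ioi (0:ℝ),
    Real.exp (-s) * s ^ ((1/2:ℝ) - 1) = Real.exp (-s) * (Real.sqrt s)⁻¹ := by
  intro s hs
  rw [mem_Ioi] at hs
  rw [show (1/2:ℝ) - 1 = -(1/2) by norm_num, Real.rpow_neg hs.le, Real.sqrt_eq_rpow]

private lemma eqon_3half : ∀ s ∈ Ioi (0:ℝ),
    Real.exp (-s) * s ^ ((3/2:ℝ) - 1) = Real.exp (-s) * Real.sqrt s := by
  intro s hs
  rw [mem_Ioi] at hs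
  rw [show (3/2:ℝ) - 1 = (1/2:ℝ) by norm_num, Real.sqrt_eq_rpow]

private lemma eqon_5half : ∀ s ∈ Ioi (0:ℝ),
    Real.exp (-s) * s ^ ((5/2:ℝ) - 1) = Real.exp (-s) * (Real.sqrt s * s) := by
  intro s hs
  rw [mem_Ioi] at hs
  rw [show (5/2:ℝ) - 1 = (1/2:ℝ) + 1 by norm_num, Real.rpow_add hs, Real.rpow_one,
    Real.sqrt_eq_rpow]

private lemma eqon_7half : ∀ s ∈ Ioi (0:ℝ),
    Real.exp (-s) * s ^ ((7/2:ℝ) - 1) = Real.exp (-s) * (Real.sqrt s * s^2) := by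
  intro s hs
  rw [mem_Ioi] at hs
  rw [show (7/2:ℝ) - 1 = (1/2:ℝ) + 2 by norm_num, Real.rpow_add hs, Real.sqrt_eq_rpow,
    show ((2:ℝ)) = ((2:ℕ):ℝ) by norm_num, Real.rpow_natCast]

private lemma iGa : IntegrableOn (fun s : ℝ => Real.exp (-s) * (Real.sqrt s)⁻¹) (Ioi 0) :=
  (Real.GammaIntegral_convergent (by norm_num : (0:ℝ) < 1/2)).congr_fun eqon_half measurableSet_Ioi

private lemma iGb : IntegrableOn (fun s : ℝ => Real.exp (-s) * Real.sqrt s) (Ioi 0) :=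
  (Real.GammaIntegral_convergent (by norm_num : (0:ℝ) < 3/2)).congr_fun eqon_3half
    measurableSet_Ioi

private lemma iGc : IntegrableOn (fun s : ℝ => Real.exp (-s) * (Real.sqrt s * s)) (Ioi 0) :=
  (Real.GammaIntegral_convergent (by norm_num : (0:ℝ) < 5/2)).congr_fun eqon_5half
    measurableSet_Ioi

private lemma iGd : IntegrableOn (fun s : ℝ => Real.exp (-s) * (Real.sqrt s * s^2)) (Ioi 0) :=
  (Real.GammaIntegral_convergent (by norm_num : (0:ℝ) < 7/2)).congr_fun eqon_7half
    measurableSet_Ioi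

private lemma vGa : ∫ s in Ioi (0:ℝ), Real.exp (-s) * (Real.sqrt s)⁻¹ = Real.sqrt π := by
  rw [← setIntegral_congr_fun measurableSet_Ioi eqon_half, gamma_int _ (by norm_num),
    Real.Gamma_one_half_eq]

private lemma vGb : ∫ s in Ioi (0:ℝ), Real.exp (-s) * Real.sqrt s = Real.sqrt π / 2 := by
  rw [← setIntegral_congr_fun measurableSet_Ioi eqon_3half, gamma_int _ (by norm_num),
    show (3/2:ℝ) = 1/2 + 1 by norm_num, Real.Gamma_add_one (by norm_num), Real.Gamma_one_half_eq]
  ring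

private lemma vGc : ∫ s in Ioi (0:ℝ), Real.exp (-s) * (Real.sqrt s * s) = 3 * Real.sqrt π / 4 := by
  rw [← setIntegral_congr_fun measurableSet_Ioi eqon_5half, gamma_int _ (by norm_num),
    show (5/2:ℝ) = 3/2 + 1 by norm_num, Real.Gamma_add_one (by norm_num),
    show (3/2:ℝ) = 1/2 + 1 by norm_num, Real.Gamma_add_one (by norm_num), Real.Gamma_one_half_eq]
  ring

private lemma vGd : ∫ s in Ioi (0:ℝ), Real.exp (-s) * (Real.sqrt s * s^2)
    = 15 * Real.sqrt π / 8 := by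
  rw [← setIntegral_congr_fun measurableSet_Ioi eqon_7half, gamma_int _ (by norm_num),
    show (7/2:ℝ) = 5/2 + 1 by norm_num, Real.Gamma_add_one (by norm_num),
    show (5/2:ℝ) = 3/2 + 1 by norm_num, Real.Gamma_add_one (by norm_num),
    show (3/2:ℝ) = 1/2 + 1 by norm_num, Real.Gamma_add_one (by norm_num), Real.Gamma_one_half_eq]
  ring

private lemma iF0 {γ : ℝ} (hg : 0 < γ) :
    IntegrableOn (fun s : ℝ => Real.exp (-s) * (Real.sqrt (s*(s+2*γ)))⁻¹) (Ioi 0) := by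
  apply Integrable.mono' (iGa.const_mul (Real.sqrt (2*γ))⁻¹)
  · apply Measurable.aestronglyMeasurable
    exact (Real.measurable_exp.comp measurable_neg).mul
      ((Real.continuous_sqrt.measurable.comp
        (measurable_id.mul (measurable_id.add measurable_const))).inv)
  · rw [ae_restrict_iff' measurableSet_Ioi]
    filter_upwards with s
    intro hs
    rw [mem_Ioi] at hs
    rw [Real.norm_eq_abs, abs_of_nonneg (by positivity)]
    have h1 : Real.sqrt (2*γ) * Real.sqrt s ≤ Real.sqrt (s*(s+2*γ)) := by
      rw [← Real.sqrt_mul (by positivity)]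
      apply Real.sqrt_le_sqrt
      nlinarith
    have h2 : (Real.sqrt (s*(s+2*γ)))⁻¹ ≤ (Real.sqrt (2*γ) * Real.sqrt s)⁻¹ :=
      inv_anti₀ (by positivity) h1
    calc Real.exp (-s) * (Real.sqrt (s*(s+2*γ)))⁻¹
        ≤ Real.exp (-s) * (Real.sqrt (2*γ) * Real.sqrt s)⁻¹ :=
          mul_le_mul_of_nonneg_left h2 (Real.exp_pos _).le
      _ = (Real.sqrt (2*γ))⁻¹ * (Real.exp (-s) * (Real.sqrt s)⁻¹) := by
          rw [mul_inv]; ring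

private lemma iF1 {γ : ℝ} (hg : 0 < γ) :
    IntegrableOn (fun s : ℝ => Real.exp (-s) * Real.sqrt (s*(s+2*γ))) (Ioi 0) := by
  have i1 : IntegrableOn (fun s : ℝ => Real.exp (-s) * s) (Ioi 0) := by
    refine (Real.GammaIntegral_convergent (by norm_num : (0:ℝ) < 2)).congr_fun ?_
      measurableSet_Ioi
    intro s _
    norm_num
  have i2 : IntegrableOn (fun s : ℝ => γ * Real.exp (-s)) (Ioi 0) := by
    refine Integrable.const_mul ?_ γ
    refine (Real.GammaIntegral_convergent (by norm_num : (0:ℝ) < 1)).congr_fun ?_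
      measurableSet_Ioi
    intro s _
    norm_num
  apply Integrable.mono' (i1.add i2)
  · apply Measurable.aestronglyMeasurable
    exact (Real.measurable_exp.comp measurable_neg).mul
      (Real.continuous_sqrt.measurable.comp
        (measurable_id.mul (measurable_id.add measurable_const)))
  · rw [ae_restrict_iff' measurableSet_Ioi]
    filter_upwards with s
    intro hs
    rw [mem_Ioi] at hs
    rw [Real.norm_eq_abs, abs_of_nonneg (by positivity)]
    have h1 : Real.sqrt (s*(s+2*γ)) ≤ s + γ := by
      have h := Real.sqrt_le_sqrt (show s*(s+2*γ) ≤ (s+γ)^2 by nlinarith)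
      rwa [Real.sqrt_sq (by positivity)] at h
    calc Real.exp (-s) * Real.sqrt (s*(s+2*γ)) ≤ Real.exp (-s) * (s + γ) :=
          mul_le_mul_of_nonneg_left h1 (Real.exp_pos _).le
      _ = Real.exp (-s) * s + γ * Real.exp (-s) := by ring

private lemma shift_int (γ : ℝ) (f : ℝ → ℝ) : ∫ t in Ioi γ, f t = ∫ s in Ioi 0, f (s + γ) := by
  have e : MeasurableEmbedding (fun s : ℝ => s + γ) :=
    (Homeomorph.addRight γ).isClosedEmbedding.measurableEmbedding
  have h := e.setIntegral_map (μ := volume) f (Ioi γ)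
  rw [map_add_right_eq_self] at h
  rw [h]
  congr 1
  ext x; simp [Set.mem_preimage]

private lemma comboA (k1 k2 k3 : ℝ) :
    IntegrableOn (fun s : ℝ => k1 * (Real.exp (-s) * (Real.sqrt s)⁻¹)
      + k2 * (Real.exp (-s) * Real.sqrt s) + k3 * (Real.exp (-s) * (Real.sqrt s * s)))
      (Ioi 0) :=
  ((iGa.const_mul k1).add (iGb.const_mul k2)).add (iGc.const_mul k3)

private lemma comboAv (k1 k2 k3 : ℝ) :
    ∫ s in Ioi (0:ℝ), (k1 * (Real.exp (-s) * (Real.sqrt s)⁻¹)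
      + k2 * (Real.exp (-s) * Real.sqrt s) + k3 * (Real.exp (-s) * (Real.sqrt s * s)))
      = k1 * Real.sqrt π + k2 * (Real.sqrt π / 2) + k3 * (3 * Real.sqrt π / 4) := by
  have h12 : IntegrableOn (fun s : ℝ => k1 * (Real.exp (-s) * (Real.sqrt s)⁻¹)
      + k2 * (Real.exp (-s) * Real.sqrt s)) (Ioi 0) := (iGa.const_mul k1).add (iGb.const_mul k2)
  rw [integral_add h12 (iGc.const_mul k3),
    integral_add (iGa.const_mul k1) (iGb.const_mul k2),
    integral_const_mul, integral_const_mul, integral_const_mul, vGa, vGb, vGc]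

private lemma comboB (k2 k3 k4 : ℝ) :
    IntegrableOn (fun s : ℝ => k2 * (Real.exp (-s) * Real.sqrt s)
      + k3 * (Real.exp (-s) * (Real.sqrt s * s)) + k4 * (Real.exp (-s) * (Real.sqrt s * s^2)))
      (Ioi 0) :=
  ((iGb.const_mul k2).add (iGc.const_mul k3)).add (iGd.const_mul k4)

private lemma comboBv (k2 k3 k4 : ℝ) :
    ∫ s in Ioi (0:ℝ), (k2 * (Real.exp (-s) * Real.sqrt s)
      + k3 * (Real.exp (-s) * (Real.sqrt s * s)) + k4 * (Real.exp (-s) * (Real.sqrt s * s^2)))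
      = k2 * (Real.sqrt π / 2) + k3 * (3 * Real.sqrt π / 4) + k4 * (15 * Real.sqrt π / 8) := by
  have h12 : IntegrableOn (fun s : ℝ => k2 * (Real.exp (-s) * Real.sqrt s)
      + k3 * (Real.exp (-s) * (Real.sqrt s * s))) (Ioi 0) :=
    (iGb.const_mul k2).add (iGc.const_mul k3)
  rw [integral_add h12 (iGd.const_mul k4),
    integral_add (iGb.const_mul k2) (iGc.const_mul k3),
    integral_const_mul, integral_const_mul, integral_const_mul, vGb, vGc, vGd]

private lemma bessel0_eq {γ : ℝ} (hg : 0 < γ) :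
    besselK 0 γ = Real.exp (-γ) * ∫ s in Ioi (0:ℝ),
      Real.exp (-s) * (Real.sqrt (s*(s+2*γ)))⁻¹ := by
  rw [besselK]
  norm_num
  rw [shift_int γ (fun t => Real.exp (-t) * (t^2-γ^2) ^ (-(1/2):ℝ))]
  rw [← integral_const_mul]
  refine setIntegral_congr_fun measurableSet_Ioi (fun s hs => ?_)
  rw [mem_Ioi] at hs
  have hpos : 0 < s*(s+2*γ) := by positivity
  have e1 : (s+γ)^2 - γ^2 = s*(s+2*γ) := by ring
  rw [e1, Real.rpow_neg hpos.le, ← Real.sqrt_eq_rpow, show -(s+γ) = -s + -γ by ring,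
    Real.exp_add]
  ring

private lemma bessel1_eq {γ : ℝ} (hg : 0 < γ) :
    besselK 1 γ = Real.exp (-γ) * γ⁻¹ * ∫ s in Ioi (0:ℝ),
      Real.exp (-s) * Real.sqrt (s*(s+2*γ)) := by
  rw [besselK]
  norm_num [Real.rpow_neg_one]
  rw [shift_int γ (fun t => Real.exp (-t) * (t^2-γ^2) ^ ((1:ℝ)/2))]
  rw [show Real.exp (-γ) * γ⁻¹ * (∫ s in Ioi (0:ℝ), Real.exp (-s) * Real.sqrt (s*(s+2*γ)))
      = γ⁻¹ * ∫ s in Ioi (0:ℝ), Real.exp (-γ) * (Real.exp (-s) * Real.sqrt (s*(s+2*γ))) from by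
    rw [integral_const_mul]; ring]
  congr 1
  refine setIntegral_congr_fun measurableSet_Ioi (fun s hs => ?_)
  rw [mem_Ioi] at hs
  have hpos : 0 < s*(s+2*γ) := by positivity
  have e1 : (s+γ)^2 - γ^2 = s*(s+2*γ) := by ring
  rw [e1, show ((1:ℝ)/2) = (1/2:ℝ) by norm_num, ← Real.sqrt_eq_rpow,
    show -(s+γ) = -s + -γ by ring, Real.exp_add]
  ring

set_option maxHeartbeats 1000000 in
theorem besselK_ratio_bounds_large (γ : ℝ) (hγ : Real.sqrt 2 < γ) :
    1 - 1 / (2 * γ) ≤ besselK 0 γ / besselK 1 γ ∧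
      besselK 0 γ / besselK 1 γ ≤ 1 - 1 / (2 * γ) + 3 / (8 * γ ^ 2) + 3 / (16 * γ ^ 3) := by
  have hs2 : (1:ℝ) < Real.sqrt 2 := by
    nlinarith [Real.sq_sqrt (by norm_num : (0:ℝ) ≤ 2), Real.sqrt_nonneg 2]
  have hγ1 : 1 < γ := lt_trans hs2 hγ
  have hg : 0 < γ := by linarith
  have hγ2 : 2 < γ^2 := by
    have := Real.sq_sqrt (by norm_num : (0:ℝ) ≤ 2)
    nlinarith [hγ, Real.sqrt_nonneg 2]
  set I0 := ∫ s in Ioi (0:ℝ), Real.exp (-s) * (Real.sqrt (s*(s+2*γ)))⁻¹ with hI0def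
  set I1 := ∫ s in Ioi (0:ℝ), Real.exp (-s) * Real.sqrt (s*(s+2*γ)) with hI1def
  set c := Real.sqrt (2*γ) with hcdef
  have hc : 0 < c := Real.sqrt_pos.2 (by linarith)
  have hcc : c * c = 2*γ := Real.mul_self_sqrt (by linarith)
  have hP : 0 < Real.sqrt π := Real.sqrt_pos.2 Real.pi_pos
  -- lower bound for I0
  have hm1 := setIntegral_mono_on (comboA c⁻¹ (-(c⁻¹/(4*γ))) 0) (iF0 hg) measurableSet_Ioi
    (fun s hs => by
      rw [mem_Ioi] at hs
      have h := mul_le_mul_of_nonneg_left (P1 hg hs) (Real.exp_pos (-s)).le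
      calc c⁻¹ * (Real.exp (-s) * (Real.sqrt s)⁻¹)
            + (-(c⁻¹/(4*γ))) * (Real.exp (-s) * Real.sqrt s)
            + 0 * (Real.exp (-s) * (Real.sqrt s * s))
          = Real.exp (-s) * (c⁻¹ * ((Real.sqrt s)⁻¹ - Real.sqrt s/(4*γ))) := by ring
        _ ≤ Real.exp (-s) * (Real.sqrt (s*(s+2*γ)))⁻¹ := h)
  rw [comboAv] at hm1
  -- upper bound for I0
  have hm2 := setIntegral_mono_on (iF0 hg) (comboA c⁻¹ (-(c⁻¹/(4*γ))) (3*c⁻¹/(32*γ^2)))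
    measurableSet_Ioi (fun s hs => by
      rw [mem_Ioi] at hs
      have h := mul_le_mul_of_nonneg_left (P2 hg hs) (Real.exp_pos (-s)).le
      calc Real.exp (-s) * (Real.sqrt (s*(s+2*γ)))⁻¹
          ≤ Real.exp (-s) * (c⁻¹ * ((Real.sqrt s)⁻¹ - Real.sqrt s/(4*γ)
              + 3*Real.sqrt s*s/(32*γ^2))) := h
        _ = c⁻¹ * (Real.exp (-s) * (Real.sqrt s)⁻¹)
            + (-(c⁻¹/(4*γ))) * (Real.exp (-s) * Real.sqrt s)
            + (3*c⁻¹/(32*γ^2)) * (Real.exp (-s) * (Real.sqrt s * s)) := by ring)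
  rw [comboAv] at hm2
  -- upper bound for I1
  have hm3 := setIntegral_mono_on (iF1 hg) (comboB c (c/(4*γ)) 0) measurableSet_Ioi
    (fun s hs => by
      rw [mem_Ioi] at hs
      have h := mul_le_mul_of_nonneg_left (P3 hg hs) (Real.exp_pos (-s)).le
      calc Real.exp (-s) * Real.sqrt (s*(s+2*γ))
          ≤ Real.exp (-s) * (c * (Real.sqrt s + Real.sqrt s*s/(4*γ))) := h
        _ = c * (Real.exp (-s) * Real.sqrt s)
            + (c/(4*γ)) * (Real.exp (-s) * (Real.sqrt s * s))
            + 0 * (Real.exp (-s) * (Real.sqrt s * s^2)) := by ring)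
  rw [comboBv] at hm3
  -- lower bound for I1
  have hm4 := setIntegral_mono_on (comboB c (c/(4*γ)) (-(c/(32*γ^2)))) (iF1 hg)
    measurableSet_Ioi (fun s hs => by
      rw [mem_Ioi] at hs
      have h := mul_le_mul_of_nonneg_left (P4 hg hs) (Real.exp_pos (-s)).le
      calc c * (Real.exp (-s) * Real.sqrt s)
            + (c/(4*γ)) * (Real.exp (-s) * (Real.sqrt s * s))
            + (-(c/(32*γ^2))) * (Real.exp (-s) * (Real.sqrt s * s^2))
          = Real.exp (-s) * (c * (Real.sqrt s + Real.sqrt s*s/(4*γ)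
              - Real.sqrt s*s^2/(32*γ^2))) := by ring
        _ ≤ Real.exp (-s) * Real.sqrt (s*(s+2*γ)) := h)
  rw [comboBv] at hm4
  -- clean polynomial forms
  have A1 : Real.sqrt π*(128*γ^2 - 16*γ) ≤ 128*γ^2*(c*I0) := by
    have h := mul_le_mul_of_nonneg_left hm1 (show (0:ℝ) ≤ 128*γ^2*c by positivity)
    calc Real.sqrt π*(128*γ^2 - 16*γ)
        = 128*γ^2*c * (c⁻¹ * Real.sqrt π + (-(c⁻¹/(4*γ))) * (Real.sqrt π / 2)
            + 0 * (3 * Real.sqrt π / 4)) := by field_simp; try ring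
      _ ≤ 128*γ^2*c*I0 := h
      _ = 128*γ^2*(c*I0) := by ring
  have A2 : 128*γ^2*(c*I0) ≤ Real.sqrt π*(128*γ^2 - 16*γ + 9) := by
    have h := mul_le_mul_of_nonneg_left hm2 (show (0:ℝ) ≤ 128*γ^2*c by positivity)
    calc 128*γ^2*(c*I0) = 128*γ^2*c*I0 := by ring
      _ ≤ 128*γ^2*c * (c⁻¹ * Real.sqrt π + (-(c⁻¹/(4*γ))) * (Real.sqrt π / 2)
            + (3*c⁻¹/(32*γ^2)) * (3 * Real.sqrt π / 4)) := h
      _ = Real.sqrt π*(128*γ^2 - 16*γ + 9) := by field_simp; try ring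
  have B2 : 256*γ^2*(c*I1) ≤ Real.sqrt π*(256*γ^3 + 96*γ^2) := by
    have h := mul_le_mul_of_nonneg_left hm3 (show (0:ℝ) ≤ 256*γ^2*c by positivity)
    calc 256*γ^2*(c*I1) = 256*γ^2*c*I1 := by ring
      _ ≤ 256*γ^2*c * (c * (Real.sqrt π / 2) + (c/(4*γ)) * (3 * Real.sqrt π / 4)
            + 0 * (15 * Real.sqrt π / 8)) := h
      _ = 256*γ^2*(c*c) * (Real.sqrt π / 2) + 64*γ*(c*c) * (3 * Real.sqrt π / 4) := by
          field_simp; ring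
      _ = Real.sqrt π*(256*γ^3 + 96*γ^2) := by rw [hcc]; ring
  have B1 : Real.sqrt π*(256*γ^3 + 96*γ^2 - 30*γ) ≤ 256*γ^2*(c*I1) := by
    have h := mul_le_mul_of_nonneg_left hm4 (show (0:ℝ) ≤ 256*γ^2*c by positivity)
    calc Real.sqrt π*(256*γ^3 + 96*γ^2 - 30*γ)
        = 256*γ^2*(c*c) * (Real.sqrt π / 2) + 64*γ*(c*c) * (3 * Real.sqrt π / 4)
            - 8*(c*c) * (15 * Real.sqrt π / 8) := by rw [hcc]; ring
      _ = 256*γ^2*c * (c * (Real.sqrt π / 2) + (c/(4*γ)) * (3 * Real.sqrt π / 4)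
            + (-(c/(32*γ^2))) * (15 * Real.sqrt π / 8)) := by field_simp; try ring
      _ ≤ 256*γ^2*c*I1 := h
      _ = 256*γ^2*(c*I1) := by ring
  set X := c*I0 with hXdef
  set Y := c*I1 with hYdef
  have hpolyA : 0 < Real.sqrt π*(128*γ^2 - 16*γ) := mul_pos hP (by nlinarith)
  have hXpos : 0 < X := by
    by_contra h
    push_neg at h
    have h2 := mul_nonpos_of_nonneg_of_nonpos (show (0:ℝ) ≤ 128*γ^2 by positivity) h
    linarith
  have hpolyB : 0 < Real.sqrt π*(256*γ^3 + 96*γ^2 - 30*γ) := mul_pos hP (by nlinarith)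
  have hYpos : 0 < Y := by
    by_contra h
    push_neg at h
    have h2 := mul_nonpos_of_nonneg_of_nonpos (show (0:ℝ) ≤ 256*γ^2 by positivity) h
    linarith
  have hI1pos : 0 < I1 := by
    by_contra h
    push_neg at h
    have h2 : Y ≤ 0 := by
      rw [hYdef]
      exact mul_nonpos_of_nonneg_of_nonpos hc.le h
    linarith
  -- ratio expression
  have hratio : besselK 0 γ / besselK 1 γ = γ * I0 / I1 := by
    rw [bessel0_eq hg, bessel1_eq hg, ← hI0def, ← hI1def]
    rw [div_eq_div_iff (mul_pos (mul_pos (Real.exp_pos _) (inv_pos.2 hg)) hI1pos).ne'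
      hI1pos.ne']
    field_simp
  rw [hratio]
  constructor
  · -- lower bound
    rw [le_div_iff₀ hI1pos]
    have key : (2*γ-1) * Y ≤ 2*γ^2 * X := by
      have h1 : (2*γ-1) * (256*γ^2*Y) ≤ (2*γ-1) * (Real.sqrt π*(256*γ^3 + 96*γ^2)) :=
        mul_le_mul_of_nonneg_left B2 (by linarith)
      have h2 : (2*γ-1) * (Real.sqrt π*(256*γ^3 + 96*γ^2))
          ≤ 4*γ^2 * (Real.sqrt π*(128*γ^2 - 16*γ)) := by
        nlinarith [mul_nonneg hP.le (sq_nonneg γ)]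
      have h3 : 4*γ^2 * (Real.sqrt π*(128*γ^2 - 16*γ)) ≤ 4*γ^2 * (128*γ^2*X) :=
        mul_le_mul_of_nonneg_left A1 (by positivity)
      have h4 : (2*γ-1) * (256*γ^2*Y) ≤ 4*γ^2 * (128*γ^2*X) := le_trans h1 (le_trans h2 h3)
      have h5 : (256*γ^2) * ((2*γ-1)*Y) ≤ (256*γ^2) * (2*γ^2*X) := by linarith [h4]
      exact le_of_mul_le_mul_left h5 (by positivity)
    have keyI : (2*γ-1) * I1 ≤ 2*γ^2 * I0 := by
      have h6 : c * ((2*γ-1)*I1) ≤ c * (2*γ^2*I0) := by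
        calc c * ((2*γ-1)*I1) = (2*γ-1)*Y := by rw [hYdef]; try ring
          _ ≤ 2*γ^2 * X := key
          _ = c * (2*γ^2*I0) := by rw [hXdef]; try ring
      exact le_of_mul_le_mul_left h6 hc
    have e : (1 - 1/(2*γ)) * I1 = ((2*γ-1) * I1) / (2*γ) := by field_simp; try ring
    rw [e, div_le_iff₀ (by positivity : (0:ℝ) < 2*γ)]
    nlinarith [keyI]
  · -- upper bound
    rw [div_le_iff₀ hI1pos]
    have key : 16*γ^3 * (γ * X) ≤ (16*γ^3 - 8*γ^2 + 6*γ + 3) * Y := by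
      have hN : (0:ℝ) < 16*γ^3 - 8*γ^2 + 6*γ + 3 := by nlinarith
      have h1 : 32*γ^4 * (128*γ^2*X) ≤ 32*γ^4 * (Real.sqrt π*(128*γ^2 - 16*γ + 9)) :=
        mul_le_mul_of_nonneg_left A2 (by positivity)
      have h2 : 32*γ^4 * (Real.sqrt π*(128*γ^2 - 16*γ + 9))
          ≤ (16*γ^3 - 8*γ^2 + 6*γ + 3) * (Real.sqrt π*(256*γ^3 + 96*γ^2 - 30*γ)) := by
        nlinarith [mul_nonneg hP.le hg.le, mul_nonneg (mul_nonneg hP.le hg.le) hg.le]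
      have h3 : (16*γ^3 - 8*γ^2 + 6*γ + 3) * (Real.sqrt π*(256*γ^3 + 96*γ^2 - 30*γ))
          ≤ (16*γ^3 - 8*γ^2 + 6*γ + 3) * (256*γ^2*Y) :=
        mul_le_mul_of_nonneg_left B1 hN.le
      have h4 := le_trans h1 (le_trans h2 h3)
      have h5 : (256*γ^2) * (16*γ^3*(γ*X)) ≤ (256*γ^2) * ((16*γ^3 - 8*γ^2 + 6*γ + 3)*Y) := by
        linarith [h4]
      exact le_of_mul_le_mul_left h5 (by positivity)
    have keyI : 16*γ^3 * (γ * I0) ≤ (16*γ^3 - 8*γ^2 + 6*γ + 3) * I1 := by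
      have h6 : c * (16*γ^3*(γ*I0)) ≤ c * ((16*γ^3 - 8*γ^2 + 6*γ + 3)*I1) := by
        calc c * (16*γ^3*(γ*I0)) = 16*γ^3*(γ*X) := by rw [hXdef]; try ring
          _ ≤ (16*γ^3 - 8*γ^2 + 6*γ + 3) * Y := key
          _ = c * ((16*γ^3 - 8*γ^2 + 6*γ + 3)*I1) := by rw [hYdef]; try ring
      exact le_of_mul_le_mul_left h6 hc
    have e : (1 - 1/(2*γ) + 3/(8*γ^2) + 3/(16*γ^3)) * I1
        = ((16*γ^3 - 8*γ^2 + 6*γ + 3) * I1) / (16*γ^3) := by field_simp; try ring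
    rw [e, le_div_iff₀ (by positivity : (0:ℝ) < 16*γ^3)]
    nlinarith [keyI]
end

section
/- For every real γ > 0, the ratio of modified Bessel functions satisfies γ²·(K_1(γ)/K_2(γ))² + 3γ·(K_1(γ)/K_2(γ)) − γ² − 3 < 0. (This inequality resolves a conjecture of Speck and Strain: it implies that the map (n,γ) ↦ (entropy, pressure) for the relativistic monatomic gas with Synge energy is a diffeomorphism, and that the specific heat c_V at constant volume of the monatomic relativistic gas is positive.) -/
open MeasureTheory Real Set

namespace SpeckStrain

/-- `v = sqrt (γ² + u²)`. -/
noncomputable def vv (γ u : ℝ) : ℝ := Real.sqrt (γ ^ 2 + u ^ 2)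

lemma vv_sq {γ u : ℝ} (hγ : 0 < γ) : vv γ u ^ 2 = γ ^ 2 + u ^ 2 := by
  rw [vv, sq_sqrt]; positivity

lemma vv_pos {γ u : ℝ} (hγ : 0 < γ) : 0 < vv γ u := by
  rw [vv]; positivity

lemma ge_vv {γ u : ℝ} (hγ : 0 < γ) : γ ≤ vv γ u := by
  rw [vv]
  nlinarith [Real.sq_sqrt (by positivity : (0:ℝ) ≤ γ ^ 2 + u ^ 2),
    Real.sqrt_nonneg (γ ^ 2 + u ^ 2), sq_nonneg u]

lemma u_le_vv {γ u : ℝ} (hγ : 0 < γ) (hu : 0 ≤ u) : u ≤ vv γ u := by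
  rw [vv]
  nlinarith [Real.sq_sqrt (by positivity : (0:ℝ) ≤ γ ^ 2 + u ^ 2),
    Real.sqrt_nonneg (γ ^ 2 + u ^ 2)]

lemma vv_le {γ u : ℝ} (hγ : 0 < γ) (hu : 0 ≤ u) : vv γ u ≤ γ + u := by
  rw [vv]
  have h : (0:ℝ) ≤ γ + u := by positivity
  nlinarith [Real.sq_sqrt (by positivity : (0:ℝ) ≤ γ ^ 2 + u ^ 2),
    Real.sqrt_nonneg (γ ^ 2 + u ^ 2)]

lemma exp_neg_vv_le {γ u : ℝ} (hγ : 0 < γ) (hu : 0 ≤ u) :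
    Real.exp (-vv γ u) ≤ Real.exp (-u) :=
  Real.exp_le_exp.2 (by linarith [u_le_vv hγ hu])

lemma continuous_vv {γ : ℝ} (hγ : 0 < γ) : Continuous (vv γ) := by
  apply Real.continuous_sqrt.comp
  continuity

/-- integrability of `u^k e^{-u}` on `(0,∞)`. -/
lemma integrableOn_poly_exp (k : ℕ) :
    IntegrableOn (fun u : ℝ => u ^ k * Real.exp (-u)) (Ioi 0) := by
  have h := Real.GammaIntegral_convergent (s := (k : ℝ) + 1) (by positivity)
  apply h.congr_fun ?_ measurableSet_Ioi
  intro x hx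
  show Real.exp (-x) * x ^ ((k:ℝ) + 1 - 1) = x ^ k * Real.exp (-x)
  rw [add_sub_cancel_right, Real.rpow_natCast]
  ring

/-- master integrability lemma: domination by a polynomial times `e^{-u}`. -/
lemma integrable_dom {γ : ℝ} (hγ : 0 < γ) {f : ℝ → ℝ} (hc : Continuous f)
    {c : ℝ} {k : ℕ} (hb : ∀ u ∈ Ioi (0:ℝ), ‖f u‖ ≤ c * ((1 + u) ^ k * Real.exp (-u))) :
    IntegrableOn f (Ioi 0) := by
  have hint : IntegrableOn
      (fun u : ℝ => c * (2^k * (u^0 * Real.exp (-u))) + c * (2^k * (u^k * Real.exp (-u))))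
      (Ioi 0) :=
    (((integrableOn_poly_exp 0).const_mul _).const_mul _).add
      (((integrableOn_poly_exp k).const_mul _).const_mul _)
  apply hint.mono' hc.aestronglyMeasurable.restrict
  rw [ae_restrict_iff' measurableSet_Ioi]
  filter_upwards with u hu
  refine (hb u hu).trans ?_
  · have hu' : (0:ℝ) < u := hu
    have h1u : (1 + u) ^ k ≤ 2^k * (1 + u^k) := by
      calc (1 + u) ^ k ≤ (2 * max 1 u) ^ k := by
            gcongr
            rcases le_total u 1 with h | h
            · simp [max_eq_left h]; linarith
            · simp [max_eq_right h]; linarith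
          _ = 2^k * (max 1 u)^k := by rw [mul_pow]
          _ ≤ 2^k * (1 + u^k) := by
            gcongr
            rcases le_total u 1 with h | h
            · simp [max_eq_left h]
              nlinarith [pow_nonneg hu'.le k]
            · rw [max_eq_right h]; nlinarith [pow_nonneg hu'.le k]
    have he : 0 < Real.exp (-u) := Real.exp_pos _
    have hc0 : 0 ≤ c := by
      have h1 := (norm_nonneg (f 1)).trans (hb 1 (by norm_num))
      have hP : (0:ℝ) < (1 + 1) ^ k * Real.exp (-1) := by positivity
      by_contra hcn
      push_neg at hcn
      nlinarith [h1, hP]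
    calc c * ((1 + u) ^ k * Real.exp (-u))
        ≤ c * ((2^k * (1 + u^k)) * Real.exp (-u)) := by gcongr
      _ = c * (2^k * (u^0 * Real.exp (-u))) + c * (2^k * (u^k * Real.exp (-u))) := by ring

section Integrals

variable {γ : ℝ}

/-- the function `u ↦ e^{-v} u^k / v^m`. -/
noncomputable def gi (γ : ℝ) (k m : ℕ) (u : ℝ) : ℝ :=
  Real.exp (-vv γ u) * u ^ k / (vv γ u) ^ m

lemma continuous_gi (hγ : 0 < γ) (k m : ℕ) : Continuous (gi γ k m) := by
  apply Continuous.div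
  · exact ((Real.continuous_exp.comp (continuous_vv hγ).neg)).mul (continuous_pow k)
  · exact (continuous_vv hγ).pow m
  · intro u; exact pow_ne_zero _ (vv_pos hγ).ne'

lemma int_gi (hγ : 0 < γ) (k m : ℕ) : IntegrableOn (gi γ k m) (Ioi 0) := by
  apply integrable_dom hγ (continuous_gi hγ k m) (c := γ⁻¹ ^ m) (k := k)
  intro u hu
  have hu' : (0:ℝ) < u := hu
  have hv := vv_pos (u := u) hγ
  have h1 : Real.exp (-vv γ u) * u ^ k / (vv γ u) ^ m ≤ γ⁻¹ ^ m * (u ^ k * Real.exp (-u)) := by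
    rw [div_le_iff₀ (pow_pos hv m)]
    have hone : (1:ℝ) ≤ γ⁻¹ ^ m * vv γ u ^ m := by
      rw [← mul_pow]
      apply one_le_pow₀
      rw [← div_eq_inv_mul, le_div_iff₀ hγ, one_mul]
      exact ge_vv hγ
    calc Real.exp (-vv γ u) * u ^ k ≤ Real.exp (-u) * u ^ k := by
          gcongr ?_ * _
          exact Real.exp_le_exp.2 (by linarith [u_le_vv hγ hu'.le])
      _ = (u ^ k * Real.exp (-u)) * 1 := by ring
      _ ≤ (u ^ k * Real.exp (-u)) * (γ⁻¹ ^ m * vv γ u ^ m) := by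
          gcongr
      _ = γ⁻¹ ^ m * (u ^ k * Real.exp (-u)) * vv γ u ^ m := by ring
  rw [Real.norm_eq_abs, abs_of_nonneg (by unfold gi; positivity)]
  refine h1.trans ?_
  have h2 : u ^ k ≤ (1 + u) ^ k := by gcongr; linarith
  have h3 : (0:ℝ) ≤ γ⁻¹ ^ m := by positivity
  calc γ⁻¹ ^ m * (u ^ k * Real.exp (-u)) ≤ γ⁻¹ ^ m * ((1+u) ^ k * Real.exp (-u)) := by gcongr
    _ = γ⁻¹ ^ m * ((1 + u) ^ k * Real.exp (-u)) := by ring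

lemma pos_gi (hγ : 0 < γ) (k m : ℕ) : 0 < ∫ u in Ioi (0:ℝ), gi γ k m u := by
  have hnn : 0 ≤ᵐ[volume.restrict (Ioi 0)] gi γ k m := by
    filter_upwards [ae_restrict_mem measurableSet_Ioi] with u hu
    show (0:ℝ) ≤ gi γ k m u
    have hu' : (0:ℝ) < u := hu
    have hv := vv_pos (u := u) hγ
    unfold gi
    positivity
  rw [setIntegral_pos_iff_support_of_nonneg_ae hnn (int_gi hγ k m)]
  have hsub : Ioi (0:ℝ) ⊆ Function.support (gi γ k m) ∩ Ioi 0 := by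
    intro u hu
    have hu' : (0:ℝ) < u := hu
    have hv := vv_pos (u := u) hγ
    refine ⟨?_, hu⟩
    have hpos : 0 < gi γ k m u := by unfold gi; positivity
    exact hpos.ne'
  refine lt_of_lt_of_le ?_ (measure_mono hsub)
  rw [Real.volume_Ioi]
  exact ENNReal.zero_lt_top

/-- integrability of `v e^{-v}` (times `u^k`). -/
lemma int_ve (hγ : 0 < γ) (k : ℕ) :
    IntegrableOn (fun u => vv γ u * Real.exp (-vv γ u) * u ^ k) (Ioi 0) := by
  apply integrable_dom hγ (by
    exact ((continuous_vv hγ).mul (Real.continuous_exp.comp (continuous_vv hγ).neg)).mul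
      (continuous_pow k)) (c := 1 + γ) (k := k + 1)
  intro u hu
  have hu' : (0:ℝ) < u := hu
  have hv := vv_pos (u := u) hγ
  rw [Real.norm_eq_abs, abs_of_nonneg (by positivity)]
  calc vv γ u * Real.exp (-vv γ u) * u ^ k ≤ (γ + u) * Real.exp (-u) * u ^ k := by
        gcongr
        · exact (vv_le hγ hu'.le)
        · exact u_le_vv hγ hu'.le
    _ ≤ (1 + γ) * ((1 + u) ^ (k+1) * Real.exp (-u)) := by
        have h1 : u ^ k ≤ (1+u)^k := by gcongr <;> linarith
        have h2 : (γ + u) ≤ (1 + γ) * (1 + u) := by nlinarith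
        have h3 : (1+u)^(k+1) = (1+u) * (1+u)^k := by ring
        rw [h3]
        calc (γ + u) * Real.exp (-u) * u ^ k ≤ ((1+γ)*(1+u)) * Real.exp (-u) * (1+u)^k := by
              gcongr
          _ = (1 + γ) * ((1 + u) * (1+u)^k * Real.exp (-u)) := by ring

/-- integrability of the `γ`-derivative integrands `e^{-v}(v+1)u^k/v³`. -/
lemma int_di (hγ : 0 < γ) (k : ℕ) :
    IntegrableOn (fun u => Real.exp (-vv γ u) * (vv γ u + 1) * u ^ k / (vv γ u) ^ 3)
      (Ioi 0) := by
  have heq : ∀ u : ℝ, Real.exp (-vv γ u) * (vv γ u + 1) * u ^ k / (vv γ u) ^ 3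
      = gi γ k 2 u + gi γ k 3 u := by
    intro u
    have hv := vv_pos (u := u) hγ
    unfold gi
    field_simp
  have hadd : IntegrableOn (fun u => gi γ k 2 u + gi γ k 3 u) (Ioi 0) :=
    (int_gi hγ k 2).add (int_gi hγ k 3)
  exact hadd.congr_fun (fun u _ => (heq u).symm) measurableSet_Ioi

end Integrals

section Gdefs

/-- `g k γ = ∫_0^∞ e^{-v} u^k / v du`. -/
noncomputable def g (k : ℕ) (γ : ℝ) : ℝ := ∫ u in Ioi (0:ℝ), gi γ k 1 u

/-- `h2 γ = ∫_0^∞ e^{-v} u² du`. -/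
noncomputable def h2 (γ : ℝ) : ℝ := ∫ u in Ioi (0:ℝ), gi γ 2 0 u

lemma g_pos {γ : ℝ} (hγ : 0 < γ) (k : ℕ) : 0 < g k γ := pos_gi hγ k 1
lemma h2_pos {γ : ℝ} (hγ : 0 < γ) : 0 < h2 γ := pos_gi hγ 2 0

end Gdefs

section IBP

variable {γ : ℝ}

lemma hasDerivAt_vv (hγ : 0 < γ) (u : ℝ) : HasDerivAt (vv γ) (u / vv γ u) u := by
  have h1 : HasDerivAt (fun u : ℝ => γ ^ 2 + u ^ 2) (2 * u) u := by
    simpa using (hasDerivAt_pow 2 u).const_add (γ ^ 2)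
  have h2 := (Real.hasDerivAt_sqrt (show γ ^ 2 + u ^ 2 ≠ 0 by positivity)).comp u h1
  have hv : vv γ u = Real.sqrt (γ ^ 2 + u ^ 2) := rfl
  have hvp := vv_pos (u := u) hγ
  refine h2.congr_deriv ?_
  rw [← hv]
  field_simp

lemma hasDerivAt_exp_vv (hγ : 0 < γ) (u : ℝ) :
    HasDerivAt (fun u => Real.exp (-vv γ u)) (-(u / vv γ u) * Real.exp (-vv γ u)) u := by
  have := ((hasDerivAt_vv hγ u).neg).exp
  refine this.congr_deriv ?_
  simp only [Pi.neg_apply]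
  ring

/-- generic boundary-term lemma: `u^k e^{-v} / v^m → 0` at `atTop`. -/
lemma tendsto_bd (hγ : 0 < γ) (k m : ℕ) :
    Filter.Tendsto (fun u => Real.exp (-vv γ u) * u ^ k / vv γ u ^ m)
      Filter.atTop (nhds 0) := by
  apply squeeze_zero_norm' (a := fun u => γ⁻¹ ^ m * (u ^ k * Real.exp (-u)))
  · filter_upwards [Filter.eventually_gt_atTop (0:ℝ)] with u hu
    have hv := vv_pos (u := u) hγ
    have h1 : Real.exp (-vv γ u) * u ^ k / (vv γ u) ^ m ≤ γ⁻¹ ^ m * (u ^ k * Real.exp (-u)) := by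
      rw [div_le_iff₀ (pow_pos hv m)]
      have hone : (1:ℝ) ≤ γ⁻¹ ^ m * vv γ u ^ m := by
        rw [← mul_pow]
        apply one_le_pow₀
        rw [← div_eq_inv_mul, le_div_iff₀ hγ, one_mul]
        exact ge_vv hγ
      calc Real.exp (-vv γ u) * u ^ k ≤ Real.exp (-u) * u ^ k := by
            gcongr ?_ * _
            exact Real.exp_le_exp.2 (by linarith [u_le_vv hγ hu.le])
        _ = (u ^ k * Real.exp (-u)) * 1 := by ring
        _ ≤ (u ^ k * Real.exp (-u)) * (γ⁻¹ ^ m * vv γ u ^ m) := by gcongr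
        _ = γ⁻¹ ^ m * (u ^ k * Real.exp (-u)) * vv γ u ^ m := by ring
    rw [Real.norm_eq_abs, abs_of_nonneg (by positivity)]
    exact h1
  · have h := (tendsto_pow_mul_exp_neg_atTop_nhds_zero k).const_mul (γ⁻¹ ^ m)
    simpa using h

lemma ibp3 (hγ : 0 < γ) : g 4 γ = 3 * h2 γ := by
  have key : ∫ u in Ioi (0:ℝ), (3 * gi γ 2 0 u - gi γ 4 1 u) = 0 := by
    rw [integral_Ioi_of_hasDerivAt_of_tendsto
      (f := fun u => Real.exp (-vv γ u) * u ^ 3)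
      (m := 0) ?hcont ?hderiv ?hint ?htend]
    · simp [vv]
    case hcont =>
      exact (((Real.continuous_exp.comp (continuous_vv hγ).neg)).mul
        (continuous_pow 3)).continuousWithinAt
    case hderiv =>
      intro u hu
      have hu' : (0:ℝ) < u := hu
      have hv := vv_pos (u := u) hγ
      have hd := (hasDerivAt_exp_vv hγ u).mul (hasDerivAt_pow 3 u)
      refine hd.congr_deriv ?_
      unfold gi
      field_simp
      ring
    case hint =>
      exact ((int_gi hγ 2 0).const_mul 3).sub (int_gi hγ 4 1)
    case htend =>
      have := tendsto_bd hγ 3 0 (γ := γ)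
      simpa using this
  have hc3 : IntegrableOn (fun u => 3 * gi γ 2 0 u) (Ioi 0) := (int_gi hγ 2 0).const_mul 3
  rw [integral_sub hc3 (int_gi hγ 4 1), integral_const_mul] at key
  unfold g h2
  linarith

lemma ibp1 (hγ : 0 < γ) :
    (∫ u in Ioi (0:ℝ), gi γ 2 3 u) + (∫ u in Ioi (0:ℝ), gi γ 2 2 u) = g 0 γ := by
  have key : ∫ u in Ioi (0:ℝ), (gi γ 0 1 u - (gi γ 2 3 u + gi γ 2 2 u)) = 0 := by
    rw [integral_Ioi_of_hasDerivAt_of_tendsto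
      (f := fun u => Real.exp (-vv γ u) * u ^ 1 / vv γ u ^ 1)
      (m := 0) ?hcont ?hderiv ?hint ?htend]
    · simp [vv]
    case hcont =>
      exact (continuous_gi hγ 1 1).continuousWithinAt
    case hderiv =>
      intro u hu
      have hu' : (0:ℝ) < u := hu
      have hv := vv_pos (u := u) hγ
      have hd := ((hasDerivAt_exp_vv hγ u).mul (hasDerivAt_pow 1 u)).div
        ((hasDerivAt_vv hγ u).pow 1) (pow_ne_zero 1 hv.ne')
      refine hd.congr_deriv ?_
      simp only [Pi.mul_apply, Pi.pow_apply]
      unfold gi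
      field_simp
      ring
    case hint =>
      exact (int_gi hγ 0 1).sub ((int_gi hγ 2 3).add (int_gi hγ 2 2))
    case htend =>
      have := tendsto_bd hγ 1 1 (γ := γ)
      simpa using this
  have hadd : IntegrableOn (fun u => gi γ 2 3 u + gi γ 2 2 u) (Ioi 0) :=
    (int_gi hγ 2 3).add (int_gi hγ 2 2)
  rw [integral_sub (int_gi hγ 0 1) hadd,
    integral_add (int_gi hγ 2 3) (int_gi hγ 2 2)] at key
  unfold g
  linarith

lemma ibp2 (hγ : 0 < γ) :
    (∫ u in Ioi (0:ℝ), gi γ 4 3 u) + (∫ u in Ioi (0:ℝ), gi γ 4 2 u) = 3 * g 2 γ := by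
  have key : ∫ u in Ioi (0:ℝ), (3 * gi γ 2 1 u - (gi γ 4 3 u + gi γ 4 2 u)) = 0 := by
    rw [integral_Ioi_of_hasDerivAt_of_tendsto
      (f := fun u => Real.exp (-vv γ u) * u ^ 3 / vv γ u ^ 1)
      (m := 0) ?hcont ?hderiv ?hint ?htend]
    · simp [vv]
    case hcont =>
      exact (continuous_gi hγ 3 1).continuousWithinAt
    case hderiv =>
      intro u hu
      have hu' : (0:ℝ) < u := hu
      have hv := vv_pos (u := u) hγ
      have hd := ((hasDerivAt_exp_vv hγ u).mul (hasDerivAt_pow 3 u)).div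
        ((hasDerivAt_vv hγ u).pow 1) (pow_ne_zero 1 hv.ne')
      refine hd.congr_deriv ?_
      simp only [Pi.mul_apply, Pi.pow_apply]
      unfold gi
      field_simp
      ring
    case hint =>
      exact ((int_gi hγ 2 1).const_mul 3).sub ((int_gi hγ 4 3).add (int_gi hγ 4 2))
    case htend =>
      have := tendsto_bd hγ 3 1 (γ := γ)
      simpa using this
  have hc3 : IntegrableOn (fun u => 3 * gi γ 2 1 u) (Ioi 0) := (int_gi hγ 2 1).const_mul 3
  have hadd : IntegrableOn (fun u => gi γ 4 3 u + gi γ 4 2 u) (Ioi 0) :=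
    (int_gi hγ 4 3).add (int_gi hγ 4 2)
  rw [integral_sub hc3 hadd,
    integral_add (int_gi hγ 4 3) (int_gi hγ 4 2), integral_const_mul] at key
  unfold g
  linarith

/-- split `g2` as `∫ v e^{-v} - γ² g0`. -/
lemma g2_split (hγ : 0 < γ) :
    g 2 γ = (∫ u in Ioi (0:ℝ), vv γ u * Real.exp (-vv γ u) * u ^ 0) - γ ^ 2 * g 0 γ := by
  have heq : ∀ u ∈ Ioi (0:ℝ), gi γ 2 1 u
      = vv γ u * Real.exp (-vv γ u) * u ^ 0 - γ ^ 2 * gi γ 0 1 u := by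
    intro u hu
    have hv := vv_pos (u := u) hγ
    have hs := vv_sq (u := u) hγ
    unfold gi
    field_simp
    linear_combination -hs
  unfold g
  rw [setIntegral_congr_fun measurableSet_Ioi heq,
    integral_sub (int_ve hγ 0) ((int_gi hγ 0 1).const_mul (γ^2)), integral_const_mul]

lemma ibp4 (hγ : 0 < γ) : h2 γ = 2 * g 2 γ + γ ^ 2 * g 0 γ := by
  have key : ∫ u in Ioi (0:ℝ),
      (gi γ 2 0 u - 2 * (vv γ u * Real.exp (-vv γ u) * u ^ 0) + γ ^ 2 * gi γ 0 1 u) = 0 := by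
    rw [integral_Ioi_of_hasDerivAt_of_tendsto
      (f := fun u => -(u ^ 1 * vv γ u * Real.exp (-vv γ u)))
      (m := 0) ?hcont ?hderiv ?hint ?htend]
    · simp [vv]
    case hcont =>
      refine (Continuous.continuousWithinAt ?_)
      exact (((continuous_pow 1).mul (continuous_vv hγ)).mul
        (Real.continuous_exp.comp (continuous_vv hγ).neg)).neg
    case hderiv =>
      intro u hu
      have hu' : (0:ℝ) < u := hu
      have hv := vv_pos (u := u) hγ
      have hs := vv_sq (u := u) hγ
      have hd := (((hasDerivAt_pow 1 u).mul (hasDerivAt_vv hγ u)).mul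
        (hasDerivAt_exp_vv hγ u)).neg
      refine hd.congr_deriv ?_
      simp only [Pi.mul_apply]
      unfold gi
      field_simp
      linear_combination hs
    case hint =>
      exact ((int_gi hγ 2 0).sub ((int_ve hγ 0).const_mul 2)).add
        ((int_gi hγ 0 1).const_mul (γ^2))
    case htend =>
      apply squeeze_zero_norm'
        (a := fun u => γ * (u ^ 1 * Real.exp (-u)) + u ^ 2 * Real.exp (-u))
      · filter_upwards [Filter.eventually_gt_atTop (0:ℝ)] with u hu
        have hv := vv_pos (u := u) hγ
        rw [Real.norm_eq_abs, abs_neg, abs_of_nonneg (by positivity)]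
        calc u ^ 1 * vv γ u * Real.exp (-vv γ u) ≤ u ^ 1 * (γ + u) * Real.exp (-u) := by
              gcongr
              · exact vv_le hγ hu.le
              · exact u_le_vv hγ hu.le
          _ = γ * (u ^ 1 * Real.exp (-u)) + u ^ 2 * Real.exp (-u) := by ring
      · have h1 := (tendsto_pow_mul_exp_neg_atTop_nhds_zero 1).const_mul γ
        have h2 := tendsto_pow_mul_exp_neg_atTop_nhds_zero 2
        have := h1.add h2
        simpa using this
  have hsub : IntegrableOn (fun u => gi γ 2 0 u - 2 * (vv γ u * Real.exp (-vv γ u) * u ^ 0))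
      (Ioi 0) := (int_gi hγ 2 0).sub ((int_ve hγ 0).const_mul 2)
  have hcm : IntegrableOn (fun u => γ ^ 2 * gi γ 0 1 u) (Ioi 0) :=
    (int_gi hγ 0 1).const_mul (γ^2)
  have hcm2 : IntegrableOn (fun u => 2 * (vv γ u * Real.exp (-vv γ u) * u ^ 0)) (Ioi 0) :=
    (int_ve hγ 0).const_mul 2
  rw [integral_add hsub hcm, integral_sub (int_gi hγ 2 0) hcm2,
    integral_const_mul, integral_const_mul] at key
  have hsplit := g2_split hγ
  unfold g h2 at *
  linarith

end IBP

section Deriv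

variable {γ : ℝ}

lemma ball_pos (hγ : 0 < γ) {x : ℝ} (hx : x ∈ Metric.ball γ (γ/2)) : γ/2 < x := by
  rw [Metric.mem_ball, Real.dist_eq, abs_lt] at hx
  linarith [hx.1]

lemma hasDerivAt_vv_x (u : ℝ) {x : ℝ} (hne : x ^ 2 + u ^ 2 ≠ 0) :
    HasDerivAt (fun x => vv x u) (x / vv x u) x := by
  have h1 : HasDerivAt (fun x : ℝ => x ^ 2 + u ^ 2) (2 * x) x := by
    simpa using (hasDerivAt_pow 2 x).add_const (u ^ 2)
  have h2 := (Real.hasDerivAt_sqrt hne).comp x h1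
  have hvp : 0 < vv x u := by
    rw [vv]
    have : 0 < x ^ 2 + u ^ 2 := lt_of_le_of_ne (by positivity) (Ne.symm hne)
    positivity
  refine h2.congr_deriv ?_
  show 1 / (2 * Real.sqrt (x ^ 2 + u ^ 2)) * (2 * x) = x / vv x u
  rw [show Real.sqrt (x ^ 2 + u ^ 2) = vv x u from rfl]
  field_simp

lemma hasDerivAt_g (hγ : 0 < γ) (k : ℕ) :
    HasDerivAt (g k)
      (-γ * ((∫ u in Ioi (0:ℝ), gi γ k 3 u) + ∫ u in Ioi (0:ℝ), gi γ k 2 u)) γ := by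
  set c1 : ℝ := (3*γ/2) * (3*γ/2 + 1) / (γ/2)^3 with hc1
  have hc1pos : 0 < c1 := by positivity
  have key := (hasDerivAt_integral_of_dominated_loc_of_deriv_le
    (μ := volume.restrict (Ioi (0:ℝ)))
    (F := fun x u => gi x k 1 u)
    (F' := fun x u => -x * (Real.exp (-vv x u) * (vv x u + 1) * u ^ k / vv x u ^ 3))
    (x₀ := γ) (s := Metric.ball γ (γ/2)) (bound := fun u => c1 * ((1+u) ^ (k+1) * Real.exp (-u)))
    (Metric.ball_mem_nhds γ (half_pos hγ)) ?hmeas (int_gi hγ k 1) ?hmeas' ?hbound ?hbint ?hdiff).2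
  · -- convert the derivative value
    refine key.congr_deriv ?_
    have heq : ∀ u ∈ Ioi (0:ℝ),
        -γ * (Real.exp (-vv γ u) * (vv γ u + 1) * u ^ k / vv γ u ^ 3)
        = -γ * (gi γ k 3 u + gi γ k 2 u) := by
      intro u hu
      have hv := vv_pos (u := u) hγ
      unfold gi
      field_simp
      ring
    rw [setIntegral_congr_fun measurableSet_Ioi heq, integral_const_mul]
    have hadd : IntegrableOn (fun u => gi γ k 3 u + gi γ k 2 u) (Ioi 0) :=
      (int_gi hγ k 3).add (int_gi hγ k 2)
    rw [integral_add (int_gi hγ k 3) (int_gi hγ k 2)]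
  case hmeas =>
    filter_upwards [Metric.ball_mem_nhds γ (half_pos hγ)] with x hx
    have hxpos : 0 < x := lt_trans (by positivity) (ball_pos hγ hx)
    exact (continuous_gi hxpos k 1).aestronglyMeasurable.restrict
  case hmeas' =>
    apply Continuous.aestronglyMeasurable ?_ |>.restrict
    apply Continuous.mul continuous_const
    apply Continuous.div
    · exact ((Real.continuous_exp.comp (continuous_vv hγ).neg).mul
        ((continuous_vv hγ).add continuous_const)).mul (continuous_pow k)
    · exact (continuous_vv hγ).pow 3
    · intro u; exact pow_ne_zero _ (vv_pos hγ).ne'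
  case hbound =>
    filter_upwards [ae_restrict_mem measurableSet_Ioi] with u hu
    intro x hx
    have hu' : (0:ℝ) < u := hu
    have hx2 : γ/2 < x := ball_pos hγ hx
    have hx3 : x < 3*γ/2 := by
      rw [Metric.mem_ball, Real.dist_eq, abs_lt] at hx
      linarith [hx.2]
    have hxpos : 0 < x := lt_trans (by positivity) hx2
    have hv : 0 < vv x u := vv_pos hxpos
    have hvx : γ/2 < vv x u := lt_of_lt_of_le hx2 (ge_vv hxpos)
    have hvu : u ≤ vv x u := u_le_vv hxpos hu'.le
    have hvle : vv x u ≤ x + u := vv_le hxpos hu'.le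
    rw [Real.norm_eq_abs, abs_mul, abs_neg, abs_of_nonneg hxpos.le,
      abs_of_nonneg (by positivity)]
    have hb1 : Real.exp (-vv x u) * (vv x u + 1) * u ^ k / vv x u ^ 3
        ≤ Real.exp (-u) * ((3*γ/2 + 1) * (1+u)) * (1+u) ^ k / (γ/2) ^ 3 := by
      apply div_le_div₀ (by positivity) ?_ (by positivity) (by gcongr)
      have e1 : Real.exp (-vv x u) ≤ Real.exp (-u) := Real.exp_le_exp.2 (by linarith)
      have e2 : vv x u + 1 ≤ (3*γ/2+1)*(1+u) := by nlinarith
      have e3 : u ^ k ≤ (1+u)^k := pow_le_pow_left₀ hu'.le (by linarith) k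
      exact mul_le_mul (mul_le_mul e1 e2 (by positivity) (by positivity)) e3
        (by positivity) (by positivity)
    calc x * (Real.exp (-vv x u) * (vv x u + 1) * u ^ k / vv x u ^ 3)
        ≤ (3*γ/2) * (Real.exp (-u) * ((3*γ/2 + 1) * (1+u)) * (1+u) ^ k / (γ/2) ^ 3) := by
          apply mul_le_mul hx3.le hb1 (by positivity) (by positivity)
      _ = c1 * ((1+u) ^ (k+1) * Real.exp (-u)) := by
          rw [hc1]; field_simp; ring
  case hbint =>
    apply integrable_dom hγ (by continuity) (c := c1) (k := k+1)
    intro u hu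
    have hu' : (0:ℝ) < u := hu
    rw [Real.norm_eq_abs, abs_of_nonneg (by positivity)]
  case hdiff =>
    filter_upwards [ae_restrict_mem measurableSet_Ioi] with u hu
    intro x hx
    have hu' : (0:ℝ) < u := hu
    have hne : x ^ 2 + u ^ 2 ≠ 0 := by positivity
    have hv : 0 < vv x u := by
      rw [vv]
      have : 0 < x ^ 2 + u ^ 2 := by positivity
      positivity
    have hvv := hasDerivAt_vv_x u hne
    have hexp : HasDerivAt (fun x => Real.exp (-vv x u)) (-(x / vv x u) * Real.exp (-vv x u)) x := by
      have := hvv.neg.exp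
      refine this.congr_deriv ?_
      simp only [Pi.neg_apply]
      ring
    have hnum : HasDerivAt (fun x => Real.exp (-vv x u) * u ^ k)
        ((-(x / vv x u) * Real.exp (-vv x u)) * u ^ k) x := hexp.mul_const _
    have hd := hnum.div (hvv.pow 1) (pow_ne_zero 1 hv.ne')
    have goal_eq : (fun x => gi x k 1 u)
        = fun x => Real.exp (-vv x u) * u ^ k / vv x u ^ 1 := rfl
    rw [goal_eq]
    refine hd.congr_deriv ?_
    simp only [Pi.mul_apply, Pi.pow_apply]
    field_simp
    ring

lemma hasDerivAt_g2 (hγ : 0 < γ) : HasDerivAt (g 2) (-γ * g 0 γ) γ := by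
  have := hasDerivAt_g hγ 2
  rwa [ibp1 hγ] at this

lemma hasDerivAt_g4 (hγ : 0 < γ) : HasDerivAt (g 4) (-(3*γ) * g 2 γ) γ := by
  have := hasDerivAt_g hγ 4
  rw [ibp2 hγ] at this
  convert this using 1
  ring

end Deriv

section BesselLink

variable {γ : ℝ}

lemma gt_vv (hγ : 0 < γ) {u : ℝ} (hu : 0 < u) : γ < vv γ u := by
  have hs := vv_sq (u := u) hγ
  have hv := vv_pos (u := u) hγ
  nlinarith

lemma vv_image (hγ : 0 < γ) : vv γ '' (Ioi 0) = Ioi γ := by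
  ext t
  constructor
  · rintro ⟨u, hu, rfl⟩
    exact gt_vv hγ hu
  · intro ht
    have ht' : γ < t := ht
    refine ⟨Real.sqrt (t^2 - γ^2), ?_, ?_⟩
    · show (0:ℝ) < Real.sqrt (t^2 - γ^2)
      apply Real.sqrt_pos.2
      nlinarith
    · rw [vv, Real.sq_sqrt (by nlinarith : (0:ℝ) ≤ t^2 - γ^2)]
      rw [show γ^2 + (t^2 - γ^2) = t^2 by ring]
      exact Real.sqrt_sq (by linarith : (0:ℝ) ≤ t)

lemma vv_injOn (hγ : 0 < γ) : InjOn (vv γ) (Ioi 0) := by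
  intro a ha b hb hab
  have h1 : γ^2 + a^2 = γ^2 + b^2 := by
    have := congrArg (fun x => x^2) hab
    simpa [vv_sq hγ] using this
  have ha' : (0:ℝ) < a := ha
  have hb' : (0:ℝ) < b := hb
  nlinarith

lemma change_var (hγ : 0 < γ) (e : ℝ) :
    (∫ t in Ioi γ, Real.exp (-t) * (t^2 - γ^2) ^ e)
      = ∫ u in Ioi (0:ℝ), |u / vv γ u| * (Real.exp (-vv γ u) * (vv γ u ^ 2 - γ^2) ^ e) := by
  rw [← vv_image hγ]
  rw [integral_image_eq_integral_abs_deriv_smul measurableSet_Ioi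
    (fun u _ => (hasDerivAt_vv hγ u).hasDerivWithinAt) (vv_injOn hγ)]
  rfl

lemma sq_rpow_half {u : ℝ} (hu : 0 ≤ u) : (u^2 : ℝ) ^ ((1:ℝ)/2) = u := by
  rw [← Real.rpow_natCast u 2, ← Real.rpow_mul hu]
  norm_num

lemma sq_rpow_3half {u : ℝ} (hu : 0 ≤ u) : (u^2 : ℝ) ^ ((3:ℝ)/2) = u^3 := by
  rw [← Real.rpow_natCast u 2, ← Real.rpow_mul hu]
  norm_num

lemma besselK_one (hγ : 0 < γ) : besselK 1 γ = g 2 γ / γ := by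
  unfold besselK
  have h1 : ((1:ℕ):ℝ) - 1/2 = (1:ℝ)/2 := by norm_num
  rw [h1, change_var hγ ((1:ℝ)/2)]
  have heq : ∀ u ∈ Ioi (0:ℝ),
      |u / vv γ u| * (Real.exp (-vv γ u) * (vv γ u ^ 2 - γ^2) ^ ((1:ℝ)/2))
      = gi γ 2 1 u := by
    intro u hu
    have hu' : (0:ℝ) < u := hu
    have hv := vv_pos (u := u) hγ
    rw [vv_sq hγ, show γ^2 + u^2 - γ^2 = u^2 by ring, sq_rpow_half hu'.le,
      abs_of_nonneg (by positivity)]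
    unfold gi
    field_simp
  rw [setIntegral_congr_fun measurableSet_Ioi heq]
  have hfac : ((2:ℝ) ^ (1:ℕ) * (Nat.factorial 1) / (Nat.factorial (2 * 1))) = 1 := by
    norm_num [Nat.factorial]
  have hpow : γ ^ (-((1:ℕ):ℝ)) = γ⁻¹ := by
    rw [show -((1:ℕ):ℝ) = -1 by norm_num, Real.rpow_neg_one]
  rw [hfac, hpow]
  unfold g
  field_simp

lemma besselK_two (hγ : 0 < γ) : besselK 2 γ = g 4 γ / (3 * γ^2) := by
  unfold besselK
  have h1 : ((2:ℕ):ℝ) - 1/2 = (3:ℝ)/2 := by norm_num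
  rw [h1, change_var hγ ((3:ℝ)/2)]
  have heq : ∀ u ∈ Ioi (0:ℝ),
      |u / vv γ u| * (Real.exp (-vv γ u) * (vv γ u ^ 2 - γ^2) ^ ((3:ℝ)/2))
      = gi γ 4 1 u := by
    intro u hu
    have hu' : (0:ℝ) < u := hu
    have hv := vv_pos (u := u) hγ
    rw [vv_sq hγ, show γ^2 + u^2 - γ^2 = u^2 by ring, sq_rpow_3half hu'.le,
      abs_of_nonneg (by positivity)]
    unfold gi
    field_simp
  rw [setIntegral_congr_fun measurableSet_Ioi heq]
  have hfac : ((2:ℝ) ^ (2:ℕ) * (Nat.factorial 2) / (Nat.factorial (2 * 2))) = 1/3 := by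
    norm_num [Nat.factorial]
  have hpow : γ ^ (-((2:ℕ):ℝ)) = (γ^2)⁻¹ := by
    rw [show -((2:ℕ):ℝ) = -(2:ℝ) by norm_num, Real.rpow_neg hγ.le,
      show (2:ℝ) = ((2:ℕ):ℝ) by norm_num, Real.rpow_natCast]
  rw [hfac, hpow]
  unfold g
  field_simp

/-- `γ g2 < h2`, which gives `K1 < K2`. -/
lemma h2_gt (hγ : 0 < γ) : γ * g 2 γ < h2 γ := by
  have key : 0 < ∫ u in Ioi (0:ℝ), (gi γ 2 0 u - γ * gi γ 2 1 u) := by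
    have hint : IntegrableOn (fun u => gi γ 2 0 u - γ * gi γ 2 1 u) (Ioi 0) :=
      (int_gi hγ 2 0).sub ((int_gi hγ 2 1).const_mul γ)
    have hnn : 0 ≤ᵐ[volume.restrict (Ioi 0)]
        (fun u => gi γ 2 0 u - γ * gi γ 2 1 u) := by
      filter_upwards [ae_restrict_mem measurableSet_Ioi] with u hu
      have hu' : (0:ℝ) < u := hu
      have hv := vv_pos (u := u) hγ
      have hgt := gt_vv hγ hu'
      show (0:ℝ) ≤ gi γ 2 0 u - γ * gi γ 2 1 u
      have hlt : γ / vv γ u < 1 := (div_lt_one hv).2 hgt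
      have hpos : 0 < Real.exp (-vv γ u) * u ^ 2 :=
        mul_pos (Real.exp_pos _) (pow_pos hu' 2)
      unfold gi
      rw [pow_one, pow_zero, div_one]
      have : γ * (Real.exp (-vv γ u) * u ^ 2 / vv γ u)
          = (Real.exp (-vv γ u) * u ^ 2) * (γ / vv γ u) := by ring
      rw [this]
      nlinarith
    rw [setIntegral_pos_iff_support_of_nonneg_ae hnn hint]
    have hsub : Ioi (0:ℝ) ⊆
        Function.support (fun u => gi γ 2 0 u - γ * gi γ 2 1 u) ∩ Ioi 0 := by
      intro u hu
      have hu' : (0:ℝ) < u := hu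
      have hv := vv_pos (u := u) hγ
      have hgt := gt_vv hγ hu'
      refine ⟨?_, hu⟩
      have hlt : γ / vv γ u < 1 := (div_lt_one hv).2 hgt
      have hpos : 0 < Real.exp (-vv γ u) * u ^ 2 :=
        mul_pos (Real.exp_pos _) (pow_pos hu' 2)
      have : 0 < gi γ 2 0 u - γ * gi γ 2 1 u := by
        unfold gi
        rw [pow_one, pow_zero, div_one]
        rw [show γ * (Real.exp (-vv γ u) * u ^ 2 / vv γ u)
          = (Real.exp (-vv γ u) * u ^ 2) * (γ / vv γ u) by ring]
        nlinarith
      exact this.ne'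
    refine lt_of_lt_of_le ?_ (measure_mono hsub)
    rw [Real.volume_Ioi]
    exact ENNReal.zero_lt_top
  rw [integral_sub (int_gi hγ 2 0) ((int_gi hγ 2 1).const_mul γ), integral_const_mul] at key
  unfold g h2
  linarith

end BesselLink

section Ratio

/-- the Bessel ratio `K₁/K₂ = 3γ g2/g4`. -/
noncomputable def rr (x : ℝ) : ℝ := 3 * x * g 2 x / g 4 x

/-- the critical root `ρ = (√(4γ²+21) - 3)/(2γ)`. -/
noncomputable def rho (x : ℝ) : ℝ := (Real.sqrt (4*x^2+21) - 3)/(2*x)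

/-- derivative of `rho`. -/
noncomputable def drho (x : ℝ) : ℝ := 3/(2*x^2) - 21/(2*x^2*Real.sqrt (4*x^2+21))

variable {γ : ℝ}

lemma sqrt_pos21 : 0 < Real.sqrt (4*γ^2+21) := Real.sqrt_pos.2 (by positivity)

lemma sqrt_sq21 : Real.sqrt (4*γ^2+21) ^ 2 = 4*γ^2+21 := Real.sq_sqrt (by positivity)

lemma sqrt_gt3 : 3 < Real.sqrt (4*γ^2+21) := by
  nlinarith [sqrt_pos21 (γ := γ), sqrt_sq21 (γ := γ)]

lemma sqrt_ge2γ (hγ : 0 < γ) : 2*γ ≤ Real.sqrt (4*γ^2+21) := by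
  nlinarith [sqrt_pos21 (γ := γ), sqrt_sq21 (γ := γ)]

lemma sqrt_le (hγ : 0 < γ) : Real.sqrt (4*γ^2+21) ≤ 2*γ + 5 := by
  nlinarith [sqrt_pos21 (γ := γ), sqrt_sq21 (γ := γ)]

lemma rho_pos (hγ : 0 < γ) : 0 < rho γ := by
  unfold rho
  apply div_pos ?_ (by positivity)
  linarith [sqrt_gt3 (γ := γ)]

lemma rho_le (hγ : 0 < γ) : rho γ ≤ 1 + 1/γ := by
  unfold rho
  rw [div_le_iff₀ (by positivity), one_div]
  nlinarith [sqrt_le hγ, mul_inv_cancel₀ hγ.ne']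

lemma one_sub_rho (hγ : 0 < γ) : 1 - rho γ ≤ 3/(2*γ) := by
  unfold rho
  rw [sub_le_iff_le_add, div_add_div _ _ (by positivity : (2:ℝ)*γ ≠ 0) (by positivity : (2:ℝ)*γ ≠ 0)]
  rw [le_div_iff₀ (by positivity)]
  have := sqrt_ge2γ hγ
  nlinarith

/-- `rho` satisfies `ρ² + 3ρ/γ - 1 = 3/γ²` (root property, in `w = γ⁻¹` form). -/
lemma rho_root (hγ : 0 < γ) : rho γ ^ 2 + 3 * rho γ * γ⁻¹ - 1 = 3 * (γ⁻¹)^2 := by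
  have hS := sqrt_sq21 (γ := γ)
  unfold rho
  field_simp
  linear_combination hS

lemma hasDerivAt_rho (hγ : 0 < γ) : HasDerivAt rho (drho γ) γ := by
  have hS := sqrt_sq21 (γ := γ)
  have hSpos := sqrt_pos21 (γ := γ)
  have hinner : HasDerivAt (fun x : ℝ => 4*x^2+21) (8*γ) γ := by
    have h := ((hasDerivAt_pow 2 γ).const_mul 4).add_const 21
    refine h.congr_deriv ?_
    ring
  have hsqrt := (Real.hasDerivAt_sqrt (by positivity : (4*γ^2+21:ℝ) ≠ 0)).comp γ hinner
  have hnum : HasDerivAt (fun x : ℝ => Real.sqrt (4*x^2+21) - 3)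
      (1 / (2 * Real.sqrt (4*γ^2+21)) * (8*γ)) γ := hsqrt.sub_const 3
  have hden : HasDerivAt (fun x : ℝ => 2*x) 2 γ := by
    simpa using (hasDerivAt_id γ).const_mul 2
  have hd := hnum.div hden (by positivity : (2:ℝ)*γ ≠ 0)
  have heq : (1 / (2 * Real.sqrt (4*γ^2+21)) * (8*γ) * (2*γ)
      - (Real.sqrt (4*γ^2+21) - 3) * 2) / (2*γ)^2 = drho γ := by
    unfold drho
    field_simp
    linear_combination (-2) * hS
  rw [← heq]
  exact hd

lemma drho_le (hγ : 0 < γ) : drho γ ≤ 3/2 * (γ⁻¹)^2 := by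
  unfold drho
  have hSpos := sqrt_pos21 (γ := γ)
  have h21 : 0 < 21/(2*γ^2*Real.sqrt (4*γ^2+21)) := by positivity
  have : 3/(2*γ^2) = 3/2 * (γ⁻¹)^2 := by field_simp
  linarith

lemma rr_pos (hγ : 0 < γ) : 0 < rr γ := by
  unfold rr
  have := g_pos hγ 2
  have := g_pos hγ 4
  positivity

lemma rr_lt_one (hγ : 0 < γ) : rr γ < 1 := by
  unfold rr
  rw [div_lt_one (g_pos hγ 4)]
  have h3 := ibp3 hγ
  have h4 := h2_gt hγ
  linarith

lemma g4_rel (hγ : 0 < γ) : g 4 γ = 6 * g 2 γ + 3*γ^2 * g 0 γ := by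
  rw [ibp3 hγ, ibp4 hγ]
  ring

lemma ratio_eq (hγ : 0 < γ) : besselK 1 γ / besselK 2 γ = rr γ := by
  rw [besselK_one hγ, besselK_two hγ]
  unfold rr
  field_simp

/-- the Riccati equation for `rr`. -/
lemma hasDerivAt_rr (hγ : 0 < γ) :
    HasDerivAt rr (rr γ ^ 2 + 3 * rr γ * γ⁻¹ - 1) γ := by
  have hg2 := hasDerivAt_g2 hγ
  have hg4 := hasDerivAt_g4 hγ
  have h2p := g_pos hγ 2
  have h4p := g_pos hγ 4
  have h0p := g_pos hγ 0
  have hnum : HasDerivAt (fun x => 3 * x * g 2 x)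
      (3 * g 2 γ + (3 * γ) * (-γ * g 0 γ)) γ := by
    have hl : HasDerivAt (fun x : ℝ => 3*x) 3 γ := by
      simpa using (hasDerivAt_id γ).const_mul 3
    have := hl.mul hg2
    refine this.congr_deriv ?_
    try ring
  have hd := hnum.div hg4 h4p.ne'
  have hrel := g4_rel hγ
  have heq : ((3 * g 2 γ + (3 * γ) * (-γ * g 0 γ)) * g 4 γ
      - 3 * γ * g 2 γ * (-(3*γ) * g 2 γ)) / (g 4 γ)^2
      = rr γ ^ 2 + 3 * rr γ * γ⁻¹ - 1 := by
    unfold rr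
    field_simp
    linear_combination (g 4 γ) * hrel
  rw [← heq]
  exact hd

end Ratio

section Comparison

variable {γ : ℝ}

lemma key_neg {r ρ d C w : ℝ} (hw : 0 < w) (hroot : ρ^2 + 3*ρ*w - 1 = 3*w^2)
    (hd : d ≤ 3/2*w^2) (hC : r + ρ + 3*w ≤ C) (hneg : r - ρ < 0) :
    0 < (r^2 + 3*r*w - 1 - d) - C*(r - ρ) := by
  nlinarith [mul_nonneg (by linarith : (0:ℝ) ≤ ρ - r) (by linarith : (0:ℝ) ≤ C - (r + ρ + 3*w)),
    mul_pos hw hw]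

lemma key_nonneg {r ρ d w : ℝ} (hw : 0 < w) (hroot : ρ^2 + 3*ρ*w - 1 = 3*w^2)
    (hd : d ≤ 3/2*w^2) (hp : 0 ≤ r + ρ + 3*w) (hnn : 0 ≤ r - ρ) :
    0 ≤ (r^2 + 3*r*w - 1 - d) - 3/2*w^2 := by
  nlinarith [mul_nonneg hnn hp]

lemma hasDerivAt_h {x : ℝ} (hx : 0 < x) :
    HasDerivAt (fun y => rr y - rho y)
      (rr x^2 + 3*rr x*x⁻¹ - 1 - drho x) x :=
  (hasDerivAt_rr hx).sub (hasDerivAt_rho hx)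

lemma hasDerivAt_nu {C x : ℝ} (hx : 0 < x) :
    HasDerivAt (fun y => (rr y - rho y) * Real.exp (-C*y))
      ((rr x^2 + 3*rr x*x⁻¹ - 1 - drho x) * Real.exp (-C*x)
        + (rr x - rho x) * (Real.exp (-C*x) * (-C))) x := by
  have hlin : HasDerivAt (fun y : ℝ => -C*y) (-C) x := by
    simpa using (hasDerivAt_id x).const_mul (-C)
  exact (hasDerivAt_h hx).mul hlin.exp

/-- Step A : forward invariance of `rho ≤ rr` on `[γ₀, 2γ₀]`. -/
lemma h_nonneg {γ₀ : ℝ} (h0 : 0 < γ₀) (hge : rho γ₀ ≤ rr γ₀) :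
    ∀ x ∈ Icc γ₀ (2*γ₀), rho x ≤ rr x := by
  set C : ℝ := 2 + 4/γ₀ with hC
  by_contra hcon
  push_neg at hcon
  obtain ⟨x₁, hx₁mem, hx₁⟩ := hcon
  set ν : ℝ → ℝ := fun y => (rr y - rho y) * Real.exp (-C*y) with hν
  have hpos_of_mem : ∀ y ∈ Icc γ₀ x₁, 0 < y := fun y hy => lt_of_lt_of_le h0 hy.1
  have hx₁pos : 0 < x₁ := lt_of_lt_of_le h0 hx₁mem.1
  have hcont : ContinuousOn ν (Icc γ₀ x₁) := fun y hy =>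
    ((hasDerivAt_nu (hpos_of_mem y hy)).continuousAt).continuousWithinAt
  set S : Set ℝ := Icc γ₀ x₁ ∩ ν ⁻¹' (Ici 0) with hS
  have hSclosed : IsClosed S := hcont.preimage_isClosed_of_isClosed isClosed_Icc isClosed_Ici
  have hSsub : S ⊆ Icc γ₀ x₁ := inter_subset_left
  have hScompact : IsCompact S := isCompact_Icc.of_isClosed_subset hSclosed hSsub
  have hγ₀S : γ₀ ∈ S := by
    constructor
    · exact ⟨le_refl _, hx₁mem.1⟩
    · show 0 ≤ ν γ₀
      have : 0 ≤ rr γ₀ - rho γ₀ := by linarith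
      positivity
  have hSne : S.Nonempty := ⟨γ₀, hγ₀S⟩
  set s := sSup S with hs
  have hsS : s ∈ S := hScompact.sSup_mem hSne
  have hsle : s ≤ x₁ := (hSsub hsS).2
  have hsge : γ₀ ≤ s := (hSsub hsS).1
  have hνx₁ : ν x₁ < 0 := by
    have h1 : rr x₁ - rho x₁ < 0 := by linarith
    have h2 : 0 < Real.exp (-C*x₁) := Real.exp_pos _
    exact mul_neg_of_neg_of_pos h1 h2
  have hsne : s ≠ x₁ := by
    intro h
    have : (0:ℝ) ≤ ν x₁ := by rw [← h]; exact hsS.2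
    linarith
  have hslt : s < x₁ := lt_of_le_of_ne hsle hsne
  -- ν is strictly monotone on [s, x₁]
  have hmono : StrictMonoOn ν (Icc s x₁) := by
    apply strictMonoOn_of_deriv_pos (convex_Icc s x₁)
    · intro y hy
      exact ((hasDerivAt_nu (lt_of_lt_of_le h0 (le_trans hsge hy.1))).continuousAt).continuousWithinAt
    · intro y hy
      rw [interior_Icc] at hy
      have hy0 : 0 < y := lt_of_lt_of_le h0 (le_trans hsge hy.1.le)
      have hyγ₀ : γ₀ ≤ y := le_trans hsge hy.1.le
      have hymem : y ∈ Icc γ₀ x₁ := ⟨hyγ₀, hy.2.le⟩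
      -- y ∉ S since y > sSup S
      have hynotS : y ∉ S := by
        intro hyS
        have := le_csSup (hScompact.bddAbove) hyS
        rw [← hs] at this
        linarith [hy.1]
      have hνy : ν y < 0 := by
        by_contra hge'
        push_neg at hge'
        exact hynotS ⟨hymem, hge'⟩
      have hhy : rr y - rho y < 0 := by
        by_contra hge'
        push_neg at hge'
        have : 0 ≤ ν y := mul_nonneg (by linarith) (Real.exp_pos _).le
        linarith
      rw [(hasDerivAt_nu hy0).deriv]
      have hwpos : 0 < y⁻¹ := inv_pos.2 hy0
      have hCineq : rr y + rho y + 3*y⁻¹ ≤ C := by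
        have h1 : rr y < 1 := rr_lt_one hy0
        have h2 : rho y ≤ 1 + 1/y := rho_le hy0
        have h3 : 1/y ≤ 1/γ₀ := by
          apply one_div_le_one_div_of_le h0 hyγ₀
        have h4 : y⁻¹ ≤ 1/γ₀ := by rwa [← one_div]
        rw [hC]
        have h5 : (3:ℝ)*y⁻¹ ≤ 3*(1/γ₀) := by linarith
        have h6 : (4:ℝ)/γ₀ = 4*(1/γ₀) := by ring
        linarith
      have hkey := key_neg hwpos (rho_root hy0) (drho_le hy0) hCineq hhy
      have hexp : 0 < Real.exp (-C*y) := Real.exp_pos _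
      nlinarith [mul_pos hkey hexp]
  have := hmono (left_mem_Icc.2 hslt.le) (right_mem_Icc.2 hslt.le) hslt
  have h0s : (0:ℝ) ≤ ν s := hsS.2
  linarith

/-- main comparison : `rr γ < rho γ` for all `γ > 0`. -/
lemma rr_lt_rho (hγ : 0 < γ) : rr γ < rho γ := by
  by_contra hcon
  push_neg at hcon
  have hA := h_nonneg hγ hcon
  -- w = h + (3/2) x⁻¹ is monotone on [γ, 2γ]
  set W : ℝ → ℝ := fun y => rr y - rho y + 3/2 * y⁻¹ with hW
  have hWd : ∀ y, 0 < y →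
      HasDerivAt W ((rr y^2 + 3*rr y*y⁻¹ - 1 - drho y) + 3/2 * (-(y^2)⁻¹)) y := by
    intro y hy
    exact (hasDerivAt_h hy).add ((hasDerivAt_inv hy.ne').const_mul (3/2))
  have hmono : MonotoneOn W (Icc γ (2*γ)) := by
    apply monotoneOn_of_deriv_nonneg (convex_Icc _ _)
    · intro y hy
      have hy0 : 0 < y := lt_of_lt_of_le hγ hy.1
      exact ((hWd y hy0).continuousAt).continuousWithinAt
    · intro y hy
      rw [interior_Icc] at hy
      have hy0 : 0 < y := lt_trans hγ hy.1
      exact ((hWd y hy0).differentiableAt).differentiableWithinAt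
    · intro y hy
      rw [interior_Icc] at hy
      have hy0 : 0 < y := lt_trans hγ hy.1
      rw [(hWd y hy0).deriv]
      have hwpos : 0 < y⁻¹ := inv_pos.2 hy0
      have hnn : 0 ≤ rr y - rho y := by
        have := hA y ⟨hy.1.le, hy.2.le⟩
        linarith
      have hp : 0 ≤ rr y + rho y + 3*y⁻¹ := by
        have := rr_pos hy0
        have := rho_pos hy0
        positivity
      have hkey := key_nonneg hwpos (rho_root hy0) (drho_le hy0) hp hnn
      have hiq : ((y:ℝ)^2)⁻¹ = (y⁻¹)^2 := by
        rw [← inv_pow]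
      rw [hiq]
      linarith
  have hmem1 : γ ∈ Icc γ (2*γ) := ⟨le_refl _, by linarith⟩
  have hmem2 : 2*γ ∈ Icc γ (2*γ) := ⟨by linarith, le_refl _⟩
  have hWle := hmono hmem1 hmem2 (by linarith)
  -- unfold the consequences
  have h2γ : (0:ℝ) < 2*γ := by linarith
  have hup : rr (2*γ) - rho (2*γ) < 3/(2*(2*γ)) := by
    have h1 : rr (2*γ) < 1 := rr_lt_one h2γ
    have h2 := one_sub_rho h2γ
    linarith
  have hlow : rr γ - rho γ + 3/2 * γ⁻¹ ≤ rr (2*γ) - rho (2*γ) + 3/2 * (2*γ)⁻¹ := hWle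
  have e1 : (2*γ)⁻¹ = γ⁻¹/2 := by
    field_simp
  have e2 : 3/(2*(2*γ)) = 3/4*γ⁻¹ := by
    field_simp
    ring
  have hge0 : 0 ≤ rr γ - rho γ := by linarith
  rw [e1] at hlow
  rw [e2] at hup
  linarith

end Comparison

theorem besselK_ratio_speck_strain' (γ : ℝ) (hγ : 0 < γ) :
    γ ^ 2 * (besselK 1 γ / besselK 2 γ) ^ 2 + 3 * γ * (besselK 1 γ / besselK 2 γ)
      - γ ^ 2 - 3 < 0 := by
  rw [ratio_eq hγ]
  have hlt := rr_lt_rho hγ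
  have hrr := rr_pos hγ
  have hrho := rho_pos hγ
  have hroot2 : γ^2 * rho γ^2 + 3*γ*rho γ - γ^2 - 3 = 0 := by
    have hS := sqrt_sq21 (γ := γ)
    unfold rho
    field_simp
    linear_combination (Real.sq_sqrt (by positivity : (0:ℝ) ≤ γ^2*4+21))
  nlinarith [mul_pos (sub_pos.2 hlt) (add_pos hrr hrho), mul_pos hγ (sub_pos.2 hlt),
    mul_pos (mul_pos hγ hγ) (mul_pos (sub_pos.2 hlt) (add_pos hrr hrho))]

end SpeckStrain

theorem besselK_ratio_speck_strain (γ : ℝ) (hγ : 0 < γ) :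
    γ ^ 2 * (besselK 1 γ / besselK 2 γ) ^ 2 + 3 * γ * (besselK 1 γ / besselK 2 γ)
      - γ ^ 2 - 3 < 0 :=
  SpeckStrain.besselK_ratio_speck_strain' γ hγ
end

section
/- For every real γ > 0, the ratio of modified Bessel functions satisfies γ·(K_1(γ)/K_2(γ))³ + 4·(K_1(γ)/K_2(γ))² − γ·(K_1(γ)/K_2(γ)) − 1 < 0. -/
open MeasureTheory Real Set Filter Topology ENNReal

namespace BesselKAux

lemma aux_le {γ x p : ℝ} {n : ℕ} (hx1 : 1 ≤ x) (hγ0 : 0 ≤ γ) (hγx : γ ≤ x) (hp : 0 ≤ p)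
    (hpn : 2 * p ≤ n) : (x ^ 2 - γ ^ 2) ^ p ≤ x ^ n := by
  have hx0 : (0:ℝ) < x := lt_of_lt_of_le one_pos hx1
  have h0 : (0:ℝ) ≤ x ^ 2 - γ ^ 2 := by nlinarith
  have h1 : x ^ 2 - γ ^ 2 ≤ x ^ 2 := by nlinarith
  calc (x ^ 2 - γ ^ 2) ^ p ≤ (x ^ 2) ^ p := Real.rpow_le_rpow h0 h1 hp
    _ = x ^ (2 * p) := by
        rw [← Real.rpow_natCast x 2, ← Real.rpow_mul hx0.le]
        norm_num
    _ ≤ x ^ ((n:ℕ):ℝ) := Real.rpow_le_rpow_of_exponent_le hx1 hpn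
    _ = x ^ n := Real.rpow_natCast x n

lemma isBigO_aux {f : ℝ → ℝ} (hb : ∀ᶠ x in atTop, |f x| ≤ x ^ 3 * Real.exp (-x)) :
    f =O[atTop] fun x : ℝ => Real.exp (-(1 / 2) * x) := by
  have h2 : (fun x : ℝ => x ^ 3 * Real.exp (-x)) =o[atTop]
      fun x : ℝ => Real.exp (-(1 / 2) * x) := by
    have := Real.Gamma_integrand_isLittleO 3
    refine this.congr' ?_ (by rfl)
    filter_upwards [eventually_ge_atTop (0:ℝ)] with x hx
    rw [show (3:ℝ) = ((3:ℕ):ℝ) by norm_num, Real.rpow_natCast, mul_comm]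
  refine Asymptotics.IsBigO.trans ?_ h2.isBigO
  rw [Asymptotics.isBigO_iff]
  refine ⟨1, ?_⟩
  filter_upwards [hb, eventually_ge_atTop (0:ℝ)] with x hx hx0
  rw [one_mul, Real.norm_eq_abs, Real.norm_eq_abs,
    abs_of_nonneg (mul_nonneg (pow_nonneg hx0 3) (Real.exp_pos _).le)]
  exact hx

lemma integrableOn_of_bound {γ : ℝ} {f : ℝ → ℝ} (hc : ContinuousOn f (Ici γ))
    (hb : ∀ᶠ x in atTop, |f x| ≤ x ^ 3 * Real.exp (-x)) : IntegrableOn f (Ioi γ) :=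
  integrable_of_isBigO_exp_neg one_half_pos hc (isBigO_aux hb)

noncomputable def fI (γ : ℝ) : ℝ → ℝ := fun x => Real.exp (-x) * (x ^ 2 - γ ^ 2) ^ ((1:ℝ)/2)
noncomputable def fJ (γ : ℝ) : ℝ → ℝ := fun x => Real.exp (-x) * (x ^ 2 - γ ^ 2) ^ ((3:ℝ)/2)
noncomputable def fM (γ : ℝ) : ℝ → ℝ := fun x => x * (Real.exp (-x) * (x ^ 2 - γ ^ 2) ^ ((1:ℝ)/2))
noncomputable def fD (γ : ℝ) : ℝ → ℝ :=
  fun x => Real.exp (-x) * ((x - γ) ^ ((3:ℝ)/2) * (x + γ) ^ (-((1:ℝ)/2)))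

variable {γ : ℝ}

lemma contI (hγ : 0 < γ) : ContinuousOn (fI γ) (Ici γ) :=
  (Real.continuous_exp.comp continuous_neg).continuousOn.mul
    ((((continuous_pow 2).sub continuous_const).continuousOn).rpow_const
      (fun x _ => Or.inr (by norm_num)))

lemma contJ (hγ : 0 < γ) : ContinuousOn (fJ γ) (Ici γ) :=
  (Real.continuous_exp.comp continuous_neg).continuousOn.mul
    ((((continuous_pow 2).sub continuous_const).continuousOn).rpow_const
      (fun x _ => Or.inr (by norm_num)))

lemma contM (hγ : 0 < γ) : ContinuousOn (fM γ) (Ici γ) :=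
  continuous_id.continuousOn.mul (contI hγ)

lemma contD (hγ : 0 < γ) : ContinuousOn (fD γ) (Ici γ) := by
  refine (Real.continuous_exp.comp continuous_neg).continuousOn.mul (ContinuousOn.mul ?_ ?_)
  · exact ((continuous_id.sub continuous_const).continuousOn).rpow_const
      (fun x _ => Or.inr (by norm_num))
  · refine ((continuous_id.add continuous_const).continuousOn).rpow_const (fun x hx => Or.inl ?_)
    have hx' := mem_Ici.mp hx
    have : (0:ℝ) < id x + γ := by simp only [id_eq]; linarith
    exact ne_of_gt this

lemma boundI (hγ : 0 < γ) : ∀ᶠ x in atTop, |fI γ x| ≤ x ^ 3 * Real.exp (-x) := by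
  filter_upwards [eventually_ge_atTop (1:ℝ), eventually_ge_atTop γ] with x hx1 hxγ
  have h0 : (0:ℝ) ≤ x ^ 2 - γ ^ 2 := by nlinarith
  simp only [fI]
  rw [abs_of_nonneg (mul_nonneg (Real.exp_pos _).le (Real.rpow_nonneg h0 _))]
  calc Real.exp (-x) * (x ^ 2 - γ ^ 2) ^ ((1:ℝ)/2) ≤ Real.exp (-x) * x ^ 3 :=
        mul_le_mul_of_nonneg_left
          (aux_le hx1 hγ.le hxγ (by norm_num) (by norm_num)) (Real.exp_pos _).le
    _ = x ^ 3 * Real.exp (-x) := mul_comm _ _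

lemma boundJ (hγ : 0 < γ) : ∀ᶠ x in atTop, |fJ γ x| ≤ x ^ 3 * Real.exp (-x) := by
  filter_upwards [eventually_ge_atTop (1:ℝ), eventually_ge_atTop γ] with x hx1 hxγ
  have h0 : (0:ℝ) ≤ x ^ 2 - γ ^ 2 := by nlinarith
  simp only [fJ]
  rw [abs_of_nonneg (mul_nonneg (Real.exp_pos _).le (Real.rpow_nonneg h0 _))]
  calc Real.exp (-x) * (x ^ 2 - γ ^ 2) ^ ((3:ℝ)/2) ≤ Real.exp (-x) * x ^ 3 :=
        mul_le_mul_of_nonneg_left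
          (aux_le hx1 hγ.le hxγ (by norm_num) (by norm_num)) (Real.exp_pos _).le
    _ = x ^ 3 * Real.exp (-x) := mul_comm _ _

lemma boundM (hγ : 0 < γ) : ∀ᶠ x in atTop, |fM γ x| ≤ x ^ 3 * Real.exp (-x) := by
  filter_upwards [eventually_ge_atTop (1:ℝ), eventually_ge_atTop γ] with x hx1 hxγ
  have hx0 : (0:ℝ) < x := lt_of_lt_of_le one_pos hx1
  have h0 : (0:ℝ) ≤ x ^ 2 - γ ^ 2 := by nlinarith
  simp only [fM]
  rw [abs_of_nonneg (mul_nonneg hx0.le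
    (mul_nonneg (Real.exp_pos _).le (Real.rpow_nonneg h0 _)))]
  have h2 : (x ^ 2 - γ ^ 2) ^ ((1:ℝ)/2) ≤ x ^ 2 :=
    aux_le hx1 hγ.le hxγ (by norm_num) (by norm_num)
  calc x * (Real.exp (-x) * (x ^ 2 - γ ^ 2) ^ ((1:ℝ)/2)) ≤ x * (Real.exp (-x) * x ^ 2) := by
        refine mul_le_mul_of_nonneg_left (mul_le_mul_of_nonneg_left h2 (Real.exp_pos _).le) hx0.le
    _ = x ^ 3 * Real.exp (-x) := by ring

lemma boundD (hγ : 0 < γ) : ∀ᶠ x in atTop, |fD γ x| ≤ x ^ 3 * Real.exp (-x) := by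
  filter_upwards [eventually_ge_atTop (1:ℝ), eventually_ge_atTop γ] with x hx1 hxγ
  have hx0 : (0:ℝ) < x := lt_of_lt_of_le one_pos hx1
  have h1 : (0:ℝ) ≤ x - γ := by linarith
  have h2 : (0:ℝ) < x + γ := by linarith
  simp only [fD]
  rw [abs_of_nonneg (mul_nonneg (Real.exp_pos _).le
    (mul_nonneg (Real.rpow_nonneg h1 _) (Real.rpow_nonneg h2.le _)))]
  have hA : (x - γ) ^ ((3:ℝ)/2) ≤ x ^ ((3:ℝ)/2) := Real.rpow_le_rpow h1 (by linarith) (by norm_num)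
  have hA2 : x ^ ((3:ℝ)/2) ≤ x ^ ((2:ℕ):ℝ) :=
    Real.rpow_le_rpow_of_exponent_le hx1 (by norm_num)
  have hB : (x + γ) ^ (-((1:ℝ)/2)) ≤ 1 :=
    Real.rpow_le_one_of_one_le_of_nonpos (by linarith) (by norm_num)
  have hprod : (x - γ) ^ ((3:ℝ)/2) * (x + γ) ^ (-((1:ℝ)/2)) ≤ x ^ 2 := by
    calc (x - γ) ^ ((3:ℝ)/2) * (x + γ) ^ (-((1:ℝ)/2)) ≤ x ^ ((2:ℕ):ℝ) * 1 :=
          mul_le_mul (hA.trans hA2) hB (Real.rpow_nonneg h2.le _)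
            (Real.rpow_nonneg hx0.le _)
      _ = x ^ 2 := by rw [mul_one, Real.rpow_natCast]
  calc Real.exp (-x) * ((x - γ) ^ ((3:ℝ)/2) * (x + γ) ^ (-((1:ℝ)/2)))
        ≤ Real.exp (-x) * x ^ 2 := mul_le_mul_of_nonneg_left hprod (Real.exp_pos _).le
    _ ≤ Real.exp (-x) * x ^ 3 := by
        refine mul_le_mul_of_nonneg_left ?_ (Real.exp_pos _).le
        calc x ^ 2 = x ^ 2 * 1 := (mul_one _).symm
          _ ≤ x ^ 2 * x := by nlinarith
          _ = x ^ 3 := by ring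
    _ = x ^ 3 * Real.exp (-x) := mul_comm _ _

lemma intI (hγ : 0 < γ) : IntegrableOn (fI γ) (Ioi γ) :=
  integrableOn_of_bound (contI hγ) (boundI hγ)
lemma intJ (hγ : 0 < γ) : IntegrableOn (fJ γ) (Ioi γ) :=
  integrableOn_of_bound (contJ hγ) (boundJ hγ)
lemma intM (hγ : 0 < γ) : IntegrableOn (fM γ) (Ioi γ) :=
  integrableOn_of_bound (contM hγ) (boundM hγ)
lemma intD (hγ : 0 < γ) : IntegrableOn (fD γ) (Ioi γ) :=
  integrableOn_of_bound (contD hγ) (boundD hγ)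

end BesselKAux

namespace BesselKAux

variable {γ : ℝ}

lemma J_eq_3M (hγ : 0 < γ) :
    (∫ x in Ioi γ, fJ γ x) = 3 * ∫ x in Ioi γ, fM γ x := by
  have hint : IntegrableOn (fun x => fJ γ x - 3 * fM γ x) (Ioi γ) :=
    (intJ hγ).sub ((intM hγ).const_mul 3)
  have hderiv : ∀ x ∈ Ioi γ,
      HasDerivAt (fun y : ℝ => -(Real.exp (-y) * (y ^ 2 - γ ^ 2) ^ ((3:ℝ)/2)))
        (fJ γ x - 3 * fM γ x) x := by
    intro x hx
    have hx' : γ < x := hx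
    have hbase : (0:ℝ) < x ^ 2 - γ ^ 2 := by nlinarith
    have h1 : HasDerivAt (fun y : ℝ => y ^ 2 - γ ^ 2) (2 * x) x := by
      simpa using (hasDerivAt_pow 2 x).sub_const (γ ^ 2)
    have h2 := h1.rpow_const (p := (3:ℝ)/2) (Or.inl hbase.ne')
    have h3 : HasDerivAt (fun y : ℝ => Real.exp (-y)) (-Real.exp (-x)) x := by
      simpa using (hasDerivAt_neg x).exp
    have h4 := (h3.mul h2).neg
    refine h4.congr_deriv ?_
    simp only [fJ, fM]
    rw [show (3:ℝ)/2 - 1 = (1:ℝ)/2 by norm_num]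
    ring
  have hcont : ContinuousWithinAt
      (fun y : ℝ => -(Real.exp (-y) * (y ^ 2 - γ ^ 2) ^ ((3:ℝ)/2))) (Ici γ) γ := by
    have := (contJ (γ := γ) hγ).neg
    simpa [fJ, Pi.neg_def] using this γ self_mem_Ici
  have htend : Tendsto (fun y : ℝ => -(Real.exp (-y) * (y ^ 2 - γ ^ 2) ^ ((3:ℝ)/2)))
      atTop (𝓝 0) := by
    refine squeeze_zero_norm' ?_ (tendsto_pow_mul_exp_neg_atTop_nhds_zero 3)
    filter_upwards [boundJ hγ] with x hx
    rw [norm_neg, Real.norm_eq_abs]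
    simpa [fJ] using hx
  have h0 := integral_Ioi_of_hasDerivAt_of_tendsto hcont hderiv hint htend
  have hint1 : Integrable (fun x => (3:ℝ) * fM γ x) (volume.restrict (Ioi γ)) :=
    (intM hγ).const_mul 3
  rw [integral_sub (intJ hγ) hint1, integral_const_mul] at h0
  have hGγ : Real.exp (-γ) * (γ ^ 2 - γ ^ 2) ^ ((3:ℝ)/2) = 0 := by
    rw [sub_self, Real.zero_rpow (by norm_num)]; ring
  norm_num [hGγ] at h0
  linarith

lemma M_eq (hγ : 0 < γ) :
    (∫ x in Ioi γ, fM γ x) =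
      (γ + 3/2) * (∫ x in Ioi γ, fI γ x) + (1/2) * ∫ x in Ioi γ, fD γ x := by
  have hint : IntegrableOn
      (fun x => fM γ x - (γ + 3/2) * fI γ x - (1/2) * fD γ x) (Ioi γ) :=
    ((intM hγ).sub ((intI hγ).const_mul _)).sub ((intD hγ).const_mul _)
  have hderiv : ∀ x ∈ Ioi γ,
      HasDerivAt (fun y : ℝ => -(Real.exp (-y) * ((y - γ) ^ ((3:ℝ)/2) * (y + γ) ^ ((1:ℝ)/2))))
        (fM γ x - (γ + 3/2) * fI γ x - (1/2) * fD γ x) x := by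
    intro x hx
    have hx' : γ < x := hx
    have hm : (0:ℝ) < x - γ := by linarith
    have hp : (0:ℝ) < x + γ := by linarith
    have hu := ((hasDerivAt_id x).sub_const γ).rpow_const (p := (3:ℝ)/2) (Or.inl hm.ne')
    have hv := ((hasDerivAt_id x).add_const γ).rpow_const (p := (1:ℝ)/2) (Or.inl hp.ne')
    have h3 : HasDerivAt (fun y : ℝ => Real.exp (-y)) (-Real.exp (-x)) x := by
      simpa using (hasDerivAt_neg x).exp
    have h4 := (h3.mul (hu.mul hv)).neg
    refine h4.congr_deriv ?_
    simp only [id_eq, Pi.mul_apply]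
    have e32 : (x - γ) ^ ((3:ℝ)/2) = (x - γ) * (x - γ) ^ ((1:ℝ)/2) := by
      rw [show ((3:ℝ)/2) = 1 + (1:ℝ)/2 by norm_num, Real.rpow_add hm, Real.rpow_one]
    have e12 : (x ^ 2 - γ ^ 2) ^ ((1:ℝ)/2) = (x - γ) ^ ((1:ℝ)/2) * (x + γ) ^ ((1:ℝ)/2) := by
      rw [← Real.mul_rpow hm.le hp.le]
      congr 1
      ring
    simp only [fM, fI, fD]
    rw [show (3:ℝ)/2 - 1 = (1:ℝ)/2 by norm_num, show (1:ℝ)/2 - 1 = -((1:ℝ)/2) by norm_num,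
      e32, e12]
    ring
  have hcont : ContinuousWithinAt
      (fun y : ℝ => -(Real.exp (-y) * ((y - γ) ^ ((3:ℝ)/2) * (y + γ) ^ ((1:ℝ)/2))))
      (Ici γ) γ := by
    have hc : ContinuousOn
        (fun y : ℝ => -(Real.exp (-y) * ((y - γ) ^ ((3:ℝ)/2) * (y + γ) ^ ((1:ℝ)/2))))
        (Ici γ) := by
      refine ContinuousOn.neg ?_
      refine (Real.continuous_exp.comp continuous_neg).continuousOn.mul (ContinuousOn.mul ?_ ?_)
      · exact ((continuous_id.sub continuous_const).continuousOn).rpow_const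
          (fun x _ => Or.inr (by norm_num))
      · exact ((continuous_id.add continuous_const).continuousOn).rpow_const
          (fun x _ => Or.inr (by norm_num))
    exact hc γ self_mem_Ici
  have htend : Tendsto
      (fun y : ℝ => -(Real.exp (-y) * ((y - γ) ^ ((3:ℝ)/2) * (y + γ) ^ ((1:ℝ)/2))))
      atTop (𝓝 0) := by
    refine squeeze_zero_norm' ?_ (tendsto_pow_mul_exp_neg_atTop_nhds_zero 3)
    filter_upwards [eventually_ge_atTop (1:ℝ), eventually_ge_atTop (γ + 1),
      eventually_ge_atTop (2:ℝ)] with x hx1 hxγ1 hx2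
    have hxγ : γ ≤ x := by linarith
    have hx0 : (0:ℝ) < x := by linarith
    have h1 : (0:ℝ) ≤ x - γ := by linarith
    have h2 : (0:ℝ) < x + γ := by linarith
    rw [norm_neg, Real.norm_eq_abs,
      abs_of_nonneg (mul_nonneg (Real.exp_pos _).le
        (mul_nonneg (Real.rpow_nonneg h1 _) (Real.rpow_nonneg h2.le _)))]
    have hA : (x - γ) ^ ((3:ℝ)/2) ≤ x ^ ((2:ℕ):ℝ) :=
      (Real.rpow_le_rpow h1 (by linarith) (by norm_num)).trans
        (Real.rpow_le_rpow_of_exponent_le hx1 (by norm_num))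
    have hB : (x + γ) ^ ((1:ℝ)/2) ≤ x ^ ((1:ℕ):ℝ) := by
      have hle : x + γ ≤ x ^ 2 := by nlinarith
      calc (x + γ) ^ ((1:ℝ)/2) ≤ (x ^ 2) ^ ((1:ℝ)/2) :=
            Real.rpow_le_rpow h2.le hle (by norm_num)
        _ = x ^ ((1:ℕ):ℝ) := by
            rw [← Real.rpow_natCast x 2, ← Real.rpow_mul hx0.le]
            norm_num
    have hprod : (x - γ) ^ ((3:ℝ)/2) * (x + γ) ^ ((1:ℝ)/2) ≤ x ^ 3 := by
      calc (x - γ) ^ ((3:ℝ)/2) * (x + γ) ^ ((1:ℝ)/2) ≤ x ^ ((2:ℕ):ℝ) * x ^ ((1:ℕ):ℝ) :=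
            mul_le_mul hA hB (Real.rpow_nonneg h2.le _) (Real.rpow_nonneg hx0.le _)
        _ = x ^ 3 := by
            rw [← Real.rpow_add hx0]
            norm_num
    calc Real.exp (-x) * ((x - γ) ^ ((3:ℝ)/2) * (x + γ) ^ ((1:ℝ)/2))
          ≤ Real.exp (-x) * x ^ 3 := mul_le_mul_of_nonneg_left hprod (Real.exp_pos _).le
      _ = x ^ 3 * Real.exp (-x) := mul_comm _ _
  have h0 := integral_Ioi_of_hasDerivAt_of_tendsto hcont hderiv hint htend
  have hint1 : Integrable (fun x => (γ + 3/2) * fI γ x) (volume.restrict (Ioi γ)) :=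
    (intI hγ).const_mul _
  have hint2 : Integrable (fun x => (1/2 : ℝ) * fD γ x) (volume.restrict (Ioi γ)) :=
    (intD hγ).const_mul _
  have hint3 : Integrable (fun x => fM γ x - (γ + 3/2) * fI γ x) (volume.restrict (Ioi γ)) :=
    (intM hγ).sub hint1
  rw [integral_sub hint3 hint2, integral_sub (intM hγ) hint1, integral_const_mul,
    integral_const_mul] at h0
  have hFγ : (γ - γ) ^ ((3:ℝ)/2) = 0 := by
    rw [sub_self, Real.zero_rpow (by norm_num)]
  norm_num [hFγ] at h0
  linarith

lemma Ipos (hγ : 0 < γ) : 0 < ∫ x in Ioi γ, fI γ x := by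
  have hnn : 0 ≤ᵐ[volume.restrict (Ioi γ)] fI γ := by
    filter_upwards [ae_restrict_mem measurableSet_Ioi] with x hx
    have hx' : γ < x := hx
    have hb : (0:ℝ) ≤ x ^ 2 - γ ^ 2 := by nlinarith
    exact mul_nonneg (Real.exp_pos _).le (Real.rpow_nonneg hb _)
  rw [setIntegral_pos_iff_support_of_nonneg_ae hnn (intI hγ)]
  have hsub : Ioi γ ⊆ Function.support (fI γ) ∩ Ioi γ := by
    intro x hx
    have hx' : γ < x := hx
    have hb : (0:ℝ) < x ^ 2 - γ ^ 2 := by nlinarith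
    exact ⟨ne_of_gt (mul_pos (Real.exp_pos _) (Real.rpow_pos_of_pos hb _)), hx⟩
  calc (0:ℝ≥0∞) < volume (Ioi γ) := by rw [Real.volume_Ioi]; exact ENNReal.zero_lt_top
    _ ≤ _ := measure_mono hsub

lemma Dnonneg (hγ : 0 < γ) : 0 ≤ ∫ x in Ioi γ, fD γ x := by
  refine setIntegral_nonneg measurableSet_Ioi (fun x hx => ?_)
  have hx' : γ < x := hx
  exact mul_nonneg (Real.exp_pos _).le
    (mul_nonneg (Real.rpow_nonneg (by linarith) _) (Real.rpow_nonneg (by linarith) _))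

end BesselKAux

open BesselKAux in
theorem besselK_ratio_cubic_neg (γ : ℝ) (hγ : 0 < γ) :
    γ * (besselK 1 γ / besselK 2 γ) ^ 3 + 4 * (besselK 1 γ / besselK 2 γ) ^ 2
      - γ * (besselK 1 γ / besselK 2 γ) - 1 < 0 := by
  have hI := Ipos hγ
  have hD := Dnonneg hγ
  have hMeq := M_eq hγ
  have hJeq := J_eq_3M hγ
  set II : ℝ := ∫ x in Ioi γ, fI γ x with hIdef
  set DD : ℝ := ∫ x in Ioi γ, fD γ x with hDdef
  set MM : ℝ := ∫ x in Ioi γ, fM γ x with hMdef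
  set JJ : ℝ := ∫ x in Ioi γ, fJ γ x with hJdef
  have hMpos : 0 < MM := by rw [hMeq]; nlinarith
  have hJpos : 0 < JJ := by rw [hJeq]; linarith
  have hK1 : besselK 1 γ = γ⁻¹ * II := by
    rw [hIdef]; simp only [besselK, fI]; norm_num [Real.rpow_neg_one]
  have hK2 : besselK 2 γ = (3 * γ ^ 2)⁻¹ * JJ := by
    rw [hJdef]; simp only [besselK, fJ]
    rw [Real.rpow_neg hγ.le, Real.rpow_natCast]
    norm_num [Nat.factorial]
    ring_nf
    exact Or.inl trivial
  have hr : besselK 1 γ / besselK 2 γ = 3 * γ * II / JJ := by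
    rw [hK1, hK2]
    field_simp
  rw [hr]
  have hkey : 27*γ^4*II^3 + 36*γ^2*II^2*JJ - 3*γ^2*II*JJ^2 - JJ^3 < 0 := by
    have hJ' : JJ = 3 * ((γ + 3/2) * II + (1/2) * DD) := by rw [hJeq, hMeq]
    rw [hJ']
    nlinarith [mul_pos (mul_pos hI hI) hI, mul_pos hγ (mul_pos (mul_pos hI hI) hI),
      mul_pos (mul_pos hγ hγ) (mul_pos (mul_pos hI hI) hI),
      mul_nonneg (mul_nonneg hD hD) hD,
      mul_nonneg (mul_nonneg hI.le hD) hD,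
      mul_nonneg (mul_nonneg hI.le hI.le) hD,
      mul_nonneg (mul_nonneg hγ.le (mul_nonneg hI.le hD)) hD,
      mul_nonneg (mul_nonneg hγ.le (mul_nonneg hI.le hI.le)) hD,
      mul_nonneg (mul_nonneg (mul_nonneg hγ.le hγ.le) (mul_nonneg hI.le hD)) hD,
      mul_nonneg (mul_nonneg (mul_nonneg hγ.le hγ.le) (mul_nonneg hI.le hI.le)) hD,
      mul_nonneg (mul_nonneg (mul_nonneg (mul_nonneg hγ.le hγ.le) hγ.le)
        (mul_nonneg hI.le hI.le)) hD]
  have hfin : γ * (3 * γ * II / JJ) ^ 3 + 4 * (3 * γ * II / JJ) ^ 2 - γ * (3 * γ * II / JJ) - 1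
      = (27*γ^4*II^3 + 36*γ^2*II^2*JJ - 3*γ^2*II*JJ^2 - JJ^3) / JJ^3 := by
    field_simp
    ring
  rw [hfin]
  exact div_neg_of_neg_of_pos hkey (pow_pos hJpos 3)
end

section
/- For every real γ > 0, the ratio of modified Bessel functions satisfies γ²·(K_0(γ)/K_1(γ))³ + 2γ·(K_0(γ)/K_1(γ))² − (γ² + 2)·(K_0(γ)/K_1(γ)) − γ < 0. -/
open MeasureTheory Real

namespace BesselKAux

open Set Filter Topology

/-- The basic integrand `t^k e^{-t} (t²-γ²)^e`. -/
noncomputable def bk (γ : ℝ) (k : ℕ) (e : ℝ) : ℝ → ℝ :=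
  fun t => t ^ k * Real.exp (-t) * (t ^ 2 - γ ^ 2) ^ e

variable {γ : ℝ}

lemma bk_pos (hγ : 0 < γ) (k : ℕ) (e : ℝ) {t : ℝ} (ht : t ∈ Ioi γ) :
    0 < bk γ k e t := by
  have ht' : γ < t := ht
  have h0 : 0 < t := hγ.trans ht'
  have hy : 0 < t ^ 2 - γ ^ 2 := by nlinarith
  exact mul_pos (mul_pos (pow_pos h0 k) (exp_pos _)) (rpow_pos_of_pos hy e)

lemma bk_contOn (hγ : 0 < γ) (k : ℕ) (e : ℝ) : ContinuousOn (bk γ k e) (Ioi γ) := by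
  apply ContinuousOn.mul
  · exact ((continuous_pow k).mul (Real.continuous_exp.comp continuous_neg)).continuousOn
  · apply ContinuousOn.rpow_const
    · exact ((continuous_pow 2).sub continuous_const).continuousOn
    · intro t ht
      have ht' : γ < t := ht
      have hy : 0 < t ^ 2 - γ ^ 2 := by nlinarith
      exact Or.inl hy.ne'

lemma bk_integrableOn (hγ : 0 < γ) (k : ℕ) {e : ℝ} (he : -1 < e) :
    IntegrableOn (bk γ k e) (Ioi γ) := by
  have hcont := bk_contOn hγ k e
  have hsplit : Ioc γ (γ + 1) ∪ Ioi (γ + 1) = Ioi γ := Ioc_union_Ioi_eq_Ioi (by linarith)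
  rw [← hsplit]
  apply IntegrableOn.union
  · -- near γ : compare with `(t-γ)^e`
    have hbase : IntegrableOn (fun t => (t - γ) ^ e) (Ioc γ (γ + 1)) := by
      have h0 : IntervalIntegrable (fun x : ℝ => x ^ e) volume 0 1 :=
        intervalIntegral.intervalIntegrable_rpow' he
      have h1 := h0.comp_sub_right γ
      rw [intervalIntegrable_iff_integrableOn_Ioc_of_le (by linarith)] at h1
      have heq : Ioc γ (γ + 1) = Ioc (0 + γ) (1 + γ) := by
        rw [zero_add, add_comm 1 γ]
      rw [heq]
      exact h1
    set M : ℝ := (γ + 1) ^ k * ((2 * γ) ^ e + (2 * γ + 1) ^ e) with hM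
    refine Integrable.mono (hbase.const_mul M)
      ((hcont.mono Ioc_subset_Ioi_self).aestronglyMeasurable measurableSet_Ioc) ?_
    rw [ae_restrict_iff' measurableSet_Ioc]
    refine ae_of_all _ fun t ht => ?_
    obtain ⟨ht1, ht2⟩ := ht
    have htpos : 0 < t := hγ.trans ht1
    have hy : 0 < t ^ 2 - γ ^ 2 := by nlinarith
    have hfac : t ^ 2 - γ ^ 2 = (t - γ) * (t + γ) := by ring
    have htγ : (0:ℝ) ≤ t - γ := by linarith
    have h2γ : (0:ℝ) < 2 * γ := by linarith
    have e1 : t ^ k ≤ (γ + 1) ^ k := pow_le_pow_left₀ htpos.le ht2 k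
    have e2 : Real.exp (-t) ≤ 1 := Real.exp_le_one_iff.mpr (by linarith)
    have e3 : (t + γ) ^ e ≤ (2 * γ) ^ e + (2 * γ + 1) ^ e := by
      rcases le_or_gt e 0 with h | h
      · have h1 : (t + γ) ^ e ≤ (2 * γ) ^ e :=
          Real.rpow_le_rpow_of_nonpos h2γ (by linarith) h
        have h2 : (0:ℝ) ≤ (2 * γ + 1) ^ e := Real.rpow_nonneg (by linarith) e
        linarith
      · have h1 : (t + γ) ^ e ≤ (2 * γ + 1) ^ e :=
          Real.rpow_le_rpow (by linarith) (by linarith) h.le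
        have h2 : (0:ℝ) ≤ (2 * γ) ^ e := Real.rpow_nonneg h2γ.le e
        linarith
    have hbk : 0 < bk γ k e t := bk_pos hγ k e ht1
    rw [Real.norm_eq_abs, Real.norm_eq_abs, abs_of_nonneg hbk.le]
    have hne : (0:ℝ) ≤ (t - γ) ^ e := Real.rpow_nonneg htγ e
    have hne' : (0:ℝ) ≤ (t + γ) ^ e := Real.rpow_nonneg (by linarith) e
    calc bk γ k e t = (t ^ k * Real.exp (-t) * (t + γ) ^ e) * (t - γ) ^ e := by
          rw [bk, hfac, Real.mul_rpow htγ (by linarith)]; ring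
      _ ≤ ((γ + 1) ^ k * 1 * ((2 * γ) ^ e + (2 * γ + 1) ^ e)) * (t - γ) ^ e := by
          apply mul_le_mul_of_nonneg_right _ hne
          apply mul_le_mul _ e3 hne' (by positivity)
          exact mul_le_mul e1 e2 (Real.exp_pos _).le (pow_nonneg (by linarith) k)
      _ = M * (t - γ) ^ e := by rw [hM]; ring
      _ ≤ |M * (t - γ) ^ e| := le_abs_self _
  · -- far away : compare with Gamma-type integrand
    have hmeas : AEStronglyMeasurable (bk γ k e) (volume.restrict (Ioi (γ + 1))) :=
      (hcont.mono (Ioi_subset_Ioi (by linarith))).aestronglyMeasurable measurableSet_Ioi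
    rcases le_or_gt e 0 with hle | hlt
    · -- e ≤ 0 : bound by t^k e^{-t}
      have hg : IntegrableOn (fun x : ℝ => Real.exp (-x) * x ^ ((k:ℝ) + 1 - 1)) (Ioi (γ + 1)) :=
        (Real.GammaIntegral_convergent (by positivity)).mono_set
          (Ioi_subset_Ioi (by linarith))
      refine Integrable.mono hg hmeas ?_
      rw [ae_restrict_iff' measurableSet_Ioi]
      refine ae_of_all _ fun t ht => ?_
      have ht1 : γ + 1 < t := ht
      have htpos : 0 < t := by linarith
      have hy1 : 1 ≤ t ^ 2 - γ ^ 2 := by nlinarith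
      have hbk : 0 < bk γ k e t := bk_pos hγ k e (by simp only [mem_Ioi]; linarith)
      rw [Real.norm_eq_abs, Real.norm_eq_abs, abs_of_nonneg hbk.le]
      have hrp : (t ^ 2 - γ ^ 2) ^ e ≤ 1 := Real.rpow_le_one_of_one_le_of_nonpos hy1 hle
      calc bk γ k e t ≤ t ^ k * Real.exp (-t) * 1 := by
            apply mul_le_mul_of_nonneg_left hrp
            exact mul_nonneg (pow_nonneg htpos.le k) (Real.exp_pos _).le
        _ = Real.exp (-t) * t ^ ((k:ℝ) + 1 - 1) := by
            rw [add_sub_cancel_right, Real.rpow_natCast]; ring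
        _ ≤ |Real.exp (-t) * t ^ ((k:ℝ) + 1 - 1)| := le_abs_self _
    · -- 0 < e : bound by t^(k+2e) e^{-t}
      have hg : IntegrableOn (fun x : ℝ => Real.exp (-x) * x ^ ((k:ℝ) + 2 * e + 1 - 1))
          (Ioi (γ + 1)) :=
        (Real.GammaIntegral_convergent (by positivity)).mono_set
          (Ioi_subset_Ioi (by linarith))
      refine Integrable.mono hg hmeas ?_
      rw [ae_restrict_iff' measurableSet_Ioi]
      refine ae_of_all _ fun t ht => ?_
      have ht1 : γ + 1 < t := ht
      have htpos : 0 < t := by linarith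
      have hy : 0 < t ^ 2 - γ ^ 2 := by nlinarith
      have hbk : 0 < bk γ k e t := bk_pos hγ k e (by simp only [mem_Ioi]; linarith)
      rw [Real.norm_eq_abs, Real.norm_eq_abs, abs_of_nonneg hbk.le]
      have hrp : (t ^ 2 - γ ^ 2) ^ e ≤ (t ^ 2) ^ e :=
        Real.rpow_le_rpow hy.le (by nlinarith) hlt.le
      have ht2e : (t ^ 2 : ℝ) ^ e = t ^ (2 * e : ℝ) := by
        rw [← Real.rpow_natCast t 2, ← Real.rpow_mul htpos.le]
        norm_num
      calc bk γ k e t ≤ t ^ k * Real.exp (-t) * (t ^ 2) ^ e := by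
            apply mul_le_mul_of_nonneg_left hrp
            exact mul_nonneg (pow_nonneg htpos.le k) (Real.exp_pos _).le
        _ = Real.exp (-t) * t ^ ((k:ℝ) + 2 * e + 1 - 1) := by
            rw [add_sub_cancel_right, ht2e, ← Real.rpow_natCast t k,
              Real.rpow_add htpos]
            ring
        _ ≤ |Real.exp (-t) * t ^ ((k:ℝ) + 2 * e + 1 - 1)| := le_abs_self _

lemma bk_integral_pos (hγ : 0 < γ) (k : ℕ) {e : ℝ} (he : -1 < e) :
    0 < ∫ t in Ioi γ, bk γ k e t := by
  have h0 : 0 ≤ᵐ[volume.restrict (Ioi γ)] bk γ k e := by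
    filter_upwards [ae_restrict_mem measurableSet_Ioi] with t ht
    exact (bk_pos hγ k e ht).le
  rw [setIntegral_pos_iff_support_of_nonneg_ae h0 (bk_integrableOn hγ k he)]
  have hsub : Ioi γ ⊆ Function.support (bk γ k e) ∩ Ioi γ :=
    fun t ht => ⟨(bk_pos hγ k e ht).ne', ht⟩
  refine lt_of_lt_of_le ?_ (measure_mono hsub)
  rw [Real.volume_Ioi]
  exact ENNReal.zero_lt_top

lemma ibp1 (hγ : 0 < γ) :
    ∫ t in Ioi γ, bk γ 0 (1/2) t = ∫ t in Ioi γ, bk γ 1 (-(1/2)) t := by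
  set F : ℝ → ℝ := fun t => -(Real.exp (-t) * Real.sqrt (t ^ 2 - γ ^ 2)) with hF
  have hderiv : ∀ x ∈ Ioi γ, HasDerivAt F (bk γ 0 (1/2) x - bk γ 1 (-(1/2)) x) x := by
    intro x hx
    have hxγ : γ < x := hx
    have hy : 0 < x ^ 2 - γ ^ 2 := by nlinarith
    have h1 : HasDerivAt (fun t : ℝ => t ^ 2 - γ ^ 2) (2 * x) x := by
      simpa using (hasDerivAt_pow 2 x).sub_const (γ ^ 2)
    have h2 := h1.sqrt hy.ne'
    have h3 : HasDerivAt (fun t : ℝ => Real.exp (-t)) (-Real.exp (-x)) x := by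
      simpa using (hasDerivAt_neg x).exp
    have h4 := (h3.mul h2).neg
    convert h4 using 1
    · rfl
    · rfl
    · rfl
    have hs0 : 0 < Real.sqrt (x ^ 2 - γ ^ 2) := Real.sqrt_pos.mpr hy
    have hs : (x ^ 2 - γ ^ 2) ^ ((1:ℝ)/2) = Real.sqrt (x ^ 2 - γ ^ 2) :=
      (Real.sqrt_eq_rpow _).symm
    have hneg : (x ^ 2 - γ ^ 2) ^ (-(1/2) : ℝ) = (Real.sqrt (x ^ 2 - γ ^ 2))⁻¹ := by
      rw [Real.rpow_neg hy.le, hs]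
    simp only [bk, pow_zero, pow_one, one_mul]
    rw [hneg, hs]
    field_simp
    ring
  have hcont : ContinuousWithinAt F (Ici γ) γ := by
    apply Continuous.continuousWithinAt
    exact ((Real.continuous_exp.comp continuous_neg).mul
      (((continuous_pow 2).sub continuous_const).sqrt)).neg
  have hlim : Tendsto F atTop (𝓝 0) := by
    refine squeeze_zero_norm' ?_ (tendsto_pow_mul_exp_neg_atTop_nhds_zero 1)
    filter_upwards [eventually_ge_atTop (max γ 0)] with t ht
    have ht0 : 0 ≤ t := le_trans (le_max_right γ 0) ht
    have hsq : Real.sqrt (t ^ 2 - γ ^ 2) ≤ t := by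
      calc Real.sqrt (t ^ 2 - γ ^ 2) ≤ Real.sqrt (t ^ 2) := Real.sqrt_le_sqrt (by nlinarith)
        _ = t := by rw [Real.sqrt_sq ht0]
    simp only [hF]
    rw [Real.norm_eq_abs, abs_neg,
      abs_of_nonneg (mul_nonneg (Real.exp_pos _).le (Real.sqrt_nonneg _))]
    calc Real.exp (-t) * Real.sqrt (t ^ 2 - γ ^ 2) ≤ Real.exp (-t) * t :=
          mul_le_mul_of_nonneg_left hsq (Real.exp_pos _).le
      _ = t ^ 1 * Real.exp (-t) := by ring
  have hint := (bk_integrableOn hγ 0 (by norm_num : (-1:ℝ) < 1/2)).sub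
      (bk_integrableOn hγ 1 (by norm_num : (-1:ℝ) < -(1/2)))
  have key := integral_Ioi_of_hasDerivAt_of_tendsto hcont hderiv hint hlim
  have hFγ : F γ = 0 := by simp [hF]
  rw [hFγ, sub_zero,
    integral_sub (bk_integrableOn hγ 0 (by norm_num : (-1:ℝ) < 1/2))
      (bk_integrableOn hγ 1 (by norm_num : (-1:ℝ) < -(1/2)))] at key
  linarith

lemma ibp2 (hγ : 0 < γ) :
    ∫ t in Ioi γ, bk γ 1 (1/2) t
      = (∫ t in Ioi γ, bk γ 0 (1/2) t) + ∫ t in Ioi γ, bk γ 2 (-(1/2)) t := by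
  set F : ℝ → ℝ := fun t => -(Real.exp (-t) * t * Real.sqrt (t ^ 2 - γ ^ 2)) with hF
  have hderiv : ∀ x ∈ Ioi γ, HasDerivAt F
      (bk γ 1 (1/2) x - (bk γ 0 (1/2) x + bk γ 2 (-(1/2)) x)) x := by
    intro x hx
    have hxγ : γ < x := hx
    have hy : 0 < x ^ 2 - γ ^ 2 := by nlinarith
    have h1 : HasDerivAt (fun t : ℝ => t ^ 2 - γ ^ 2) (2 * x) x := by
      simpa using (hasDerivAt_pow 2 x).sub_const (γ ^ 2)
    have h2 := h1.sqrt hy.ne'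
    have h3 : HasDerivAt (fun t : ℝ => Real.exp (-t)) (-Real.exp (-x)) x := by
      simpa using (hasDerivAt_neg x).exp
    have h4 := ((h3.mul (hasDerivAt_id x)).mul h2).neg
    convert h4 using 1
    · rfl
    · rfl
    · rfl
    have hs0 : 0 < Real.sqrt (x ^ 2 - γ ^ 2) := Real.sqrt_pos.mpr hy
    have hs : (x ^ 2 - γ ^ 2) ^ ((1:ℝ)/2) = Real.sqrt (x ^ 2 - γ ^ 2) :=
      (Real.sqrt_eq_rpow _).symm
    have hneg : (x ^ 2 - γ ^ 2) ^ (-(1/2) : ℝ) = (Real.sqrt (x ^ 2 - γ ^ 2))⁻¹ := by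
      rw [Real.rpow_neg hy.le, hs]
    simp only [bk, pow_zero, pow_one, one_mul]
    rw [hneg, hs]
    simp only [Pi.mul_apply, id]
    field_simp
    ring
  have hcont : ContinuousWithinAt F (Ici γ) γ := by
    apply Continuous.continuousWithinAt
    exact (((Real.continuous_exp.comp continuous_neg).mul continuous_id).mul
      (((continuous_pow 2).sub continuous_const).sqrt)).neg
  have hlim : Tendsto F atTop (𝓝 0) := by
    refine squeeze_zero_norm' ?_ (tendsto_pow_mul_exp_neg_atTop_nhds_zero 2)
    filter_upwards [eventually_ge_atTop (max γ 0)] with t ht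
    have ht0 : 0 ≤ t := le_trans (le_max_right γ 0) ht
    have hsq : Real.sqrt (t ^ 2 - γ ^ 2) ≤ t := by
      calc Real.sqrt (t ^ 2 - γ ^ 2) ≤ Real.sqrt (t ^ 2) := Real.sqrt_le_sqrt (by nlinarith)
        _ = t := by rw [Real.sqrt_sq ht0]
    simp only [hF]
    rw [Real.norm_eq_abs, abs_neg,
      abs_of_nonneg (mul_nonneg (mul_nonneg (Real.exp_pos _).le ht0) (Real.sqrt_nonneg _))]
    calc Real.exp (-t) * t * Real.sqrt (t ^ 2 - γ ^ 2) ≤ Real.exp (-t) * t * t := by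
          apply mul_le_mul_of_nonneg_left hsq
          exact mul_nonneg (Real.exp_pos _).le ht0
      _ = t ^ 2 * Real.exp (-t) := by ring
  have hint := (bk_integrableOn hγ 1 (by norm_num : (-1:ℝ) < 1/2)).sub
      ((bk_integrableOn hγ 0 (by norm_num : (-1:ℝ) < 1/2)).add
        (bk_integrableOn hγ 2 (by norm_num : (-1:ℝ) < -(1/2))))
  have key := integral_Ioi_of_hasDerivAt_of_tendsto hcont hderiv hint hlim
  have hFγ : F γ = 0 := by simp [hF]
  have hadd : IntegrableOn (fun t => bk γ 0 (1/2) t + bk γ 2 (-(1/2)) t) (Ioi γ) :=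
    (bk_integrableOn hγ 0 (by norm_num : (-1:ℝ) < 1/2)).add
      (bk_integrableOn hγ 2 (by norm_num : (-1:ℝ) < -(1/2)))
  rw [hFγ, sub_zero,
    integral_sub (bk_integrableOn hγ 1 (by norm_num : (-1:ℝ) < 1/2)) hadd,
    integral_add (bk_integrableOn hγ 0 (by norm_num : (-1:ℝ) < 1/2))
      (bk_integrableOn hγ 2 (by norm_num : (-1:ℝ) < -(1/2)))] at key
  linarith

lemma rpow_half_split (hγ : 0 < γ) {t : ℝ} (ht : t ∈ Ioi γ) :
    (t ^ 2 - γ ^ 2) ^ ((1:ℝ)/2)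
      = (t ^ 2 - γ ^ 2) * (t ^ 2 - γ ^ 2) ^ (-(1/2) : ℝ) := by
  have htγ : γ < t := ht
  have hy : 0 < t ^ 2 - γ ^ 2 := by nlinarith
  have h12 : ((1:ℝ) + -(1/2)) = 1/2 := by norm_num
  have h := Real.rpow_add hy 1 (-(1/2))
  rw [h12, Real.rpow_one] at h
  exact h

lemma idQ (hγ : 0 < γ) :
    ∫ t in Ioi γ, bk γ 2 (-(1/2)) t
      = (∫ t in Ioi γ, bk γ 0 (1/2) t) + γ ^ 2 * ∫ t in Ioi γ, bk γ 0 (-(1/2)) t := by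
  have hpt : EqOn (bk γ 2 (-(1/2)))
      (fun t => bk γ 0 (1/2) t + γ ^ 2 * bk γ 0 (-(1/2)) t) (Ioi γ) := by
    intro t ht
    simp only [bk, pow_zero, one_mul]
    rw [rpow_half_split hγ ht]
    ring
  rw [setIntegral_congr_fun measurableSet_Ioi hpt,
    integral_add (bk_integrableOn hγ 0 (by norm_num : (-1:ℝ) < 1/2))
      ((bk_integrableOn hγ 0 (by norm_num : (-1:ℝ) < -(1/2))).const_mul _),
    integral_const_mul]

lemma idS (hγ : 0 < γ) :
    ∫ t in Ioi γ, bk γ 3 (-(1/2)) t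
      = (∫ t in Ioi γ, bk γ 1 (1/2) t) + γ ^ 2 * ∫ t in Ioi γ, bk γ 1 (-(1/2)) t := by
  have hpt : EqOn (bk γ 3 (-(1/2)))
      (fun t => bk γ 1 (1/2) t + γ ^ 2 * bk γ 1 (-(1/2)) t) (Ioi γ) := by
    intro t ht
    simp only [bk, pow_one]
    rw [rpow_half_split hγ ht]
    ring
  rw [setIntegral_congr_fun measurableSet_Ioi hpt,
    integral_add (bk_integrableOn hγ 1 (by norm_num : (-1:ℝ) < 1/2))
      ((bk_integrableOn hγ 1 (by norm_num : (-1:ℝ) < -(1/2))).const_mul _),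
    integral_const_mul]

lemma cs (hγ : 0 < γ) :
    (∫ t in Ioi γ, bk γ 2 (-(1/2)) t) ^ 2
      ≤ (∫ t in Ioi γ, bk γ 1 (-(1/2)) t) * ∫ t in Ioi γ, bk γ 3 (-(1/2)) t := by
  set P := ∫ t in Ioi γ, bk γ 1 (-(1/2)) t with hP'
  set Q := ∫ t in Ioi γ, bk γ 2 (-(1/2)) t with hQ'
  set S := ∫ t in Ioi γ, bk γ 3 (-(1/2)) t with hS'
  have hP : 0 < P := bk_integral_pos hγ 1 (by norm_num)
  have h : 0 ≤ ∫ t in Ioi γ, ((Q/P) ^ 2 * bk γ 1 (-(1/2)) t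
      - 2 * (Q/P) * bk γ 2 (-(1/2)) t + bk γ 3 (-(1/2)) t) := by
    apply setIntegral_nonneg measurableSet_Ioi
    intro t ht
    have h1 : bk γ 1 (-(1/2)) t * ((Q/P) - t) ^ 2
        = (Q/P) ^ 2 * bk γ 1 (-(1/2)) t - 2 * (Q/P) * bk γ 2 (-(1/2)) t
          + bk γ 3 (-(1/2)) t := by
      simp only [bk]
      ring
    rw [← h1]
    exact mul_nonneg (bk_pos hγ 1 _ ht).le (sq_nonneg _)
  have hI1 : IntegrableOn (fun t => (Q/P) ^ 2 * bk γ 1 (-(1/2)) t) (Ioi γ) :=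
    (bk_integrableOn hγ 1 (by norm_num : (-1:ℝ) < -(1/2))).const_mul _
  have hI2 : IntegrableOn (fun t => 2 * (Q/P) * bk γ 2 (-(1/2)) t) (Ioi γ) :=
    (bk_integrableOn hγ 2 (by norm_num : (-1:ℝ) < -(1/2))).const_mul _
  have hI12 : IntegrableOn (fun t => (Q/P) ^ 2 * bk γ 1 (-(1/2)) t
      - 2 * (Q/P) * bk γ 2 (-(1/2)) t) (Ioi γ) := hI1.sub hI2
  rw [integral_add hI12 (bk_integrableOn hγ 3 (by norm_num : (-1:ℝ) < -(1/2))),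
    integral_sub hI1 hI2, integral_const_mul, integral_const_mul, ← hP', ← hQ', ← hS'] at h
  have expand : P * ((Q/P) ^ 2 * P - 2 * (Q/P) * Q + S) = Q ^ 2 - 2 * Q ^ 2 + P * S := by
    field_simp
  nlinarith [mul_nonneg hP.le h]

lemma final_algebra (γ A B : ℝ) (hγ : 0 < γ) (hA : 0 < A) (hB : 0 < B)
    (hcs : (B + γ ^ 2 * A) ^ 2 ≤ B * (2 * B + γ ^ 2 * A + γ ^ 2 * B)) :
    γ ^ 2 * (A / (γ⁻¹ * B)) ^ 3 + 2 * γ * (A / (γ⁻¹ * B)) ^ 2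
      - (γ ^ 2 + 2) * (A / (γ⁻¹ * B)) - γ < 0 := by
  have hD : 0 ≤ (γ ^ 2 + 1) * B ^ 2 - γ ^ 4 * A ^ 2 - γ ^ 2 * A * B := by nlinarith [hcs]
  have hT : 0 < B ^ 3 + (γ ^ 2 + 2) * A * B ^ 2 - 2 * γ ^ 2 * A ^ 2 * B - γ ^ 4 * A ^ 3 := by
    nlinarith [mul_nonneg hB.le hD, mul_nonneg hA.le hD,
      mul_nonneg (mul_nonneg hA.le hD) (sq_nonneg γ),
      mul_pos (mul_pos hA hB) hB, mul_pos hA (mul_pos hA hA),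
      mul_pos (mul_pos (mul_pos hA hB) hB) (mul_pos hγ hγ),
      mul_pos (mul_pos hA (mul_pos hA hA)) (mul_pos (mul_pos hγ hγ) (mul_pos hγ hγ)),
      sq_nonneg γ]
  have hBne : B ≠ 0 := hB.ne'
  have hγne : γ ≠ 0 := hγ.ne'
  have key : γ ^ 2 * (A / (γ⁻¹ * B)) ^ 3 + 2 * γ * (A / (γ⁻¹ * B)) ^ 2
      - (γ ^ 2 + 2) * (A / (γ⁻¹ * B)) - γ
      = -(γ * (B ^ 3 + (γ ^ 2 + 2) * A * B ^ 2 - 2 * γ ^ 2 * A ^ 2 * B - γ ^ 4 * A ^ 3))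
        / B ^ 3 := by
    field_simp
    ring
  rw [key]
  apply div_neg_of_neg_of_pos
  · exact neg_lt_zero.mpr (mul_pos hγ hT)
  · exact pow_pos hB 3

end BesselKAux

theorem besselK01_ratio_cubic_neg (γ : ℝ) (hγ : 0 < γ) :
    γ ^ 2 * (besselK 0 γ / besselK 1 γ) ^ 3 + 2 * γ * (besselK 0 γ / besselK 1 γ) ^ 2
      - (γ ^ 2 + 2) * (besselK 0 γ / besselK 1 γ) - γ < 0 := by
  classical
  open BesselKAux Set in
  have hA : 0 < ∫ t in Ioi γ, bk γ 0 (-(1/2)) t :=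
    bk_integral_pos hγ 0 (by norm_num : (-1:ℝ) < -(1/2))
  have hB : 0 < ∫ t in Ioi γ, bk γ 0 (1/2) t :=
    bk_integral_pos hγ 0 (by norm_num : (-1:ℝ) < 1/2)
  have hP : (∫ t in Ioi γ, bk γ 1 (-(1/2)) t) = ∫ t in Ioi γ, bk γ 0 (1/2) t :=
    (ibp1 hγ).symm
  have hQ := idQ hγ
  have hS := idS hγ
  have hJ := ibp2 hγ
  have hcs0 := cs hγ
  rw [hQ, hP, hS, hJ, hQ, hP] at hcs0
  have hk0 : besselK 0 γ = ∫ t in Ioi γ, bk γ 0 (-(1/2)) t := by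
    simp only [besselK, bk, pow_zero, one_mul, Nat.cast_zero, neg_zero, Real.rpow_zero,
      Nat.factorial_zero, Nat.cast_one, Nat.mul_zero, zero_sub]
    norm_num
  have hk1 : besselK 1 γ = γ⁻¹ * ∫ t in Ioi γ, bk γ 0 (1/2) t := by
    have hE : ((1:ℝ) - 1/2) = 1/2 := by norm_num
    simp only [besselK, bk, pow_zero, one_mul, pow_one, Nat.cast_one, Nat.factorial_one,
      Nat.mul_one, hE, Real.rpow_neg_one]
    norm_num [Nat.factorial]
  rw [hk0, hk1]
  exact final_algebra γ _ _ hγ hA hB (by nlinarith [hcs0])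
end

section
/- For every real γ > 0, the ratio of modified Bessel functions satisfies γ²·(K_0(γ)/K_1(γ))² + γ·(K_0(γ)/K_1(γ)) − γ² − 3 < 0. (This inequality expresses the positivity of the specific heat c_V at constant volume of the relativistic diatomic gas with generalized Synge energy.) -/
open MeasureTheory Real

lemma moment_int (γ : ℝ) {a : ℝ} (ha : 0 < a) :
    IntegrableOn (fun t => Real.exp (-t) * (t - γ) ^ (a - 1)) (Set.Ioi γ) ∧
    ∫ t in Set.Ioi γ, Real.exp (-t) * (t - γ) ^ (a - 1) = Real.exp (-γ) * Real.Gamma a := by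
  have hmp : MeasurePreserving (fun x : ℝ => x + γ) volume volume :=
    measurePreserving_add_right volume γ
  have hemb : MeasurableEmbedding (fun x : ℝ => x + γ) :=
    (MeasurableEquiv.addRight γ).measurableEmbedding
  have hpre : (fun x : ℝ => x + γ) ⁻¹' (Set.Ioi γ) = Set.Ioi 0 := by
    ext x; simp
  have hg : IntegrableOn (fun x : ℝ => Real.exp (-γ) * (Real.exp (-x) * x ^ (a - 1)))
      (Set.Ioi 0) := (Real.GammaIntegral_convergent ha).const_mul _
  have hcomp : ∀ x : ℝ, Real.exp (-(x + γ)) * (x + γ - γ) ^ (a - 1)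
      = Real.exp (-γ) * (Real.exp (-x) * x ^ (a - 1)) := by
    intro x
    rw [show -(x + γ) = -γ + -x by ring, Real.exp_add]
    ring_nf
  constructor
  · rw [← hmp.integrableOn_comp_preimage hemb, hpre]
    exact hg.congr_fun (fun x _ => (hcomp x).symm) measurableSet_Ioi |>.congr
      (Filter.EventuallyEq.refl _ _)
  · rw [← hmp.setIntegral_preimage_emb hemb _ (Set.Ioi γ), hpre]
    calc ∫ x in Set.Ioi 0, Real.exp (-(x + γ)) * (x + γ - γ) ^ (a - 1)
        = ∫ x in Set.Ioi 0, Real.exp (-γ) * (Real.exp (-x) * x ^ (a - 1)) := by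
          exact setIntegral_congr_fun measurableSet_Ioi (fun x _ => hcomp x)
      _ = Real.exp (-γ) * Real.Gamma a := by
          rw [integral_const_mul, Real.Gamma_eq_integral ha]

lemma sqrt_lb {x : ℝ} (hx : 0 ≤ x) : 1 + x/2 - x^2/8 ≤ Real.sqrt (1+x) := by
  have hs0 : 0 ≤ Real.sqrt (1+x) := Real.sqrt_nonneg _
  have hs : Real.sqrt (1+x) ^ 2 = 1 + x := Real.sq_sqrt (by linarith)
  rcases le_or_gt (1 + x/2 - x^2/8) 0 with h | h
  · linarith
  · have hx8 : x < 8 := by nlinarith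
    have key : (1 + x/2 - x^2/8)^2 ≤ Real.sqrt (1+x)^2 := by
      rw [hs]
      nlinarith [mul_nonneg (mul_nonneg (mul_nonneg hx hx) hx) (by linarith : (0:ℝ) ≤ 8 - x)]
    nlinarith [key, hs0, h]

lemma sqrt_ub {x : ℝ} (hx : 0 ≤ x) : 1 / Real.sqrt (1+x) ≤ 1 - x/2 + 3*x^2/8 := by
  have hs0 : 0 < Real.sqrt (1+x) := Real.sqrt_pos.2 (by linarith)
  have hs : Real.sqrt (1+x) ^ 2 = 1 + x := Real.sq_sqrt (by linarith)
  have hb : 0 < 1 - x/2 + 3*x^2/8 := by nlinarith [sq_nonneg (x - 2/3)]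
  rw [div_le_iff₀ hs0]
  have h40 : 0 < 9*x^2 - 15*x + 40 := by nlinarith [sq_nonneg (x - 5/6)]
  have key : 1 ≤ ((1 - x/2 + 3*x^2/8) * Real.sqrt (1+x))^2 := by
    rw [mul_pow, hs]
    nlinarith [mul_nonneg (mul_nonneg (mul_nonneg hx hx) hx) h40.le]
  nlinarith [key, mul_pos hb hs0]

lemma Gamma32 : Real.Gamma (3/2) = Real.sqrt π / 2 := by
  have h : (3/2 : ℝ) = 1/2 + 1 := by norm_num
  rw [h, Real.Gamma_add_one (by norm_num), Real.Gamma_one_half_eq]; ring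

lemma Gamma52 : Real.Gamma (5/2) = 3 * Real.sqrt π / 4 := by
  have h : (5/2 : ℝ) = 3/2 + 1 := by norm_num
  rw [h, Real.Gamma_add_one (by norm_num), Gamma32]; ring

lemma Gamma72 : Real.Gamma (7/2) = 15 * Real.sqrt π / 8 := by
  have h : (7/2 : ℝ) = 5/2 + 1 := by norm_num
  rw [h, Real.Gamma_add_one (by norm_num), Gamma52]; ring

lemma besselK0_eq (γ : ℝ) :
    besselK 0 γ = ∫ t in Set.Ioi γ, Real.exp (-t) * (t^2 - γ^2) ^ (-(1/2) : ℝ) := by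
  unfold besselK
  norm_num

lemma besselK1_eq (γ : ℝ) :
    besselK 1 γ = γ⁻¹ * ∫ t in Set.Ioi γ, Real.exp (-t) * (t^2 - γ^2) ^ ((1/2) : ℝ) := by
  unfold besselK
  norm_num [Real.rpow_neg_one, Nat.factorial]
section pointwise
variable {γ t : ℝ} (hγ : 0 < γ) (ht : γ < t)

lemma rpow_shift (hs : (0:ℝ) < t - γ) :
    (t-γ) ^ ((1/2):ℝ) = (t-γ) ^ (-(1/2):ℝ) * (t-γ) ∧
    (t-γ) ^ ((3/2):ℝ) = (t-γ) ^ (-(1/2):ℝ) * (t-γ)^2 ∧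
    (t-γ) ^ ((5/2):ℝ) = (t-γ) ^ ((1/2):ℝ) * (t-γ)^2 := by
  have step : ∀ a : ℝ, (t-γ) ^ (a + 1) = (t-γ) ^ a * (t-γ) := fun a => by
    rw [Real.rpow_add hs, Real.rpow_one]
  refine ⟨?_, ?_, ?_⟩
  · have h := step (-(1/2)); norm_num at h ⊢; exact h
  · have h1 := step (1/2); have h2 := step (-(1/2))
    norm_num at h1 h2
    rw [show ((3/2):ℝ) = 1/2 + 1 by norm_num, step, h2]; ring
  · have h1 := step (1/2); have h2 := step (3/2)
    norm_num at h1 h2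
    rw [show ((5/2):ℝ) = 3/2 + 1 by norm_num, step, h1]; ring

include hγ ht

lemma ptfacts :
    (0:ℝ) < t - γ ∧ (0:ℝ) < t + γ ∧
    t + γ = (2*γ) * (1 + (t-γ)/(2*γ)) ∧ (0:ℝ) ≤ (t-γ)/(2*γ) := by
  refine ⟨by linarith, by linarith, by field_simp; ring, div_nonneg (by linarith) (by linarith)⟩

/-- refined upper bound for the K₀ integrand factor -/
lemma P0 : (t^2 - γ^2) ^ (-(1/2) : ℝ) ≤ (2*γ) ^ (-(1/2):ℝ) *
    ((t-γ) ^ (-(1/2):ℝ) - (t-γ) ^ ((1/2):ℝ)/(4*γ) + 3*(t-γ) ^ ((3/2):ℝ)/(32*γ^2)) := by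
  obtain ⟨hs, htg, htx, hx0⟩ := ptfacts hγ ht
  set x := (t-γ)/(2*γ) with hxdef
  have hfac : t^2 - γ^2 = (t-γ) * (t+γ) := by ring
  have h1x : (0:ℝ) < 1 + x := by linarith
  rw [hfac, Real.mul_rpow hs.le htg.le, htx,
    Real.mul_rpow (by positivity) h1x.le]
  have hxub : (1+x) ^ (-(1/2):ℝ) ≤ 1 - x/2 + 3*x^2/8 := by
    rw [Real.rpow_neg h1x.le, ← Real.sqrt_eq_rpow, ← one_div]
    exact sqrt_ub hx0
  obtain ⟨e1, e2, -⟩ := rpow_shift hs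
  have hkey : (t-γ) ^ (-(1/2):ℝ) * (1 - x/2 + 3*x^2/8)
      = (t-γ) ^ (-(1/2):ℝ) - (t-γ) ^ ((1/2):ℝ)/(4*γ) + 3*(t-γ) ^ ((3/2):ℝ)/(32*γ^2) := by
    rw [e1, e2, hxdef]; field_simp; ring
  calc (t-γ) ^ (-(1/2):ℝ) * ((2*γ) ^ (-(1/2):ℝ) * (1+x) ^ (-(1/2):ℝ))
      ≤ (t-γ) ^ (-(1/2):ℝ) * ((2*γ) ^ (-(1/2):ℝ) * (1 - x/2 + 3*x^2/8)) := by
        apply mul_le_mul_of_nonneg_left _ (Real.rpow_nonneg hs.le _)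
        exact mul_le_mul_of_nonneg_left hxub (Real.rpow_nonneg (by positivity) _)
    _ = (2*γ) ^ (-(1/2):ℝ) * ((t-γ) ^ (-(1/2):ℝ) - (t-γ) ^ ((1/2):ℝ)/(4*γ)
          + 3*(t-γ) ^ ((3/2):ℝ)/(32*γ^2)) := by rw [← hkey]; ring

/-- crude upper bound for the K₀ integrand factor -/
lemma P0c : (t^2 - γ^2) ^ (-(1/2) : ℝ) ≤ (2*γ) ^ (-(1/2):ℝ) * (t-γ) ^ (-(1/2):ℝ) := by
  obtain ⟨hs, htg, htx, hx0⟩ := ptfacts hγ ht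
  have hfac : t^2 - γ^2 = (t-γ) * (t+γ) := by ring
  rw [hfac, Real.mul_rpow hs.le htg.le]
  rw [mul_comm ((2*γ) ^ (-(1/2):ℝ))]
  apply mul_le_mul_of_nonneg_left _ (Real.rpow_nonneg hs.le _)
  exact Real.rpow_le_rpow_of_nonpos (by positivity) (by linarith) (by norm_num)

/-- refined lower bound for the K₁ integrand factor -/
lemma P1_s10 : (2*γ) ^ ((1/2):ℝ) *
    ((t-γ) ^ ((1/2):ℝ) + (t-γ) ^ ((3/2):ℝ)/(4*γ) - (t-γ) ^ ((5/2):ℝ)/(32*γ^2))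
    ≤ (t^2 - γ^2) ^ ((1/2) : ℝ) := by
  obtain ⟨hs, htg, htx, hx0⟩ := ptfacts hγ ht
  set x := (t-γ)/(2*γ) with hxdef
  have hfac : t^2 - γ^2 = (t-γ) * (t+γ) := by ring
  have h1x : (0:ℝ) < 1 + x := by linarith
  rw [hfac, Real.mul_rpow hs.le htg.le, htx,
    Real.mul_rpow (by positivity) h1x.le]
  have hxlb : 1 + x/2 - x^2/8 ≤ (1+x) ^ ((1/2):ℝ) := by
    rw [← Real.sqrt_eq_rpow]
    exact sqrt_lb hx0
  obtain ⟨e1, e2, e3⟩ := rpow_shift hs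
  have hkey : (t-γ) ^ ((1/2):ℝ) * (1 + x/2 - x^2/8)
      = (t-γ) ^ ((1/2):ℝ) + (t-γ) ^ ((3/2):ℝ)/(4*γ) - (t-γ) ^ ((5/2):ℝ)/(32*γ^2) := by
    rw [e3, show (t-γ) ^ ((3/2):ℝ) = (t-γ) ^ ((1/2):ℝ) * (t-γ) by
      rw [show ((3/2):ℝ) = (1/2) + 1 by norm_num, Real.rpow_add hs, Real.rpow_one], hxdef]
    field_simp; ring
  calc (2*γ) ^ ((1/2):ℝ) * ((t-γ) ^ ((1/2):ℝ) + (t-γ) ^ ((3/2):ℝ)/(4*γ)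
        - (t-γ) ^ ((5/2):ℝ)/(32*γ^2))
      = (t-γ) ^ ((1/2):ℝ) * (1 + x/2 - x^2/8) * (2*γ) ^ ((1/2):ℝ) := by rw [hkey]; ring
    _ ≤ (t-γ) ^ ((1/2):ℝ) * (1+x) ^ ((1/2):ℝ) * (2*γ) ^ ((1/2):ℝ) := by
        apply mul_le_mul_of_nonneg_right _ (Real.rpow_nonneg (by positivity) _)
        exact mul_le_mul_of_nonneg_left hxlb (Real.rpow_nonneg hs.le _)
    _ = (t-γ) ^ ((1/2):ℝ) * ((2*γ) ^ ((1/2):ℝ) * (1+x) ^ ((1/2):ℝ)) := by ring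

/-- crude lower bound for the K₁ integrand factor -/
lemma P1c : (2*γ) ^ ((1/2):ℝ) * (t-γ) ^ ((1/2):ℝ) ≤ (t^2 - γ^2) ^ ((1/2) : ℝ) := by
  obtain ⟨hs, htg, htx, hx0⟩ := ptfacts hγ ht
  have hfac : t^2 - γ^2 = (t-γ) * (t+γ) := by ring
  rw [hfac, Real.mul_rpow hs.le htg.le, mul_comm]
  apply mul_le_mul_of_nonneg_left _ (Real.rpow_nonneg hs.le _)
  exact Real.rpow_le_rpow (by positivity) (by linarith) (by norm_num)

/-- crude upper bound for the K₁ integrand factor (for integrability) -/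
lemma P1u : (t^2 - γ^2) ^ ((1/2) : ℝ) ≤
    ((1+2*γ)/2) * (t-γ) ^ ((1/2):ℝ) + (1/2) * (t-γ) ^ ((3/2):ℝ) := by
  obtain ⟨hs, htg, htx, hx0⟩ := ptfacts hγ ht
  have hfac : t^2 - γ^2 = (t-γ) * (t+γ) := by ring
  rw [hfac, Real.mul_rpow hs.le htg.le]
  have hsq : (t+γ) ^ ((1/2):ℝ) ≤ (1 + (t+γ))/2 := by
    rw [← Real.sqrt_eq_rpow]
    nlinarith [Real.sq_sqrt htg.le, Real.sqrt_nonneg (t+γ), sq_nonneg (Real.sqrt (t+γ) - 1)]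
  have e : (t-γ) ^ ((3/2):ℝ) = (t-γ) ^ ((1/2):ℝ) * (t-γ) := by
    rw [show ((3/2):ℝ) = (1/2) + 1 by norm_num, Real.rpow_add hs, Real.rpow_one]
  calc (t-γ) ^ ((1/2):ℝ) * (t+γ) ^ ((1/2):ℝ)
      ≤ (t-γ) ^ ((1/2):ℝ) * ((1 + (t+γ))/2) :=
        mul_le_mul_of_nonneg_left hsq (Real.rpow_nonneg hs.le _)
    _ = ((1+2*γ)/2) * (t-γ) ^ ((1/2):ℝ) + (1/2) * (t-γ) ^ ((3/2):ℝ) := by rw [e]; ring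

end pointwise
section moments
variable (γ : ℝ)

lemma mom_m : IntegrableOn (fun t => Real.exp (-t) * (t - γ) ^ (-(1/2):ℝ)) (Set.Ioi γ) ∧
    ∫ t in Set.Ioi γ, Real.exp (-t) * (t - γ) ^ (-(1/2):ℝ)
      = Real.exp (-γ) * Real.sqrt π := by
  have h := moment_int γ (a := (1/2:ℝ)) (by norm_num)
  rw [Real.Gamma_one_half_eq] at h
  simpa only [show ((1/2:ℝ) - 1) = -(1/2) from by norm_num] using h

lemma mom_1 : IntegrableOn (fun t => Real.exp (-t) * (t - γ) ^ ((1/2):ℝ)) (Set.Ioi γ) ∧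
    ∫ t in Set.Ioi γ, Real.exp (-t) * (t - γ) ^ ((1/2):ℝ)
      = Real.exp (-γ) * (Real.sqrt π / 2) := by
  have h := moment_int γ (a := (3/2:ℝ)) (by norm_num)
  rw [Gamma32] at h
  simpa only [show ((3/2:ℝ) - 1) = (1/2) from by norm_num] using h

lemma mom_3 : IntegrableOn (fun t => Real.exp (-t) * (t - γ) ^ ((3/2):ℝ)) (Set.Ioi γ) ∧
    ∫ t in Set.Ioi γ, Real.exp (-t) * (t - γ) ^ ((3/2):ℝ)
      = Real.exp (-γ) * (3 * Real.sqrt π / 4) := by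
  have h := moment_int γ (a := (5/2:ℝ)) (by norm_num)
  rw [Gamma52] at h
  simpa only [show ((5/2:ℝ) - 1) = (3/2) from by norm_num] using h

lemma mom_5 : IntegrableOn (fun t => Real.exp (-t) * (t - γ) ^ ((5/2):ℝ)) (Set.Ioi γ) ∧
    ∫ t in Set.Ioi γ, Real.exp (-t) * (t - γ) ^ ((5/2):ℝ)
      = Real.exp (-γ) * (15 * Real.sqrt π / 8) := by
  have h := moment_int γ (a := (7/2:ℝ)) (by norm_num)
  rw [Gamma72] at h
  simpa only [show ((7/2:ℝ) - 1) = (5/2) from by norm_num] using h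

end moments

section integrable
variable {γ : ℝ} (hγ : 0 < γ)
include hγ

lemma meas0 : AEStronglyMeasurable (fun t => Real.exp (-t) * (t^2 - γ^2) ^ (-(1/2):ℝ))
    (volume.restrict (Set.Ioi γ)) := by
  apply ContinuousOn.aestronglyMeasurable _ measurableSet_Ioi
  apply ContinuousOn.mul (Continuous.continuousOn (by continuity))
  apply ContinuousOn.rpow_const
  · exact (continuous_pow 2 |>.sub continuous_const).continuousOn
  · intro t ht
    left
    have : γ < t := ht
    nlinarith

lemma meas1 : AEStronglyMeasurable (fun t => Real.exp (-t) * (t^2 - γ^2) ^ ((1/2):ℝ))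
    (volume.restrict (Set.Ioi γ)) := by
  apply ContinuousOn.aestronglyMeasurable _ measurableSet_Ioi
  apply ContinuousOn.mul (Continuous.continuousOn (by continuity))
  apply ContinuousOn.rpow_const
  · exact (continuous_pow 2 |>.sub continuous_const).continuousOn
  · intro t ht
    left
    have : γ < t := ht
    nlinarith

lemma int0 : IntegrableOn (fun t => Real.exp (-t) * (t^2 - γ^2) ^ (-(1/2):ℝ)) (Set.Ioi γ) := by
  apply Integrable.mono ((mom_m γ).1.const_mul ((2*γ) ^ (-(1/2):ℝ))) (meas0 hγ)
  rw [ae_restrict_iff' measurableSet_Ioi]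
  filter_upwards with t ht
  have ht' : γ < t := ht
  have h1 : (0:ℝ) < t - γ := by linarith
  have h2 : (0:ℝ) < t^2 - γ^2 := by nlinarith
  rw [Real.norm_eq_abs, Real.norm_eq_abs, abs_of_nonneg (by positivity),
    abs_of_nonneg (by positivity)]
  calc Real.exp (-t) * (t^2 - γ^2) ^ (-(1/2):ℝ)
      ≤ Real.exp (-t) * ((2*γ) ^ (-(1/2):ℝ) * (t-γ) ^ (-(1/2):ℝ)) :=
        mul_le_mul_of_nonneg_left (P0c hγ ht') (Real.exp_nonneg _)
    _ = (2*γ) ^ (-(1/2):ℝ) * (Real.exp (-t) * (t-γ) ^ (-(1/2):ℝ)) := by ring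

lemma int1 : IntegrableOn (fun t => Real.exp (-t) * (t^2 - γ^2) ^ ((1/2):ℝ)) (Set.Ioi γ) := by
  apply Integrable.mono (((mom_1 γ).1.const_mul ((1+2*γ)/2)).add ((mom_3 γ).1.const_mul (1/2)))
    (meas1 hγ)
  rw [ae_restrict_iff' measurableSet_Ioi]
  filter_upwards with t ht
  have ht' : γ < t := ht
  have h1 : (0:ℝ) < t - γ := by linarith
  have h2 : (0:ℝ) < t^2 - γ^2 := by nlinarith
  have hrhs : (0:ℝ) ≤ (1+2*γ)/2 * (Real.exp (-t) * (t-γ) ^ ((1/2):ℝ))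
      + 1/2 * (Real.exp (-t) * (t-γ) ^ ((3/2):ℝ)) := by positivity
  simp only [Pi.add_apply]
  rw [Real.norm_eq_abs, Real.norm_eq_abs, abs_of_nonneg (by positivity), abs_of_nonneg hrhs]
  calc Real.exp (-t) * (t^2 - γ^2) ^ ((1/2):ℝ)
      ≤ Real.exp (-t) * ((1+2*γ)/2 * (t-γ) ^ ((1/2):ℝ) + 1/2 * (t-γ) ^ ((3/2):ℝ)) :=
        mul_le_mul_of_nonneg_left (P1u hγ ht') (Real.exp_nonneg _)
    _ = (1+2*γ)/2 * (Real.exp (-t) * (t-γ) ^ ((1/2):ℝ))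
        + 1/2 * (Real.exp (-t) * (t-γ) ^ ((3/2):ℝ)) := by ring

end integrable
section bounds
variable {γ : ℝ} (hγ : 0 < γ)
include hγ

lemma K0_le_crude : besselK 0 γ ≤ (2*γ) ^ (-(1/2):ℝ) * (Real.exp (-γ) * Real.sqrt π) := by
  rw [besselK0_eq]
  have hg : IntegrableOn (fun t => (2*γ) ^ (-(1/2):ℝ) * (Real.exp (-t) * (t-γ) ^ (-(1/2):ℝ)))
      (Set.Ioi γ) := (mom_m γ).1.const_mul _
  calc ∫ t in Set.Ioi γ, Real.exp (-t) * (t^2 - γ^2) ^ (-(1/2):ℝ)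
      ≤ ∫ t in Set.Ioi γ, (2*γ) ^ (-(1/2):ℝ) * (Real.exp (-t) * (t-γ) ^ (-(1/2):ℝ)) := by
        apply setIntegral_mono_on (int0 hγ) hg measurableSet_Ioi
        intro t ht
        have := mul_le_mul_of_nonneg_left (P0c hγ ht) (Real.exp_nonneg (-t))
        refine le_trans this (le_of_eq ?_); ring
    _ = (2*γ) ^ (-(1/2):ℝ) * (Real.exp (-γ) * Real.sqrt π) := by
        rw [integral_const_mul, (mom_m γ).2]

lemma K0_le : besselK 0 γ ≤ (2*γ) ^ (-(1/2):ℝ) *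
    (Real.exp (-γ) * Real.sqrt π * (128*γ^2 - 16*γ + 9) / (128*γ^2)) := by
  rw [besselK0_eq]
  have h1 := (mom_m γ).1
  have h2 := (mom_1 γ).1.const_mul (1/(4*γ))
  have h3 := (mom_3 γ).1.const_mul (3/(32*γ^2))
  have hg : IntegrableOn (fun t => (2*γ) ^ (-(1/2):ℝ) *
      ((Real.exp (-t) * (t-γ) ^ (-(1/2):ℝ)) - (1/(4*γ)) * (Real.exp (-t) * (t-γ) ^ ((1/2):ℝ))
        + (3/(32*γ^2)) * (Real.exp (-t) * (t-γ) ^ ((3/2):ℝ)))) (Set.Ioi γ) :=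
    ((h1.sub h2).add h3).const_mul _
  calc ∫ t in Set.Ioi γ, Real.exp (-t) * (t^2 - γ^2) ^ (-(1/2):ℝ)
      ≤ ∫ t in Set.Ioi γ, (2*γ) ^ (-(1/2):ℝ) *
          ((Real.exp (-t) * (t-γ) ^ (-(1/2):ℝ)) - (1/(4*γ)) * (Real.exp (-t) * (t-γ) ^ ((1/2):ℝ))
            + (3/(32*γ^2)) * (Real.exp (-t) * (t-γ) ^ ((3/2):ℝ))) := by
        apply setIntegral_mono_on (int0 hγ) hg measurableSet_Ioi
        intro t ht
        have := mul_le_mul_of_nonneg_left (P0 hγ ht) (Real.exp_nonneg (-t))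
        refine le_trans this (le_of_eq ?_); ring
    _ = (2*γ) ^ (-(1/2):ℝ) * ((Real.exp (-γ) * Real.sqrt π)
          - (1/(4*γ)) * (Real.exp (-γ) * (Real.sqrt π / 2))
          + (3/(32*γ^2)) * (Real.exp (-γ) * (3 * Real.sqrt π / 4))) := by
        have h12 : IntegrableOn (fun t => (Real.exp (-t) * (t-γ) ^ (-(1/2):ℝ))
            - (1/(4*γ)) * (Real.exp (-t) * (t-γ) ^ ((1/2):ℝ))) (Set.Ioi γ) := h1.sub h2
        rw [integral_const_mul, integral_add h12 h3, integral_sub h1 h2,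
          integral_const_mul, integral_const_mul, (mom_m γ).2, (mom_1 γ).2, (mom_3 γ).2]
    _ = (2*γ) ^ (-(1/2):ℝ) *
          (Real.exp (-γ) * Real.sqrt π * (128*γ^2 - 16*γ + 9) / (128*γ^2)) := by
        have : γ ≠ 0 := ne_of_gt hγ
        field_simp
        ring

lemma K1_ge_crude : γ⁻¹ * ((2*γ) ^ ((1/2):ℝ) * (Real.exp (-γ) * Real.sqrt π / 2))
    ≤ besselK 1 γ := by
  rw [besselK1_eq]
  apply mul_le_mul_of_nonneg_left _ (by positivity)
  have hg : IntegrableOn (fun t => (2*γ) ^ ((1/2):ℝ) * (Real.exp (-t) * (t-γ) ^ ((1/2):ℝ)))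
      (Set.Ioi γ) := (mom_1 γ).1.const_mul _
  calc (2*γ) ^ ((1/2):ℝ) * (Real.exp (-γ) * Real.sqrt π / 2)
      = ∫ t in Set.Ioi γ, (2*γ) ^ ((1/2):ℝ) * (Real.exp (-t) * (t-γ) ^ ((1/2):ℝ)) := by
        rw [integral_const_mul, (mom_1 γ).2]; ring
    _ ≤ ∫ t in Set.Ioi γ, Real.exp (-t) * (t^2 - γ^2) ^ ((1/2):ℝ) := by
        apply setIntegral_mono_on hg (int1 hγ) measurableSet_Ioi
        intro t ht
        have := mul_le_mul_of_nonneg_left (P1c hγ ht) (Real.exp_nonneg (-t))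
        refine le_trans (le_of_eq ?_) this; ring

lemma K1_ge : γ⁻¹ * ((2*γ) ^ ((1/2):ℝ) *
    (Real.exp (-γ) * Real.sqrt π * (128*γ^2 + 48*γ - 15) / (256*γ^2))) ≤ besselK 1 γ := by
  rw [besselK1_eq]
  apply mul_le_mul_of_nonneg_left _ (by positivity)
  have h1 := (mom_1 γ).1
  have h2 := (mom_3 γ).1.const_mul (1/(4*γ))
  have h3 := (mom_5 γ).1.const_mul (1/(32*γ^2))
  have hg : IntegrableOn (fun t => (2*γ) ^ ((1/2):ℝ) *
      ((Real.exp (-t) * (t-γ) ^ ((1/2):ℝ)) + (1/(4*γ)) * (Real.exp (-t) * (t-γ) ^ ((3/2):ℝ))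
        - (1/(32*γ^2)) * (Real.exp (-t) * (t-γ) ^ ((5/2):ℝ)))) (Set.Ioi γ) :=
    ((h1.add h2).sub h3).const_mul _
  calc (2*γ) ^ ((1/2):ℝ) * (Real.exp (-γ) * Real.sqrt π * (128*γ^2 + 48*γ - 15) / (256*γ^2))
      = ∫ t in Set.Ioi γ, (2*γ) ^ ((1/2):ℝ) *
          ((Real.exp (-t) * (t-γ) ^ ((1/2):ℝ)) + (1/(4*γ)) * (Real.exp (-t) * (t-γ) ^ ((3/2):ℝ))
            - (1/(32*γ^2)) * (Real.exp (-t) * (t-γ) ^ ((5/2):ℝ))) := by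
        have h12 : IntegrableOn (fun t => (Real.exp (-t) * (t-γ) ^ ((1/2):ℝ))
            + (1/(4*γ)) * (Real.exp (-t) * (t-γ) ^ ((3/2):ℝ))) (Set.Ioi γ) := h1.add h2
        rw [integral_const_mul, integral_sub h12 h3, integral_add h1 h2,
          integral_const_mul, integral_const_mul, (mom_1 γ).2, (mom_3 γ).2, (mom_5 γ).2]
        have : γ ≠ 0 := ne_of_gt hγ
        field_simp
        ring
    _ ≤ ∫ t in Set.Ioi γ, Real.exp (-t) * (t^2 - γ^2) ^ ((1/2):ℝ) := by
        apply setIntegral_mono_on hg (int1 hγ) measurableSet_Ioi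
        intro t ht
        have := mul_le_mul_of_nonneg_left (P1_s10 hγ ht) (Real.exp_nonneg (-t))
        refine le_trans (le_of_eq ?_) this; ring

lemma K0_nonneg : 0 ≤ besselK 0 γ := by
  rw [besselK0_eq]
  apply setIntegral_nonneg measurableSet_Ioi
  intro t ht
  have ht' : γ < t := ht
  have : (0:ℝ) ≤ t^2 - γ^2 := by nlinarith
  positivity

end bounds

set_option maxHeartbeats 1000000 in
theorem besselK01_cV_pos (γ : ℝ) (hγ : 0 < γ) :
    γ ^ 2 * (besselK 0 γ / besselK 1 γ) ^ 2 + γ * (besselK 0 γ / besselK 1 γ)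
      - γ ^ 2 - 3 < 0 := by
  have h2γ : (0:ℝ) < 2*γ := by linarith
  have hγ' : γ ≠ 0 := ne_of_gt hγ
  set w : ℝ := (2*γ) ^ ((1/2):ℝ) with hwdef
  have hw' : w = Real.sqrt (2*γ) := (Real.sqrt_eq_rpow _).symm
  have hw : 0 < w := by rw [hw']; exact Real.sqrt_pos.2 h2γ
  have hw0 : w ≠ 0 := ne_of_gt hw
  have hw2 : w^2 = 2*γ := by rw [hw']; exact Real.sq_sqrt h2γ.le
  have hwn : (2*γ) ^ (-(1/2):ℝ) = w⁻¹ := by rw [Real.rpow_neg h2γ.le, hwdef]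
  have hc : 0 < Real.exp (-γ) * Real.sqrt π := by positivity
  set c : ℝ := Real.exp (-γ) * Real.sqrt π with hcdef
  have hK1c : γ⁻¹ * (w * (c / 2)) ≤ besselK 1 γ := by
    have h := K1_ge_crude hγ
    calc γ⁻¹ * (w * (c/2)) = γ⁻¹ * (w * (c/2)) := rfl
      _ ≤ besselK 1 γ := by rw [hcdef]; exact h
  have hK1pos : 0 < besselK 1 γ := lt_of_lt_of_le (by positivity) hK1c
  set r : ℝ := besselK 0 γ / besselK 1 γ with hrdef
  have hr0 : 0 ≤ r := div_nonneg (K0_nonneg hγ) hK1pos.le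
  rcases lt_or_ge γ 3 with h3 | h3
  · -- trivial regime: r ≤ 1
    have hkey : γ⁻¹ * (w * (c/2)) = w⁻¹ * c := by
      field_simp
      linear_combination hw2
    have hr1 : r ≤ 1 := by
      rw [hrdef, div_le_one hK1pos]
      calc besselK 0 γ ≤ (2*γ) ^ (-(1/2):ℝ) * c := K0_le_crude hγ
        _ = γ⁻¹ * (w * (c/2)) := by rw [hwn, hkey]
        _ ≤ besselK 1 γ := hK1c
    have hr2 : r^2 ≤ 1 := by nlinarith
    have e1 : 0 ≤ γ^2*(1 - r^2) := mul_nonneg (sq_nonneg γ) (by linarith)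
    have e2 : 0 ≤ γ*(1 - r) := mul_nonneg hγ.le (by linarith)
    nlinarith [e1, e2, h3]
  · -- sharp regime
    have hN : (0:ℝ) < 128*γ^2 - 16*γ + 9 := by nlinarith
    have hD : (0:ℝ) < 128*γ^2 + 48*γ - 15 := by nlinarith
    have hinv : w⁻¹ = w / (2*γ) := by
      field_simp
      linarith [hw2]
    have hK0b : besselK 0 γ ≤ w⁻¹ * (c * (128*γ^2 - 16*γ + 9) / (128*γ^2)) := by
      have h := K0_le hγ
      rw [hwn] at h
      rw [hcdef]
      exact h
    have hK1b : γ⁻¹ * (w * (c * (128*γ^2 + 48*γ - 15) / (256*γ^2))) ≤ besselK 1 γ := by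
      have h := K1_ge hγ
      rw [hcdef]
      exact h
    have hρ : r ≤ (128*γ^2 - 16*γ + 9) / (128*γ^2 + 48*γ - 15) := by
      rw [hrdef, div_le_div_iff₀ hK1pos hD]
      calc besselK 0 γ * (128*γ^2 + 48*γ - 15)
          ≤ (w⁻¹ * (c * (128*γ^2 - 16*γ + 9) / (128*γ^2))) * (128*γ^2 + 48*γ - 15) :=
            mul_le_mul_of_nonneg_right hK0b hD.le
        _ = (128*γ^2 - 16*γ + 9) *
              (γ⁻¹ * (w * (c * (128*γ^2 + 48*γ - 15) / (256*γ^2)))) := by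
            rw [hinv]
            field_simp
            ring
        _ ≤ (128*γ^2 - 16*γ + 9) * besselK 1 γ :=
            mul_le_mul_of_nonneg_left hK1b hN.le
    have hrD : r * (128*γ^2 + 48*γ - 15) ≤ 128*γ^2 - 16*γ + 9 := by
      have h := mul_le_mul_of_nonneg_right hρ hD.le
      rwa [div_mul_cancel₀ _ (ne_of_gt hD)] at h
    have hγ2 : (9:ℝ) ≤ γ^2 := by nlinarith
    have t1 : (0:ℝ) < 40960*γ^2 - 5136 := by linarith [hγ2]
    have t2 : (0:ℝ) < 37248*γ^2 - 4185 := by linarith [hγ2]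
    have hQ : (0:ℝ) < 40960*γ^4 + 37248*γ^3 - 5136*γ^2 - 4185*γ + 675 := by
      nlinarith [mul_pos (mul_pos hγ hγ) t1, mul_pos hγ t2]
    have e1 : 0 ≤ γ^2 * ((128*γ^2-16*γ+9) - r*(128*γ^2+48*γ-15))
        * ((128*γ^2-16*γ+9) + r*(128*γ^2+48*γ-15)) :=
      mul_nonneg (mul_nonneg (sq_nonneg γ) (by linarith))
        (by nlinarith [mul_nonneg hr0 hD.le])
    have e2 : 0 ≤ γ * (128*γ^2+48*γ-15) * ((128*γ^2-16*γ+9) - r*(128*γ^2+48*γ-15)) :=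
      mul_nonneg (mul_nonneg hγ.le hD.le) (by linarith)
    nlinarith [e1, e2, hQ, mul_pos hD hD]
end
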